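/- arXiv:2310.02004 — 10 statements merged into one kernel-verified Lean document; each statement's English description precedes it below -/
import Mathlib

section
/- Fix d ≥ 1, positive reals r, s, and b > 0. For every λ ∈ (0,∞)^d with μ = Σ_{i=1}^d λ_i, the Kullback–Leibler risk difference R(λ, p_J) − R(λ, p̂) equals Σ_{X=0}^∞ [ −(X + d/2) log(1 − (s/(r+s))·b/(X+1+b)) − (s/r)·X·log(1 + (r/(r+s))·b/X) ] · e^{-rμ}(rμ)^X/X!, where the term (s/r)·X·log(1 + (r/(r+s))·b/X) is interpreted as 0 when X = 0. In particular, the risk difference depends on λ only through μ = Σ_i λ_i. -/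
open Finset


/-- Joint pmf of `d` independent Poisson variables with means `c * lam i`. -/
noncomputable def poissonPMF (d : ℕ) (c : ℝ) (lam : Fin d → ℝ) (x : Fin d → ℕ) : ℝ :=
  ∏ i, Real.exp (-(c * lam i)) * (c * lam i) ^ (x i) / (Nat.factorial (x i) : ℝ)

/-- Bayesian predictive distribution based on the Jeffreys prior. -/
noncomputable def pJ (d : ℕ) (r s : ℝ) (x y : Fin d → ℕ) : ℝ :=
  (r / (r + s)) ^ ((∑ i, (x i : ℝ)) + (d : ℝ) / 2) * (s / (r + s)) ^ (∑ i, y i)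
    * ∏ i, Real.Gamma ((x i : ℝ) + (y i : ℝ) + 1 / 2)
        / (Real.Gamma ((x i : ℝ) + 1 / 2) * (Nat.factorial (y i) : ℝ))

/-- Kullback–Leibler risk of a predictive distribution `q` (with `q x y = q(y; x)`). -/
noncomputable def klRisk (d : ℕ) (r s : ℝ) (lam : Fin d → ℝ)
    (q : (Fin d → ℕ) → (Fin d → ℕ) → ℝ) : ℝ :=
  ∑' x : Fin d → ℕ, poissonPMF d r lam x *
    ∑' y : Fin d → ℕ, poissonPMF d s lam y * Real.log (poissonPMF d s lam y / q x y)

/-- Empirical Bayes predictive distribution with parameter `b`,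
where `α(x) = r * b / (∑ i, x i + 1)`. -/
noncomputable def pHat (d : ℕ) (r s b : ℝ) (x y : Fin d → ℕ) : ℝ :=
  ((r + r * b / ((∑ i, (x i : ℝ)) + 1)) / (r + s + r * b / ((∑ i, (x i : ℝ)) + 1)))
      ^ ((∑ i, (x i : ℝ)) + (d : ℝ) / 2)
    * (s / (r + s + r * b / ((∑ i, (x i : ℝ)) + 1))) ^ (∑ i, y i)
    * ∏ i, Real.Gamma ((x i : ℝ) + (y i : ℝ) + 1 / 2)
        / (Real.Gamma ((x i : ℝ) + 1 / 2) * (Nat.factorial (y i) : ℝ))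

namespace Stmt5


noncomputable def pois (a : ℝ) (n : ℕ) : ℝ := Real.exp (-a) * a ^ n / n.factorial

lemma tsum_pow_div_factorial (a : ℝ) : ∑' n : ℕ, a ^ n / (n.factorial : ℝ) = Real.exp a := by
  rw [Real.exp_eq_exp_ℝ, NormedSpace.exp_eq_tsum_div]

lemma summable_pow_div_factorial' (a : ℝ) : Summable (fun n : ℕ => a ^ n / (n.factorial : ℝ)) :=
  Real.summable_pow_div_factorial a

lemma summable_polyPois (a : ℝ) (ha : 0 ≤ a) (k : ℕ) :
    Summable (fun n : ℕ => ((n : ℝ) + 1) ^ k * a ^ n / n.factorial) := by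
  apply summable_of_ratio_norm_eventually_le (r := 1/2) (by norm_num)
  filter_upwards [Filter.eventually_ge_atTop (Nat.ceil ((2:ℝ)^(k+1) * a))] with n hn
  have hn' : (2:ℝ)^(k+1) * a ≤ (n:ℝ) + 1 := le_trans (Nat.le_ceil _)
    (by exact_mod_cast le_trans hn (Nat.le_succ n))
  have h1 : (0:ℝ) < (n:ℝ) + 1 := by positivity
  have h2 : (0:ℝ) < (n:ℝ) + 2 := by positivity
  have key : ((n:ℝ) + 2) ^ k * a ≤ 1/2 * ((n:ℝ)+1) ^ k * ((n:ℝ)+1) := by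
    have e1 : ((n:ℝ) + 2) ^ k ≤ (2*((n:ℝ)+1)) ^ k := by
      apply pow_le_pow_left₀ h2.le; linarith
    have e2 : (2*((n:ℝ)+1)) ^ k = 2^k * ((n:ℝ)+1)^k := mul_pow _ _ _
    calc ((n:ℝ) + 2) ^ k * a ≤ 2^k * ((n:ℝ)+1)^k * a := by
          rw [← e2]; exact mul_le_mul_of_nonneg_right e1 ha
      _ = ((n:ℝ)+1)^k * (2^k * a) := by ring
      _ ≤ ((n:ℝ)+1)^k * (1/2 * ((n:ℝ)+1)) := by
          apply mul_le_mul_of_nonneg_left _ (by positivity)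
          have : (2:ℝ)^(k+1) * a = 2 * (2^k * a) := by ring
          linarith [hn']
      _ = 1/2 * ((n:ℝ)+1) ^ k * ((n:ℝ)+1) := by ring
  have hfact : (0:ℝ) < n.factorial := by exact_mod_cast n.factorial_pos
  rw [Real.norm_eq_abs, Real.norm_eq_abs, abs_of_nonneg (by positivity),
    abs_of_nonneg (by positivity)]
  have e3 : ((↑(n+1):ℝ) + 1) ^ k * a ^ (n+1) / (n+1).factorial
      = (((n:ℝ)+2)^k * a / ((n:ℝ)+1)) * (a^n / n.factorial) := by
    rw [Nat.factorial_succ]; push_cast; field_simp; ring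
  have e4 : 1/2 * (((n:ℝ) + 1) ^ k * a ^ n / n.factorial)
      = (1/2 * ((n:ℝ)+1)^k) * (a^n / n.factorial) := by ring
  rw [e3, e4]
  apply mul_le_mul_of_nonneg_right _ (by positivity)
  rw [div_le_iff₀ h1]
  linarith [key]

lemma summable_pois_dom (a : ℝ) (ha : 0 ≤ a) {f : ℕ → ℝ} {C : ℝ}
    (hf : ∀ n, |f n| ≤ C * ((n:ℝ)+1)^2) : Summable (fun n => pois a n * f n) := by
  apply Summable.of_norm_bounded (g := fun n : ℕ => (Real.exp (-a) * C) * (((n:ℝ)+1)^2 * a^n / n.factorial))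
  · exact (summable_polyPois a ha 2).mul_left _
  · intro n
    have hp : 0 ≤ Real.exp (-a) * a ^ n / n.factorial := by positivity
    rw [Real.norm_eq_abs, abs_mul, pois, abs_of_nonneg hp]
    calc Real.exp (-a) * a ^ n / n.factorial * |f n|
        ≤ Real.exp (-a) * a ^ n / n.factorial * (C * ((n:ℝ)+1)^2) :=
          mul_le_mul_of_nonneg_left (hf n) hp
      _ = Real.exp (-a) * C * (((n:ℝ)+1)^2 * a^n / n.factorial) := by ring

lemma summable_pois_abs_dom (a : ℝ) (ha : 0 ≤ a) {f : ℕ → ℝ} {C : ℝ}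
    (hf : ∀ n, |f n| ≤ C * ((n:ℝ)+1)^2) : Summable (fun n => pois a n * |f n|) :=
  summable_pois_dom a ha (f := fun n => |f n|) (C := C) (by intro n; rw [abs_abs]; exact hf n)

lemma tsum_pois (a : ℝ) : ∑' n, pois a n = 1 := by
  unfold pois
  have : ∀ n : ℕ, Real.exp (-a) * a ^ n / n.factorial = Real.exp (-a) * (a^n / n.factorial) := by
    intro n; ring
  rw [tsum_congr this, tsum_mul_left, tsum_pow_div_factorial, ← Real.exp_add]
  simp

lemma summable_pois (a : ℝ) : Summable (pois a) := by
  unfold pois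
  have : ∀ n : ℕ, Real.exp (-a) * a ^ n / n.factorial = Real.exp (-a) * (a^n / n.factorial) := by
    intro n; ring
  exact (Summable.mul_left _ (Real.summable_pow_div_factorial a)).congr (fun n => (this n).symm)

lemma pois_succ (a : ℝ) (n : ℕ) : pois a (n+1) * ((n:ℝ)+1) = a * pois a n := by
  unfold pois
  have h1 : ((n+1).factorial : ℝ) = ((n:ℝ)+1) * n.factorial := by
    rw [Nat.factorial_succ]; push_cast; ring
  have h2 : (0:ℝ) < n.factorial := by exact_mod_cast n.factorial_pos
  rw [h1, pow_succ]
  field_simp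

lemma tsum_pois_mul_id (a : ℝ) (ha : 0 ≤ a) : ∑' n, pois a n * (n:ℝ) = a := by
  have hs : Summable (fun n => pois a n * (n:ℝ)) := by
    apply summable_pois_dom a ha (C := 1)
    intro n
    rw [abs_of_nonneg (by positivity)]
    nlinarith [sq_nonneg ((n:ℝ)+1), Nat.cast_nonneg (α := ℝ) n]
  rw [Summable.tsum_eq_zero_add hs]
  simp only [Nat.cast_zero, mul_zero, zero_add]
  have : ∀ n : ℕ, pois a (n+1) * ((n:ℕ)+1 : ℝ) = a * pois a n := fun n => pois_succ a n
  rw [tsum_congr (fun n => by push_cast; exact this n), tsum_mul_left, tsum_pois]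
  simp



lemma poissonPMF_eq (d : ℕ) (c : ℝ) (lam : Fin d → ℝ) (x : Fin d → ℕ) :
    poissonPMF d c lam x = Real.exp (-(c * ∑ i, lam i)) * c ^ (∑ i, x i)
      * ∏ i, (lam i) ^ (x i) / ((x i).factorial : ℝ) := by
  unfold poissonPMF
  have this1 : ∀ i, Real.exp (-(c * lam i)) * (c * lam i) ^ (x i) / ((x i).factorial : ℝ)
      = Real.exp (-(c * lam i)) * (c ^ (x i) * ((lam i) ^ (x i) / ((x i).factorial : ℝ))) := by
    intro i; rw [mul_pow]; ring
  have he : ∏ i, Real.exp (-(c * lam i)) = Real.exp (-(c * ∑ i, lam i)) := by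
    rw [← Real.exp_sum]; congr 1; rw [Finset.mul_sum]; simp
  rw [prod_congr rfl (fun i _ => this1 i), prod_mul_distrib, prod_mul_distrib, he,
    prod_pow_eq_pow_sum, ← mul_assoc]

lemma fiber_sum (d : ℕ) (t : Fin d → ℝ) (X : ℕ) :
    ∑ x ∈ Finset.piAntidiag Finset.univ X, ∏ i, (t i)^(x i) / ((x i).factorial : ℝ)
      = (∑ i, t i)^X / X.factorial := by
  rw [Finset.sum_pow_eq_sum_piAntidiag, Finset.sum_div]
  apply Finset.sum_congr rfl
  intro k hk
  have hsum : ∑ i, k i = X := by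
    rw [Finset.mem_piAntidiag] at hk; exact hk.1
  have hspec : ((∏ i, (k i).factorial : ℕ) : ℝ) * (Nat.multinomial Finset.univ k : ℝ)
      = (X.factorial : ℝ) := by
    rw [← hsum]
    exact_mod_cast congrArg (Nat.cast (R := ℝ)) (Nat.multinomial_spec Finset.univ k)
  have hF : (0:ℝ) < ((∏ i, (k i).factorial : ℕ) : ℝ) := by
    exact_mod_cast Nat.pos_of_ne_zero (by positivity)
  rw [Finset.prod_div_distrib]
  rw [← hspec]
  push_cast
  have hM : (Nat.multinomial Finset.univ k : ℝ) ≠ 0 := by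
    exact_mod_cast (Nat.multinomial_pos _ _).ne'
  have hF' : (∏ i, ((k i).factorial : ℝ)) ≠ 0 := by positivity
  field_simp

noncomputable instance fiberFintype (d X : ℕ) : Fintype {x : Fin d → ℕ // (∑ i, x i) = X} :=
  Fintype.ofFinset (Finset.piAntidiag Finset.univ X)
    (by intro x; simp [Finset.mem_piAntidiag]; exact Iff.rfl)

lemma fiber_poisson_sum (d : ℕ) (c : ℝ) (lam : Fin d → ℝ) (X : ℕ) :
    ∑ x : {x : Fin d → ℕ // (∑ i, x i) = X}, poissonPMF d c lam x.1
      = pois (c * ∑ i, lam i) X := by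
  rw [← Finset.sum_subtype (Finset.piAntidiag Finset.univ X)
    (by intro x; simp [Finset.mem_piAntidiag]) (fun x => poissonPMF d c lam x)]
  have : ∀ x ∈ Finset.piAntidiag Finset.univ X,
      poissonPMF d c lam x = Real.exp (-(c * ∑ i, lam i)) * c ^ X
        * ∏ i, (lam i) ^ (x i) / ((x i).factorial : ℝ) := by
    intro x hx
    rw [Finset.mem_piAntidiag] at hx
    rw [poissonPMF_eq, hx.1]
  rw [Finset.sum_congr rfl this, ← Finset.mul_sum, fiber_sum, pois]
  rw [mul_pow]
  ring

lemma key_summable (d : ℕ) (c : ℝ) (lam : Fin d → ℝ) (hlam : ∀ i, 0 ≤ c * lam i) (f : ℕ → ℝ)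
    (hf : Summable (fun X => pois (c * ∑ i, lam i) X * |f X|)) :
    Summable (fun x : Fin d → ℕ => poissonPMF d c lam x * f (∑ i, x i)) := by
  have hpm : ∀ x : Fin d → ℕ, 0 ≤ poissonPMF d c lam x := by
    intro x
    apply Finset.prod_nonneg
    intro i _
    have := hlam i
    positivity
  set F : (Fin d → ℕ) → ℝ := fun x => poissonPMF d c lam x * f (∑ i, x i) with hF
  set e := Equiv.sigmaFiberEquiv (fun x : Fin d → ℕ => ∑ i, x i)
  rw [← Equiv.summable_iff e]
  rw [← summable_abs_iff]
  apply (summable_sigma_of_nonneg (fun _ => abs_nonneg _)).2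
  constructor
  · intro X; exact Summable.of_finite
  · apply Summable.congr hf
    intro X
    rw [tsum_fintype]
    have h2 : ∀ p : {x : Fin d → ℕ // (∑ i, x i) = X},
        |(F ∘ e) ⟨X, p⟩| = poissonPMF d c lam p.1 * |f X| := by
      intro p
      show |poissonPMF d c lam p.1 * f (∑ i, p.1 i)| = _
      rw [p.2, abs_mul, abs_of_nonneg (hpm p.1)]
    rw [Finset.sum_congr rfl (fun p _ => h2 p), ← Finset.sum_mul, fiber_poisson_sum]

lemma key_tsum (d : ℕ) (c : ℝ) (lam : Fin d → ℝ) (hlam : ∀ i, 0 ≤ c * lam i) (f : ℕ → ℝ)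
    (hf : Summable (fun X => pois (c * ∑ i, lam i) X * |f X|)) :
    ∑' x : Fin d → ℕ, poissonPMF d c lam x * f (∑ i, x i)
      = ∑' X, pois (c * ∑ i, lam i) X * f X := by
  set F : (Fin d → ℕ) → ℝ := fun x => poissonPMF d c lam x * f (∑ i, x i) with hF
  set e := Equiv.sigmaFiberEquiv (fun x : Fin d → ℕ => ∑ i, x i)
  have hsum : Summable F := key_summable d c lam hlam f hf
  have hsig : Summable (fun p : Σ X : ℕ, {x : Fin d → ℕ // (∑ i, x i) = X} => F (e p)) :=
    (Equiv.summable_iff e).2 hsum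
  rw [← Equiv.tsum_eq e F, Summable.tsum_sigma hsig]
  apply tsum_congr
  intro X
  rw [tsum_fintype]
  have h2 : ∀ p : {x : Fin d → ℕ // (∑ i, x i) = X},
      (fun q : Σ X : ℕ, {x : Fin d → ℕ // (∑ i, x i) = X} => F (e q)) ⟨X, p⟩
        = poissonPMF d c lam p.1 * f X := by
    intro p
    show poissonPMF d c lam p.1 * f (∑ i, p.1 i) = _
    rw [p.2]
  rw [Finset.sum_congr rfl (fun p _ => h2 p), ← Finset.sum_mul, fiber_poisson_sum]



/-! ### Gamma function bounds -/

lemma gamma_half_le (m : ℕ) : Real.Gamma ((m:ℝ) + 1/2) ≤ 2 * m.factorial := by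
  induction m with
  | zero =>
    simp only [Nat.cast_zero, zero_add, Nat.factorial_zero, Nat.cast_one, mul_one]
    rw [Real.Gamma_one_half_eq]
    rw [show (2:ℝ) = Real.sqrt 4 by rw [show (4:ℝ) = 2^2 by norm_num, Real.sqrt_sq]; norm_num]
    exact Real.sqrt_le_sqrt (by linarith [Real.pi_le_four])
  | succ m ih =>
    have hcast : ((m+1 : ℕ):ℝ) + 1/2 = ((m:ℝ) + 1/2) + 1 := by push_cast; ring
    have hne : (m:ℝ) + 1/2 ≠ 0 := by positivity
    rw [hcast, Real.Gamma_add_one hne]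
    have hg : 0 < Real.Gamma ((m:ℝ) + 1/2) := Real.Gamma_pos_of_pos (by positivity)
    have hfac : ((m+1).factorial : ℝ) = ((m:ℝ)+1) * m.factorial := by
      rw [Nat.factorial_succ]; push_cast; ring
    rw [hfac]
    calc ((m:ℝ) + 1/2) * Real.Gamma ((m:ℝ) + 1/2) ≤ ((m:ℝ)+1) * Real.Gamma ((m:ℝ)+1/2) := by
          apply mul_le_mul_of_nonneg_right (by linarith) hg.le
      _ ≤ ((m:ℝ)+1) * (2 * m.factorial) := by
          apply mul_le_mul_of_nonneg_left ih (by positivity)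
      _ = 2 * (((m:ℝ)+1) * m.factorial) := by ring

lemma one_le_sqrt_pi : (1:ℝ) ≤ Real.sqrt Real.pi := by
  rw [show (1:ℝ) = Real.sqrt 1 by simp]
  exact Real.sqrt_le_sqrt (by linarith [Real.pi_gt_three])

lemma gamma_half_ge (m : ℕ) : (1/2 : ℝ) ≤ Real.Gamma ((m:ℝ) + 1/2) := by
  induction m with
  | zero =>
    simp only [Nat.cast_zero, zero_add]
    rw [Real.Gamma_one_half_eq]
    linarith [one_le_sqrt_pi]
  | succ m ih =>
    have hcast : ((m+1 : ℕ):ℝ) + 1/2 = ((m:ℝ) + 1/2) + 1 := by push_cast; ring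
    have hne : (m:ℝ) + 1/2 ≠ 0 := by positivity
    rw [hcast, Real.Gamma_add_one hne]
    rcases Nat.eq_zero_or_pos m with hm | hm
    · subst hm
      simp only [Nat.cast_zero, zero_add]
      rw [Real.Gamma_one_half_eq]
      nlinarith [one_le_sqrt_pi]
    · have h1 : (1:ℝ) ≤ (m:ℝ) + 1/2 := by
        have : (1:ℝ) ≤ (m:ℝ) := by exact_mod_cast hm
        linarith
      nlinarith

lemma log_factorial_le (m : ℕ) : Real.log (m.factorial : ℝ) ≤ (m:ℝ)^2 := by
  have h1 : (m.factorial : ℝ) ≤ ((m:ℝ))^m := by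
    rcases Nat.eq_zero_or_pos m with hm | hm
    · subst hm; simp
    · exact_mod_cast Nat.factorial_le_pow m
  calc Real.log (m.factorial : ℝ) ≤ Real.log ((m:ℝ)^m) :=
        Real.log_le_log (by exact_mod_cast m.factorial_pos) h1
    _ = (m:ℝ) * Real.log (m:ℝ) := by rw [Real.log_pow]
    _ ≤ (m:ℝ) * (m:ℝ) := by
        rcases Nat.eq_zero_or_pos m with hm | hm
        · subst hm; simp
        · apply mul_le_mul_of_nonneg_left _ (Nat.cast_nonneg m)
          have : (0:ℝ) < m := by exact_mod_cast hm
          linarith [Real.log_le_sub_one_of_pos this]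
    _ = (m:ℝ)^2 := by ring

lemma abs_log_gamma_half (m : ℕ) : |Real.log (Real.Gamma ((m:ℝ) + 1/2))| ≤ (m:ℝ)^2 + 2 := by
  have hg : 0 < Real.Gamma ((m:ℝ) + 1/2) := Real.Gamma_pos_of_pos (by positivity)
  have hup : Real.log (Real.Gamma ((m:ℝ) + 1/2)) ≤ (m:ℝ)^2 + 2 := by
    calc Real.log (Real.Gamma ((m:ℝ) + 1/2)) ≤ Real.log (2 * m.factorial) :=
          Real.log_le_log hg (gamma_half_le m)
      _ = Real.log 2 + Real.log (m.factorial : ℝ) := by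
          rw [Real.log_mul (by norm_num) (by exact_mod_cast m.factorial_pos.ne')]
      _ ≤ 1 + (m:ℝ)^2 := by
          have := Real.log_le_sub_one_of_pos (show (0:ℝ) < 2 by norm_num)
          linarith [log_factorial_le m]
      _ ≤ (m:ℝ)^2 + 2 := by linarith
  have hlo : -((m:ℝ)^2 + 2) ≤ Real.log (Real.Gamma ((m:ℝ) + 1/2)) := by
    have h1 : Real.log (1/2 : ℝ) ≤ Real.log (Real.Gamma ((m:ℝ) + 1/2)) :=
      Real.log_le_log (by norm_num) (gamma_half_ge m)
    have h2 : Real.log (1/2 : ℝ) = - Real.log 2 := by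
      rw [one_div, Real.log_inv]
    have h3 : Real.log 2 ≤ 1 := by
      linarith [Real.log_le_sub_one_of_pos (show (0:ℝ) < 2 by norm_num)]
    have h4 : (0:ℝ) ≤ (m:ℝ)^2 := by positivity
    linarith
  rw [abs_le]; exact ⟨hlo, hup⟩

lemma abs_log_le_of_between {v w : ℝ} (hv : 0 < v) (hvw : v ≤ w) (hw : w ≤ 1) :
    |Real.log w| ≤ |Real.log v| := by
  have hw0 : 0 < w := lt_of_lt_of_le hv hvw
  have h1 : Real.log w ≤ 0 := Real.log_nonpos hw0.le hw
  have h2 : Real.log v ≤ Real.log w := Real.log_le_log hv hvw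
  rw [abs_of_nonpos h1, abs_of_nonpos (le_trans h2 h1)]
  linarith

/-! ### Positivity -/

lemma poissonPMF_pos (d : ℕ) (c : ℝ) (lam : Fin d → ℝ) (hc : 0 < c) (hlam : ∀ i, 0 < lam i)
    (x : Fin d → ℕ) : 0 < poissonPMF d c lam x := by
  apply Finset.prod_pos
  intro i _
  have := hlam i
  positivity

noncomputable def al (r b : ℝ) (X : ℕ) : ℝ := r * b / ((X:ℝ) + 1)

lemma al_pos {r b : ℝ} (hr : 0 < r) (hb : 0 < b) (X : ℕ) : 0 < al r b X := by
  unfold al; positivity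

lemma al_le {r b : ℝ} (hr : 0 < r) (hb : 0 < b) (X : ℕ) : al r b X ≤ r * b := by
  unfold al
  rw [div_le_iff₀ (by positivity)]
  nlinarith [mul_nonneg (mul_nonneg hr.le hb.le) (Nat.cast_nonneg (α := ℝ) X)]

lemma cast_sum_eq {d : ℕ} (x : Fin d → ℕ) : (∑ i, (x i : ℝ)) = ((∑ i, x i : ℕ) : ℝ) := by
  push_cast; rfl

lemma gammaProd_pos (d : ℕ) (x y : Fin d → ℕ) :
    0 < ∏ i, Real.Gamma ((x i : ℝ) + (y i : ℝ) + 1 / 2)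
        / (Real.Gamma ((x i : ℝ) + 1 / 2) * (Nat.factorial (y i) : ℝ)) := by
  apply Finset.prod_pos
  intro i _
  have h1 : 0 < Real.Gamma ((x i : ℝ) + (y i : ℝ) + 1 / 2) :=
    Real.Gamma_pos_of_pos (by positivity)
  have h2 : 0 < Real.Gamma ((x i : ℝ) + 1 / 2) := Real.Gamma_pos_of_pos (by positivity)
  have h3 : (0:ℝ) < (y i).factorial := by exact_mod_cast (y i).factorial_pos
  positivity

lemma pJ_pos {d : ℕ} {r s : ℝ} (hr : 0 < r) (hs : 0 < s) (x y : Fin d → ℕ) :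
    0 < pJ d r s x y := by
  unfold pJ
  have h1 : (0:ℝ) < r / (r+s) := by positivity
  exact mul_pos (mul_pos (Real.rpow_pos_of_pos h1 _) (pow_pos (by positivity) _))
    (gammaProd_pos d x y)

lemma pHat_pos {d : ℕ} {r s b : ℝ} (hr : 0 < r) (hs : 0 < s) (hb : 0 < b) (x y : Fin d → ℕ) :
    0 < pHat d r s b x y := by
  unfold pHat
  have hx0 : (0:ℝ) ≤ ∑ i, (x i : ℝ) := Finset.sum_nonneg (fun i _ => Nat.cast_nonneg _)
  have hk : 0 < r * b / ((∑ i, (x i : ℝ)) + 1) := by positivity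
  have h1 : (0:ℝ) < (r + r * b / ((∑ i, (x i : ℝ)) + 1)) / (r + s + r * b / ((∑ i, (x i : ℝ)) + 1)) := by
    apply div_pos <;> linarith
  have h2 : (0:ℝ) < s / (r + s + r * b / ((∑ i, (x i : ℝ)) + 1)) := by
    apply div_pos hs; linarith
  exact mul_pos (mul_pos (Real.rpow_pos_of_pos h1 _) (pow_pos h2 _)) (gammaProd_pos d x y)

/-! ### Log expansions -/

lemma log_triple {A B G : ℝ} (hA : 0 < A) (hB : 0 < B) (hG : 0 < G) (E : ℝ) (N : ℕ) :
    Real.log (A ^ E * B ^ N * G)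
      = E * Real.log A + (N:ℝ) * Real.log B + Real.log G := by
  have h1 : A ^ E ≠ 0 := (Real.rpow_pos_of_pos hA E).ne'
  have h2 : B ^ N ≠ 0 := (pow_pos hB N).ne'
  rw [Real.log_mul (by positivity) hG.ne', Real.log_mul h1 h2, Real.log_rpow hA, Real.log_pow]

noncomputable def A0 (d : ℕ) (r s b : ℝ) (X : ℕ) : ℝ :=
  ((X:ℝ) + (d:ℝ)/2) * (Real.log ((r + al r b X)/(r + s + al r b X)) - Real.log (r/(r+s)))

noncomputable def B0 (r s b : ℝ) (X : ℕ) : ℝ := Real.log ((r+s)/(r+s+ al r b X))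

lemma log_ratio_sub (d : ℕ) {r s b : ℝ} (hr : 0 < r) (hs : 0 < s) (hb : 0 < b)
    (lam : Fin d → ℝ) (hlam : ∀ i, 0 < lam i) (x y : Fin d → ℕ) :
    Real.log (poissonPMF d s lam y / pJ d r s x y)
      - Real.log (poissonPMF d s lam y / pHat d r s b x y)
    = A0 d r s b (∑ i, x i) + B0 r s b (∑ i, x i) * ((∑ i, y i : ℕ) : ℝ) := by
  have hP : 0 < poissonPMF d s lam y := poissonPMF_pos d s lam hs hlam y
  have hJ : 0 < pJ d r s x y := pJ_pos hr hs x y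
  have hH : 0 < pHat d r s b x y := pHat_pos hr hs hb x y
  have hG : 0 < ∏ i, Real.Gamma ((x i : ℝ) + (y i : ℝ) + 1 / 2)
      / (Real.Gamma ((x i : ℝ) + 1 / 2) * (Nat.factorial (y i) : ℝ)) := gammaProd_pos d x y
  have hal : r * b / ((∑ i, (x i : ℝ)) + 1) = al r b (∑ i, x i) := by
    rw [al, cast_sum_eq]
  have hden : 0 < r + s + al r b (∑ i, x i) := by
    have := al_pos hr hb (∑ i, x i); linarith
  have hnum : 0 < r + al r b (∑ i, x i) := by
    have := al_pos hr hb (∑ i, x i); linarith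
  have eJ : Real.log (pJ d r s x y)
      = ((∑ i, (x i : ℝ)) + (d:ℝ)/2) * Real.log (r/(r+s))
        + ((∑ i, y i : ℕ) : ℝ) * Real.log (s/(r+s)) + Real.log (∏ i, Real.Gamma ((x i : ℝ) + (y i : ℝ) + 1 / 2)
        / (Real.Gamma ((x i : ℝ) + 1 / 2) * (Nat.factorial (y i) : ℝ))) := by
    unfold pJ
    exact log_triple (by positivity) (by positivity) hG _ _
  have eH : Real.log (pHat d r s b x y)
      = ((∑ i, (x i : ℝ)) + (d:ℝ)/2)
          * Real.log ((r + al r b (∑ i, x i))/(r + s + al r b (∑ i, x i)))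
        + ((∑ i, y i : ℕ) : ℝ) * Real.log (s/(r + s + al r b (∑ i, x i)))
        + Real.log (∏ i, Real.Gamma ((x i : ℝ) + (y i : ℝ) + 1 / 2)
        / (Real.Gamma ((x i : ℝ) + 1 / 2) * (Nat.factorial (y i) : ℝ))) := by
    unfold pHat
    rw [hal]
    exact log_triple (div_pos hnum hden) (div_pos hs hden) hG _ _
  rw [Real.log_div hP.ne' hJ.ne', Real.log_div hP.ne' hH.ne', eJ, eH, A0, B0]
  have e1 : Real.log (s/(r + s + al r b (∑ i, x i)))
      = Real.log s - Real.log (r + s + al r b (∑ i, x i)) := Real.log_div hs.ne' hden.ne'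
  have e2 : Real.log (s/(r+s)) = Real.log s - Real.log (r+s) := Real.log_div hs.ne' (by positivity)
  have e3 : Real.log ((r+s)/(r+s+ al r b (∑ i, x i)))
      = Real.log (r+s) - Real.log (r + s + al r b (∑ i, x i)) :=
    Real.log_div (by positivity) hden.ne'
  rw [e1, e2, e3, cast_sum_eq]
  ring

/-! ### Quadratic-weight facts -/

lemma Qfact {a c : ℝ} (ha : 0 ≤ a) (hc : 0 ≤ c) :
    1 ≤ (a+1)^2*(c+1)^2 ∧ a ≤ (a+1)^2*(c+1)^2 ∧ c ≤ (a+1)^2*(c+1)^2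
    ∧ a^2 ≤ (a+1)^2*(c+1)^2 ∧ c^2 ≤ (a+1)^2*(c+1)^2 ∧ (a+c)^2 ≤ (a+1)^2*(c+1)^2 := by
  have h1 : (1:ℝ) ≤ (a+1)^2 := by nlinarith
  have h2 : (1:ℝ) ≤ (c+1)^2 := by nlinarith
  have ha2 : (0:ℝ) ≤ (a+1)^2 := sq_nonneg _
  have hc2 : (0:ℝ) ≤ (c+1)^2 := sq_nonneg _
  have hP : (1:ℝ) ≤ (a+1)^2*(c+1)^2 := by nlinarith
  have hup : ∀ t : ℝ, t ≤ (a+1)^2 → t ≤ (a+1)^2*(c+1)^2 := by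
    intro t ht
    calc t ≤ (a+1)^2 := ht
      _ = (a+1)^2 * 1 := by ring
      _ ≤ (a+1)^2*(c+1)^2 := by nlinarith
  have hup' : ∀ t : ℝ, t ≤ (c+1)^2 → t ≤ (a+1)^2*(c+1)^2 := by
    intro t ht
    calc t ≤ (c+1)^2 := ht
      _ = 1 * (c+1)^2 := by ring
      _ ≤ (a+1)^2*(c+1)^2 := by nlinarith
  have hac : (a+c)^2 ≤ (a+1)^2*(c+1)^2 := by
    have h3 : a + c ≤ (a+1)*(c+1) := by nlinarith
    have h4 : ((a+1)*(c+1))^2 = (a+1)^2*(c+1)^2 := by ring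
    rw [← h4]
    exact pow_le_pow_left₀ (by linarith) h3 2
  exact ⟨hP, hup a (by nlinarith), hup' c (by nlinarith), hup (a^2) (by nlinarith),
    hup' (c^2) (by nlinarith), hac⟩

/-! ### Log pmf expansion and bound -/

lemma log_pmf (d : ℕ) (c : ℝ) (lam : Fin d → ℝ) (hc : 0 < c) (hlam : ∀ i, 0 < lam i)
    (y : Fin d → ℕ) :
    Real.log (poissonPMF d c lam y)
      = ∑ i, (-(c * lam i) + (y i : ℝ) * Real.log (c * lam i)
          - Real.log ((y i).factorial : ℝ)) := by
  unfold poissonPMF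
  rw [Real.log_prod]
  · apply Finset.sum_congr rfl
    intro i _
    have h1 : 0 < c * lam i := mul_pos hc (hlam i)
    have h3 : (0:ℝ) < (y i).factorial := by exact_mod_cast (y i).factorial_pos
    rw [div_eq_mul_inv, Real.log_mul (by positivity) (by positivity),
      Real.log_mul (Real.exp_ne_zero _) (by positivity), Real.log_exp, Real.log_pow,
      Real.log_inv]
    ring
  · intro i _
    have h1 : 0 < c * lam i := mul_pos hc (hlam i)
    have h3 : (0:ℝ) < (y i).factorial := by exact_mod_cast (y i).factorial_pos
    positivity

lemma single_le_sum_cast {d : ℕ} (y : Fin d → ℕ) (i : Fin d) :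
    ((y i : ℝ)) ≤ ((∑ j, y j : ℕ) : ℝ) := by
  exact_mod_cast Finset.single_le_sum (f := y) (fun _ _ => Nat.zero_le _) (Finset.mem_univ i)

lemma log_factorial_abs_le (m : ℕ) : |Real.log (m.factorial : ℝ)| ≤ (m:ℝ)^2 := by
  rw [abs_of_nonneg (Real.log_nonneg (by exact_mod_cast m.factorial_pos))]
  exact log_factorial_le m

lemma abs_log_pmf_le (d : ℕ) (c : ℝ) (lam : Fin d → ℝ) (hc : 0 < c) (hlam : ∀ i, 0 < lam i) :
    ∀ y : Fin d → ℕ, |Real.log (poissonPMF d c lam y)|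
      ≤ (c * (∑ i, lam i) + (∑ i, |Real.log (c * lam i)|) + d) * (((∑ i, y i : ℕ):ℝ)+1)^2 := by
  intro y
  set S : ℝ := ((∑ i, y i : ℕ) : ℝ) with hS
  have hS0 : 0 ≤ S := Nat.cast_nonneg _
  have hQ := Qfact hS0 hS0
  rw [log_pmf d c lam hc hlam y]
  calc |∑ i, (-(c * lam i) + (y i : ℝ) * Real.log (c * lam i)
          - Real.log ((y i).factorial : ℝ))|
      ≤ ∑ i, |(-(c * lam i) + (y i : ℝ) * Real.log (c * lam i)
          - Real.log ((y i).factorial : ℝ))| := Finset.abs_sum_le_sum_abs _ _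
    _ ≤ ∑ i, (c * lam i + S * |Real.log (c * lam i)| + S^2) := by
        apply Finset.sum_le_sum
        intro i _
        have h1 : 0 < c * lam i := mul_pos hc (hlam i)
        have h2 : ((y i : ℝ)) ≤ S := single_le_sum_cast y i
        have h3 : |Real.log ((y i).factorial : ℝ)| ≤ ((y i):ℝ)^2 := log_factorial_abs_le _
        have h4 : ((y i):ℝ)^2 ≤ S^2 := by
          apply pow_le_pow_left₀ (Nat.cast_nonneg _) h2
        calc |(-(c * lam i) + (y i : ℝ) * Real.log (c * lam i)
            - Real.log ((y i).factorial : ℝ))|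
            ≤ |(-(c * lam i))| + |(y i : ℝ) * Real.log (c * lam i)|
              + |Real.log ((y i).factorial : ℝ)| := by
              apply (abs_sub _ _).trans
              gcongr
              exact abs_add_le _ _
          _ ≤ c * lam i + S * |Real.log (c * lam i)| + S^2 := by
              rw [abs_neg, abs_of_pos h1, abs_mul, abs_of_nonneg (Nat.cast_nonneg (y i))]
              have := abs_nonneg (Real.log (c * lam i))
              refine add_le_add (add_le_add le_rfl ?_) (h3.trans h4)
              exact mul_le_mul_of_nonneg_right h2 this
    _ = c * (∑ i, lam i) + S * (∑ i, |Real.log (c * lam i)|) + d * S^2 := by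
        rw [Finset.sum_add_distrib, Finset.sum_add_distrib, ← Finset.mul_sum,
          ← Finset.mul_sum, Finset.sum_const]
        simp [Finset.card_univ]
        try ring
    _ ≤ (c * (∑ i, lam i) + (∑ i, |Real.log (c * lam i)|) + d) * (S+1)^2 := by
        have hA : 0 ≤ c * (∑ i, lam i) := by
          apply mul_nonneg hc.le (Finset.sum_nonneg (fun i _ => (hlam i).le))
        have hB : 0 ≤ ∑ i, |Real.log (c * lam i)| :=
          Finset.sum_nonneg (fun i _ => abs_nonneg _)
        have h1 : (1:ℝ) ≤ (S+1)^2 := by nlinarith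
        have h2 : S ≤ (S+1)^2 := by nlinarith
        have h3 : S^2 ≤ (S+1)^2 := by nlinarith
        nlinarith [mul_le_mul_of_nonneg_left h2 hB, mul_le_mul_of_nonneg_left h3 (Nat.cast_nonneg (α := ℝ) d), mul_le_mul_of_nonneg_left h1 hA]

lemma log_gammaProd (d : ℕ) (x y : Fin d → ℕ) :
    Real.log (∏ i, Real.Gamma ((x i : ℝ) + (y i : ℝ) + 1 / 2)
        / (Real.Gamma ((x i : ℝ) + 1 / 2) * (Nat.factorial (y i) : ℝ)))
      = ∑ i, (Real.log (Real.Gamma ((x i : ℝ) + (y i : ℝ) + 1 / 2))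
          - Real.log (Real.Gamma ((x i : ℝ) + 1 / 2)) - Real.log ((y i).factorial : ℝ)) := by
  rw [Real.log_prod]
  · apply Finset.sum_congr rfl
    intro i _
    have h1 : 0 < Real.Gamma ((x i : ℝ) + (y i : ℝ) + 1 / 2) :=
      Real.Gamma_pos_of_pos (by positivity)
    have h2 : 0 < Real.Gamma ((x i : ℝ) + 1 / 2) := Real.Gamma_pos_of_pos (by positivity)
    have h3 : (0:ℝ) < (y i).factorial := by exact_mod_cast (y i).factorial_pos
    rw [Real.log_div h1.ne' (by positivity), Real.log_mul h2.ne' h3.ne']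
    ring
  · intro i _
    have h1 : 0 < Real.Gamma ((x i : ℝ) + (y i : ℝ) + 1 / 2) :=
      Real.Gamma_pos_of_pos (by positivity)
    have h2 : 0 < Real.Gamma ((x i : ℝ) + 1 / 2) := Real.Gamma_pos_of_pos (by positivity)
    have h3 : (0:ℝ) < (y i).factorial := by exact_mod_cast (y i).factorial_pos
    positivity

lemma abs_gammaSum_le (d : ℕ) (x y : Fin d → ℕ) :
    |∑ i, (Real.log (Real.Gamma ((x i : ℝ) + (y i : ℝ) + 1 / 2))
          - Real.log (Real.Gamma ((x i : ℝ) + 1 / 2)) - Real.log ((y i).factorial : ℝ))|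
      ≤ (7 * d) * ((((∑ i, x i : ℕ):ℝ)+1)^2 * (((∑ i, y i : ℕ):ℝ)+1)^2) := by
  set Sx : ℝ := ((∑ i, x i : ℕ) : ℝ)
  set Sy : ℝ := ((∑ i, y i : ℕ) : ℝ)
  have hSx : 0 ≤ Sx := Nat.cast_nonneg _
  have hSy : 0 ≤ Sy := Nat.cast_nonneg _
  obtain ⟨hQ1, hQa, hQc, hQa2, hQc2, hQac⟩ := Qfact hSx hSy
  set Q : ℝ := (Sx+1)^2 * (Sy+1)^2
  have hterm : ∀ i, |Real.log (Real.Gamma ((x i : ℝ) + (y i : ℝ) + 1 / 2))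
          - Real.log (Real.Gamma ((x i : ℝ) + 1 / 2)) - Real.log ((y i).factorial : ℝ)|
        ≤ 7 * Q := by
    intro i
    have hxi : (x i : ℝ) ≤ Sx := single_le_sum_cast x i
    have hyi : (y i : ℝ) ≤ Sy := single_le_sum_cast y i
    have e1 : (x i : ℝ) + (y i : ℝ) + 1/2 = (((x i + y i : ℕ)):ℝ) + 1/2 := by push_cast; ring
    have b1 : |Real.log (Real.Gamma ((x i : ℝ) + (y i : ℝ) + 1 / 2))|
        ≤ (Sx + Sy)^2 + 2 := by
      rw [e1]
      refine (abs_log_gamma_half (x i + y i)).trans ?_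
      have : ((x i + y i : ℕ) : ℝ) ≤ Sx + Sy := by push_cast; linarith
      have h2 : ((x i + y i : ℕ) : ℝ)^2 ≤ (Sx+Sy)^2 :=
        pow_le_pow_left₀ (Nat.cast_nonneg _) this 2
      linarith
    have e2 : (x i : ℝ) + 1/2 = (((x i : ℕ)):ℝ) + 1/2 := by norm_num
    have b2 : |Real.log (Real.Gamma ((x i : ℝ) + 1 / 2))| ≤ Sx^2 + 2 := by
      refine (abs_log_gamma_half (x i)).trans ?_
      have h2 : ((x i : ℕ) : ℝ)^2 ≤ Sx^2 := pow_le_pow_left₀ (Nat.cast_nonneg _) hxi 2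
      linarith
    have b3 : |Real.log ((y i).factorial : ℝ)| ≤ Sy^2 := by
      refine (log_factorial_abs_le (y i)).trans ?_
      exact pow_le_pow_left₀ (Nat.cast_nonneg _) hyi 2
    calc |Real.log (Real.Gamma ((x i : ℝ) + (y i : ℝ) + 1 / 2))
          - Real.log (Real.Gamma ((x i : ℝ) + 1 / 2)) - Real.log ((y i).factorial : ℝ)|
        ≤ |Real.log (Real.Gamma ((x i : ℝ) + (y i : ℝ) + 1 / 2))|
          + |Real.log (Real.Gamma ((x i : ℝ) + 1 / 2))|
          + |Real.log ((y i).factorial : ℝ)| := by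
          have h := abs_add_three (Real.log (Real.Gamma ((x i : ℝ) + (y i : ℝ) + 1 / 2)))
            (-(Real.log (Real.Gamma ((x i : ℝ) + 1 / 2)))) (-(Real.log ((y i).factorial : ℝ)))
          simpa [sub_eq_add_neg] using h
      _ ≤ ((Sx + Sy)^2 + 2) + (Sx^2 + 2) + Sy^2 := by linarith
      _ ≤ 7 * Q := by linarith
  calc |∑ i, (Real.log (Real.Gamma ((x i : ℝ) + (y i : ℝ) + 1 / 2))
          - Real.log (Real.Gamma ((x i : ℝ) + 1 / 2)) - Real.log ((y i).factorial : ℝ))|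
      ≤ ∑ i, |Real.log (Real.Gamma ((x i : ℝ) + (y i : ℝ) + 1 / 2))
          - Real.log (Real.Gamma ((x i : ℝ) + 1 / 2)) - Real.log ((y i).factorial : ℝ)| :=
        Finset.abs_sum_le_sum_abs _ _
    _ ≤ ∑ _i : Fin d, 7 * Q := Finset.sum_le_sum (fun i _ => hterm i)
    _ = (7 * d) * Q := by
        rw [Finset.sum_const, Finset.card_univ, Fintype.card_fin, nsmul_eq_mul]
        ring

lemma abs_logA2_le {r s b : ℝ} (hr : 0 < r) (hs : 0 < s) (hb : 0 < b) (X : ℕ) :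
    |Real.log ((r + al r b X)/(r + s + al r b X))| ≤ |Real.log (r/(r+s+r*b))| := by
  have ha := al_pos hr hb X
  have ha' := al_le hr hb X
  apply abs_log_le_of_between
  · positivity
  · rw [div_le_div_iff₀ (by positivity) (by positivity)]
    nlinarith
  · rw [div_le_one (by positivity)]
    linarith

lemma abs_logB2_le {r s b : ℝ} (hr : 0 < r) (hs : 0 < s) (hb : 0 < b) (X : ℕ) :
    |Real.log (s/(r + s + al r b X))| ≤ |Real.log (s/(r+s+r*b))| := by
  have ha := al_pos hr hb X
  have ha' := al_le hr hb X
  apply abs_log_le_of_between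
  · positivity
  · rw [div_le_div_iff₀ (by positivity) (by positivity)]
    nlinarith
  · rw [div_le_one (by positivity)]
    linarith

lemma abs_log_pJ_le (d : ℕ) {r s : ℝ} (hr : 0 < r) (hs : 0 < s) (x y : Fin d → ℕ) :
    |Real.log (pJ d r s x y)|
      ≤ ((1+d) * |Real.log (r/(r+s))| + |Real.log (s/(r+s))| + 7*d)
        * ((((∑ i, x i : ℕ):ℝ)+1)^2 * (((∑ i, y i : ℕ):ℝ)+1)^2) := by
  have hG : 0 < ∏ i, Real.Gamma ((x i : ℝ) + (y i : ℝ) + 1 / 2)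
      / (Real.Gamma ((x i : ℝ) + 1 / 2) * (Nat.factorial (y i) : ℝ)) := gammaProd_pos d x y
  have eJ : Real.log (pJ d r s x y)
      = ((∑ i, (x i : ℝ)) + (d:ℝ)/2) * Real.log (r/(r+s))
        + ((∑ i, y i : ℕ) : ℝ) * Real.log (s/(r+s))
        + Real.log (∏ i, Real.Gamma ((x i : ℝ) + (y i : ℝ) + 1 / 2)
          / (Real.Gamma ((x i : ℝ) + 1 / 2) * (Nat.factorial (y i) : ℝ))) := by
    unfold pJ
    exact log_triple (by positivity) (by positivity) hG _ _
  set Sx : ℝ := ((∑ i, x i : ℕ) : ℝ)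
  set Sy : ℝ := ((∑ i, y i : ℕ) : ℝ)
  have hSx : 0 ≤ Sx := Nat.cast_nonneg _
  have hSy : 0 ≤ Sy := Nat.cast_nonneg _
  obtain ⟨hQ1, hQa, hQc, hQa2, hQc2, hQac⟩ := Qfact hSx hSy
  set Q : ℝ := (Sx+1)^2 * (Sy+1)^2
  have hcx : (∑ i, (x i : ℝ)) = Sx := cast_sum_eq x
  rw [eJ, hcx, log_gammaProd]
  have h3 : |∑ i, (Real.log (Real.Gamma ((x i : ℝ) + (y i : ℝ) + 1 / 2))
          - Real.log (Real.Gamma ((x i : ℝ) + 1 / 2)) - Real.log ((y i).factorial : ℝ))|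
      ≤ (7 * d) * Q := abs_gammaSum_le d x y
  have habs1 : |(Sx + (d:ℝ)/2) * Real.log (r/(r+s))| ≤ (1+d) * |Real.log (r/(r+s))| * Q := by
    rw [abs_mul]
    have h4 : |Sx + (d:ℝ)/2| ≤ (1+d) * Q := by
      rw [abs_of_nonneg (by positivity)]
      have : (d:ℝ)/2 ≤ (d:ℝ) * Q := by
        have h5 : (d:ℝ) ≤ (d:ℝ) * Q := le_mul_of_one_le_right (Nat.cast_nonneg d) hQ1
        linarith [Nat.cast_nonneg (α := ℝ) d]
      nlinarith [abs_nonneg (Real.log (r/(r+s)))]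
    calc |Sx + (d:ℝ)/2| * |Real.log (r/(r+s))| ≤ ((1+d) * Q) * |Real.log (r/(r+s))| :=
          mul_le_mul_of_nonneg_right h4 (abs_nonneg _)
      _ = (1+d) * |Real.log (r/(r+s))| * Q := by ring
  have habs2 : |Sy * Real.log (s/(r+s))| ≤ |Real.log (s/(r+s))| * Q := by
    rw [abs_mul, abs_of_nonneg hSy]
    calc Sy * |Real.log (s/(r+s))| ≤ Q * |Real.log (s/(r+s))| :=
          mul_le_mul_of_nonneg_right hQc (abs_nonneg _)
      _ = |Real.log (s/(r+s))| * Q := by ring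
  calc |(Sx + (d:ℝ)/2) * Real.log (r/(r+s)) + Sy * Real.log (s/(r+s))
        + ∑ i, (Real.log (Real.Gamma ((x i : ℝ) + (y i : ℝ) + 1 / 2))
          - Real.log (Real.Gamma ((x i : ℝ) + 1 / 2)) - Real.log ((y i).factorial : ℝ))|
      ≤ |(Sx + (d:ℝ)/2) * Real.log (r/(r+s))| + |Sy * Real.log (s/(r+s))|
        + |∑ i, (Real.log (Real.Gamma ((x i : ℝ) + (y i : ℝ) + 1 / 2))
          - Real.log (Real.Gamma ((x i : ℝ) + 1 / 2)) - Real.log ((y i).factorial : ℝ))| :=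
        abs_add_three _ _ _
    _ ≤ (1+d) * |Real.log (r/(r+s))| * Q + |Real.log (s/(r+s))| * Q + (7*d) * Q := by
        linarith
    _ = ((1+d) * |Real.log (r/(r+s))| + |Real.log (s/(r+s))| + 7*d) * Q := by ring

lemma abs_log_pHat_le (d : ℕ) {r s b : ℝ} (hr : 0 < r) (hs : 0 < s) (hb : 0 < b)
    (x y : Fin d → ℕ) :
    |Real.log (pHat d r s b x y)|
      ≤ ((1+d) * |Real.log (r/(r+s+r*b))| + |Real.log (s/(r+s+r*b))| + 7*d)
        * ((((∑ i, x i : ℕ):ℝ)+1)^2 * (((∑ i, y i : ℕ):ℝ)+1)^2) := by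
  have hG : 0 < ∏ i, Real.Gamma ((x i : ℝ) + (y i : ℝ) + 1 / 2)
      / (Real.Gamma ((x i : ℝ) + 1 / 2) * (Nat.factorial (y i) : ℝ)) := gammaProd_pos d x y
  have hal : r * b / ((∑ i, (x i : ℝ)) + 1) = al r b (∑ i, x i) := by
    rw [al, cast_sum_eq]
  have ha := al_pos hr hb (∑ i, x i)
  have hden : 0 < r + s + al r b (∑ i, x i) := by linarith
  have hnum : 0 < r + al r b (∑ i, x i) := by linarith
  have eH : Real.log (pHat d r s b x y)
      = ((∑ i, (x i : ℝ)) + (d:ℝ)/2)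
          * Real.log ((r + al r b (∑ i, x i))/(r + s + al r b (∑ i, x i)))
        + ((∑ i, y i : ℕ) : ℝ) * Real.log (s/(r + s + al r b (∑ i, x i)))
        + Real.log (∏ i, Real.Gamma ((x i : ℝ) + (y i : ℝ) + 1 / 2)
          / (Real.Gamma ((x i : ℝ) + 1 / 2) * (Nat.factorial (y i) : ℝ))) := by
    unfold pHat
    rw [hal]
    exact log_triple (div_pos hnum hden) (div_pos hs hden) hG _ _
  set Sx : ℝ := ((∑ i, x i : ℕ) : ℝ)
  set Sy : ℝ := ((∑ i, y i : ℕ) : ℝ)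
  have hSx : 0 ≤ Sx := Nat.cast_nonneg _
  have hSy : 0 ≤ Sy := Nat.cast_nonneg _
  obtain ⟨hQ1, hQa, hQc, hQa2, hQc2, hQac⟩ := Qfact hSx hSy
  set Q : ℝ := (Sx+1)^2 * (Sy+1)^2
  have hcx : (∑ i, (x i : ℝ)) = Sx := cast_sum_eq x
  rw [eH, hcx, log_gammaProd]
  have h3 : |∑ i, (Real.log (Real.Gamma ((x i : ℝ) + (y i : ℝ) + 1 / 2))
          - Real.log (Real.Gamma ((x i : ℝ) + 1 / 2)) - Real.log ((y i).factorial : ℝ))|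
      ≤ (7 * d) * Q := abs_gammaSum_le d x y
  have hA2 := abs_logA2_le hr hs hb (∑ i, x i)
  have hB2 := abs_logB2_le hr hs hb (∑ i, x i)
  have habs1 : |(Sx + (d:ℝ)/2)
        * Real.log ((r + al r b (∑ i, x i))/(r + s + al r b (∑ i, x i)))|
      ≤ (1+d) * |Real.log (r/(r+s+r*b))| * Q := by
    rw [abs_mul]
    have h4 : |Sx + (d:ℝ)/2| ≤ (1+d) * Q := by
      rw [abs_of_nonneg (by positivity)]
      have h5 : (d:ℝ) ≤ (d:ℝ) * Q := le_mul_of_one_le_right (Nat.cast_nonneg d) hQ1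
      nlinarith [Nat.cast_nonneg (α := ℝ) d]
    calc |Sx + (d:ℝ)/2| * |Real.log ((r + al r b (∑ i, x i))/(r + s + al r b (∑ i, x i)))|
        ≤ ((1+d) * Q) * |Real.log (r/(r+s+r*b))| := by
          apply mul_le_mul h4 hA2 (abs_nonneg _) (by positivity)
      _ = (1+d) * |Real.log (r/(r+s+r*b))| * Q := by ring
  have habs2 : |Sy * Real.log (s/(r + s + al r b (∑ i, x i)))|
      ≤ |Real.log (s/(r+s+r*b))| * Q := by
    rw [abs_mul, abs_of_nonneg hSy]
    calc Sy * |Real.log (s/(r + s + al r b (∑ i, x i)))| ≤ Q * |Real.log (s/(r+s+r*b))| := by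
          apply mul_le_mul hQc hB2 (abs_nonneg _) (by positivity)
      _ = |Real.log (s/(r+s+r*b))| * Q := by ring
  calc |(Sx + (d:ℝ)/2) * Real.log ((r + al r b (∑ i, x i))/(r + s + al r b (∑ i, x i)))
        + Sy * Real.log (s/(r + s + al r b (∑ i, x i)))
        + ∑ i, (Real.log (Real.Gamma ((x i : ℝ) + (y i : ℝ) + 1 / 2))
          - Real.log (Real.Gamma ((x i : ℝ) + 1 / 2)) - Real.log ((y i).factorial : ℝ))|
      ≤ |(Sx + (d:ℝ)/2) * Real.log ((r + al r b (∑ i, x i))/(r + s + al r b (∑ i, x i)))|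
        + |Sy * Real.log (s/(r + s + al r b (∑ i, x i)))|
        + |∑ i, (Real.log (Real.Gamma ((x i : ℝ) + (y i : ℝ) + 1 / 2))
          - Real.log (Real.Gamma ((x i : ℝ) + 1 / 2)) - Real.log ((y i).factorial : ℝ))| :=
        abs_add_three _ _ _
    _ ≤ (1+d) * |Real.log (r/(r+s+r*b))| * Q + |Real.log (s/(r+s+r*b))| * Q + (7*d) * Q := by
        linarith
    _ = ((1+d) * |Real.log (r/(r+s+r*b))| + |Real.log (s/(r+s+r*b))| + 7*d) * Q := by ring

lemma abs_log_ratio_le (d : ℕ) {r s b : ℝ} (hr : 0 < r) (hs : 0 < s) (hb : 0 < b)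
    (lam : Fin d → ℝ) (hlam : ∀ i, 0 < lam i) :
    ∃ C : ℝ, 0 ≤ C ∧ ∀ x y : Fin d → ℕ,
      |Real.log (poissonPMF d s lam y / pJ d r s x y)|
        ≤ C * ((((∑ i, x i : ℕ):ℝ)+1)^2 * (((∑ i, y i : ℕ):ℝ)+1)^2) ∧
      |Real.log (poissonPMF d s lam y / pHat d r s b x y)|
        ≤ C * ((((∑ i, x i : ℕ):ℝ)+1)^2 * (((∑ i, y i : ℕ):ℝ)+1)^2) := by
  set C1 : ℝ := s * (∑ i, lam i) + (∑ i, |Real.log (s * lam i)|) + d with hC1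
  set CJ : ℝ := (1+d) * |Real.log (r/(r+s))| + |Real.log (s/(r+s))| + 7*d with hCJ
  set CH : ℝ := (1+d) * |Real.log (r/(r+s+r*b))| + |Real.log (s/(r+s+r*b))| + 7*d with hCH
  have hC1n : 0 ≤ C1 := by
    have : 0 ≤ s * (∑ i, lam i) := mul_nonneg hs.le (Finset.sum_nonneg fun i _ => (hlam i).le)
    have h2 : 0 ≤ ∑ i, |Real.log (s * lam i)| := Finset.sum_nonneg fun i _ => abs_nonneg _
    have h3 : (0:ℝ) ≤ d := Nat.cast_nonneg _
    linarith
  have hCJn : 0 ≤ CJ := by positivity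
  have hCHn : 0 ≤ CH := by positivity
  refine ⟨C1 + CJ + CH, by linarith, ?_⟩
  intro x y
  set Sx : ℝ := ((∑ i, x i : ℕ) : ℝ)
  set Sy : ℝ := ((∑ i, y i : ℕ) : ℝ)
  have hSx : 0 ≤ Sx := Nat.cast_nonneg _
  have hSy : 0 ≤ Sy := Nat.cast_nonneg _
  set Q : ℝ := (Sx+1)^2 * (Sy+1)^2 with hQdef
  have hQ1 : 1 ≤ Q := (Qfact hSx hSy).1
  have hQ0 : 0 ≤ Q := le_trans zero_le_one hQ1
  have hP : 0 < poissonPMF d s lam y := poissonPMF_pos d s lam hs hlam y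
  have hJ : 0 < pJ d r s x y := pJ_pos hr hs x y
  have hH : 0 < pHat d r s b x y := pHat_pos hr hs hb x y
  have hps : |Real.log (poissonPMF d s lam y)| ≤ C1 * Q := by
    refine (abs_log_pmf_le d s lam hs hlam y).trans ?_
    have h4 : (Sy+1)^2 ≤ Q := by
      rw [hQdef]
      nlinarith [sq_nonneg (Sy+1), sq_nonneg (Sx+1), sq_nonneg Sx]
    calc C1 * (Sy+1)^2 ≤ C1 * Q := mul_le_mul_of_nonneg_left h4 hC1n
      _ = C1 * Q := rfl
  have hpj : |Real.log (pJ d r s x y)| ≤ CJ * Q := abs_log_pJ_le d hr hs x y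
  have hph : |Real.log (pHat d r s b x y)| ≤ CH * Q := abs_log_pHat_le d hr hs hb x y
  constructor
  · rw [Real.log_div hP.ne' hJ.ne']
    calc |Real.log (poissonPMF d s lam y) - Real.log (pJ d r s x y)|
        ≤ |Real.log (poissonPMF d s lam y)| + |Real.log (pJ d r s x y)| := abs_sub _ _
      _ ≤ C1 * Q + CJ * Q := by linarith
      _ ≤ (C1 + CJ + CH) * Q := by nlinarith
  · rw [Real.log_div hP.ne' hH.ne']
    calc |Real.log (poissonPMF d s lam y) - Real.log (pHat d r s b x y)|
        ≤ |Real.log (poissonPMF d s lam y)| + |Real.log (pHat d r s b x y)| := abs_sub _ _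
      _ ≤ C1 * Q + CH * Q := by linarith
      _ ≤ (C1 + CJ + CH) * Q := by nlinarith

/-! ### Bounds on `A0` and `B0` -/

lemma al_mul {r b : ℝ} (X : ℕ) : al r b X * ((X:ℝ)+1) = r * b := by
  unfold al
  field_simp

lemma A0_nonneg (d : ℕ) {r s b : ℝ} (hr : 0 < r) (hs : 0 < s) (hb : 0 < b) (X : ℕ) :
    0 ≤ A0 d r s b X := by
  have ha := al_pos hr hb X
  apply mul_nonneg (by positivity)
  rw [sub_nonneg]
  apply Real.log_le_log (by positivity)
  rw [div_le_div_iff₀ (by positivity) (by positivity)]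
  nlinarith

lemma A0_le (d : ℕ) (hd : 1 ≤ d) {r s b : ℝ} (hr : 0 < r) (hs : 0 < s) (hb : 0 < b) (X : ℕ) :
    A0 d r s b X ≤ (d:ℝ) * (s * b / (r + s)) := by
  have ha := al_pos hr hb X
  have ham := al_mul (r := r) (b := b) X
  set α : ℝ := al r b X
  have hX1 : (0:ℝ) < (X:ℝ) + 1 := by positivity
  have hL : Real.log ((r + α)/(r + s + α)) - Real.log (r/(r+s))
      ≤ s * b / (((X:ℝ)+1) * (r + s)) := by
    have hu : Real.log ((r + α)/(r + s + α)) - Real.log (r/(r+s))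
        = Real.log (((r + α) * (r+s)) / ((r + s + α) * r)) := by
      rw [Real.log_div (by positivity) (by positivity), Real.log_div (by positivity) (by positivity),
        Real.log_div (by positivity) (by positivity),
        Real.log_mul (by positivity) (by positivity), Real.log_mul (by positivity) (by positivity)]
      ring
    rw [hu]
    have h2 : Real.log (((r + α) * (r+s)) / ((r + s + α) * r))
        ≤ ((r + α) * (r+s)) / ((r + s + α) * r) - 1 :=
      Real.log_le_sub_one_of_pos (by positivity)
    have h3 : ((r + α) * (r+s)) / ((r + s + α) * r) - 1 = α * s / ((r + s + α) * r) := by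
      field_simp
      ring
    have h4 : α * s / ((r + s + α) * r) ≤ s * b / (((X:ℝ)+1) * (r + s)) := by
      rw [div_le_div_iff₀ (by positivity) (by positivity)]
      have e : α * ((X:ℝ)+1) = r * b := ham
      have e2 : s*b*((r+s+α)*r) = α*((X:ℝ)+1)*s*(r+s+α) := by
        have e3 : r*b = α*((X:ℝ)+1) := e.symm
        calc s*b*((r+s+α)*r) = (r*b)*(s*(r+s+α)) := by ring
          _ = (α*((X:ℝ)+1))*(s*(r+s+α)) := by rw [e3]
          _ = α*((X:ℝ)+1)*s*(r+s+α) := by ring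
      nlinarith [e2, mul_nonneg (mul_nonneg (mul_nonneg ha.le hX1.le) hs.le) ha.le]
    linarith
  have hL0 : 0 ≤ Real.log ((r + α)/(r + s + α)) - Real.log (r/(r+s)) := by
    rw [sub_nonneg]
    apply Real.log_le_log (by positivity)
    rw [div_le_div_iff₀ (by positivity) (by positivity)]
    nlinarith
  unfold A0
  have hd1 : (1:ℝ) ≤ (d:ℝ) := by exact_mod_cast hd
  calc ((X:ℝ) + (d:ℝ)/2) * (Real.log ((r + α)/(r + s + α)) - Real.log (r/(r+s)))
      ≤ ((X:ℝ) + (d:ℝ)/2) * (s * b / (((X:ℝ)+1) * (r + s))) := by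
        apply mul_le_mul_of_nonneg_left hL (by positivity)
    _ ≤ ((d:ℝ) * ((X:ℝ)+1)) * (s * b / (((X:ℝ)+1) * (r + s))) := by
        apply mul_le_mul_of_nonneg_right _ (by positivity)
        nlinarith
    _ = (d:ℝ) * (s * b / (r + s)) := by
        field_simp

lemma abs_A0_le (d : ℕ) (hd : 1 ≤ d) {r s b : ℝ} (hr : 0 < r) (hs : 0 < s) (hb : 0 < b) (X : ℕ) :
    |A0 d r s b X| ≤ (d:ℝ) * (s * b / (r + s)) := by
  rw [abs_of_nonneg (A0_nonneg d hr hs hb X)]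
  exact A0_le d hd hr hs hb X

lemma abs_B0_le {r s b : ℝ} (hr : 0 < r) (hs : 0 < s) (hb : 0 < b) (X : ℕ) :
    |B0 r s b X| ≤ r * b / (r + s) := by
  have ha := al_pos hr hb X
  have ha' := al_le hr hb X
  set α : ℝ := al r b X
  have h1 : Real.log ((r+s)/(r+s+α)) ≤ 0 := by
    apply Real.log_nonpos (by positivity)
    rw [div_le_one (by positivity)]
    linarith
  unfold B0
  rw [abs_of_nonpos h1, ← Real.log_inv, inv_div]
  calc Real.log ((r+s+α)/(r+s)) ≤ (r+s+α)/(r+s) - 1 :=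
        Real.log_le_sub_one_of_pos (by positivity)
    _ ≤ r * b / (r+s) := by
        have h5 : (r+s+α)/(r+s) - 1 = α/(r+s) := by
          field_simp; ring
        rw [h5]
        gcongr


/-! ### Multi-dimensional summability and moments -/

lemma summable_pmf_dom (d : ℕ) (c : ℝ) (lam : Fin d → ℝ) (hc : 0 < c) (hlam : ∀ i, 0 < lam i)
    {h : (Fin d → ℕ) → ℝ} {C : ℝ} (hC : 0 ≤ C)
    (hh : ∀ y, |h y| ≤ C * (((∑ i, y i : ℕ):ℝ)+1)^2) :
    Summable (fun y => poissonPMF d c lam y * h y) := by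
  have hcl : ∀ i, 0 ≤ c * lam i := fun i => (mul_pos hc (hlam i)).le
  have hcm : 0 ≤ c * ∑ i, lam i :=
    mul_nonneg hc.le (Finset.sum_nonneg fun i _ => (hlam i).le)
  have hg : Summable (fun y : Fin d → ℕ =>
      poissonPMF d c lam y * (C * (((∑ i, y i : ℕ):ℝ)+1)^2)) := by
    apply key_summable d c lam hcl (fun X => C * (((X:ℕ):ℝ)+1)^2)
    apply summable_pois_abs_dom _ hcm (C := C)
    intro n
    rw [abs_of_nonneg (by positivity)]
  apply Summable.of_norm_bounded hg
  intro y
  have hp : 0 ≤ poissonPMF d c lam y := (poissonPMF_pos d c lam hc hlam y).le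
  rw [Real.norm_eq_abs, abs_mul, abs_of_nonneg hp]
  exact mul_le_mul_of_nonneg_left (hh y) hp

lemma pmf_mass (d : ℕ) (c : ℝ) (lam : Fin d → ℝ) (hc : 0 < c) (hlam : ∀ i, 0 < lam i) :
    ∑' y : Fin d → ℕ, poissonPMF d c lam y = 1 := by
  have hcl : ∀ i, 0 ≤ c * lam i := fun i => (mul_pos hc (hlam i)).le
  have hcm : 0 ≤ c * ∑ i, lam i :=
    mul_nonneg hc.le (Finset.sum_nonneg fun i _ => (hlam i).le)
  have h1 : ∑' y : Fin d → ℕ, poissonPMF d c lam y * (fun _ : ℕ => (1:ℝ)) (∑ i, y i)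
      = ∑' X, pois (c * ∑ i, lam i) X * 1 := by
    apply key_tsum d c lam hcl (fun _ => (1:ℝ))
    apply summable_pois_abs_dom _ hcm (C := 1)
    intro n
    rw [abs_of_nonneg (by norm_num)]
    nlinarith [sq_nonneg ((n:ℝ)+1), Nat.cast_nonneg (α := ℝ) n]
  simp only [mul_one] at h1
  rw [h1, tsum_pois]

lemma summable_pmf (d : ℕ) (c : ℝ) (lam : Fin d → ℝ) (hc : 0 < c) (hlam : ∀ i, 0 < lam i) :
    Summable (fun y : Fin d → ℕ => poissonPMF d c lam y) := by
  have := summable_pmf_dom d c lam hc hlam (h := fun _ => 1) (C := 1) zero_le_one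
    (by intro y
        show |(1:ℝ)| ≤ _
        rw [abs_of_nonneg (by norm_num)]
        nlinarith [sq_nonneg (((∑ i, y i : ℕ):ℝ)+1), Nat.cast_nonneg (α := ℝ) (∑ i, y i)])
  simpa using this

lemma pmf_moment (d : ℕ) (c : ℝ) (lam : Fin d → ℝ) (hc : 0 < c) (hlam : ∀ i, 0 < lam i) :
    ∑' y : Fin d → ℕ, poissonPMF d c lam y * ((∑ i, y i : ℕ):ℝ) = c * ∑ i, lam i := by
  have hcl : ∀ i, 0 ≤ c * lam i := fun i => (mul_pos hc (hlam i)).le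
  have hcm : 0 ≤ c * ∑ i, lam i :=
    mul_nonneg hc.le (Finset.sum_nonneg fun i _ => (hlam i).le)
  have hf : Summable (fun X : ℕ => pois (c * ∑ i, lam i) X * |((X:ℝ))|) := by
    apply summable_pois_abs_dom _ hcm (C := 1)
    intro n
    rw [abs_of_nonneg (Nat.cast_nonneg n)]
    nlinarith [sq_nonneg ((n:ℝ)+1), Nat.cast_nonneg (α := ℝ) n]
  have h1 : ∑' y : Fin d → ℕ, poissonPMF d c lam y * (fun X : ℕ => (X:ℝ)) (∑ i, y i)
      = ∑' X, pois (c * ∑ i, lam i) X * (X:ℝ) := key_tsum d c lam hcl _ hf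
  simp only [] at h1
  rw [h1, tsum_pois_mul_id _ hcm]

lemma summable_pmf_moment (d : ℕ) (c : ℝ) (lam : Fin d → ℝ) (hc : 0 < c)
    (hlam : ∀ i, 0 < lam i) :
    Summable (fun y : Fin d → ℕ => poissonPMF d c lam y * ((∑ i, y i : ℕ):ℝ)) := by
  apply summable_pmf_dom d c lam hc hlam (C := 1) zero_le_one
  intro y
  rw [abs_of_nonneg (Nat.cast_nonneg _)]
  nlinarith [sq_nonneg (((∑ i, y i : ℕ):ℝ)+1), Nat.cast_nonneg (α := ℝ) (∑ i, y i)]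

lemma summable_pmf_sq (d : ℕ) (c : ℝ) (lam : Fin d → ℝ) (hc : 0 < c) (hlam : ∀ i, 0 < lam i) :
    Summable (fun y : Fin d → ℕ => poissonPMF d c lam y * (((∑ i, y i : ℕ):ℝ)+1)^2) := by
  apply summable_pmf_dom d c lam hc hlam (C := 1) zero_le_one
  intro y
  rw [abs_of_nonneg (by positivity), one_mul]

/-! ### `A0` equals the target first term; shift identity for second term -/

lemma A0_eq_E1 (d : ℕ) {r s b : ℝ} (hr : 0 < r) (hs : 0 < s) (hb : 0 < b) (X : ℕ) :
    A0 d r s b X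
      = -((X:ℝ) + (d:ℝ)/2) * Real.log (1 - (s / (r + s)) * b / ((X:ℝ) + 1 + b)) := by
  have ha := al_pos hr hb X
  have ham := al_mul (r := r) (b := b) X
  set α : ℝ := al r b X
  have hX1 : (0:ℝ) < (X:ℝ) + 1 := by positivity
  have hXb : (0:ℝ) < (X:ℝ) + 1 + b := by positivity
  have hu : Real.log ((r + α)/(r + s + α)) - Real.log (r/(r+s))
      = Real.log (((r + α) * (r+s)) / ((r + s + α) * r)) := by
    rw [Real.log_div (by positivity) (by positivity), Real.log_div (by positivity) (by positivity),
      Real.log_div (by positivity) (by positivity),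
      Real.log_mul (by positivity) (by positivity), Real.log_mul (by positivity) (by positivity)]
    ring
  have hv : 1 - (s / (r + s)) * b / ((X:ℝ) + 1 + b)
      = ((r+s) * ((X:ℝ)+1) + r*b) / ((r+s) * ((X:ℝ)+1+b)) := by
    field_simp
    ring
  have hαval : α = r * b / ((X:ℝ)+1) := rfl
  have huv : ((r + α) * (r+s)) / ((r + s + α) * r)
      = (((r+s) * ((X:ℝ)+1) + r*b) / ((r+s) * ((X:ℝ)+1+b)))⁻¹ := by
    rw [inv_div, hαval]
    have h1 : ((r+s) * ((X:ℝ)+1) + r*b) ≠ 0 := by positivity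
    field_simp
  unfold A0
  rw [hu, huv, Real.log_inv, hv]
  ring

noncomputable def E2 (r s b : ℝ) (X : ℕ) : ℝ :=
  -(s / r) * (X:ℝ) * Real.log (1 + (r / (r + s)) * b / (X:ℝ))

lemma E2_zero (r s b : ℝ) : E2 r s b 0 = 0 := by
  unfold E2; simp

lemma abs_E2_le {r s b : ℝ} (hr : 0 < r) (hs : 0 < s) (hb : 0 < b) (X : ℕ) :
    |E2 r s b X| ≤ s * b / (r + s) := by
  rcases Nat.eq_zero_or_pos X with hX | hX
  · subst hX
    rw [E2_zero]
    simp only [abs_zero]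
    positivity
  · have hX0 : (0:ℝ) < (X:ℝ) := by exact_mod_cast hX
    set c : ℝ := (r / (r + s)) * b with hc
    have hc0 : 0 < c := by positivity
    have hlog0 : 0 ≤ Real.log (1 + c / (X:ℝ)) := by
      apply Real.log_nonneg
      have : 0 < c / (X:ℝ) := by positivity
      linarith
    have hlog1 : Real.log (1 + c / (X:ℝ)) ≤ c / (X:ℝ) := by
      have := Real.log_le_sub_one_of_pos (show (0:ℝ) < 1 + c/(X:ℝ) by positivity)
      linarith
    unfold E2
    rw [abs_mul, abs_mul, abs_neg, abs_of_nonneg (by positivity : (0:ℝ) ≤ s/r),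
      abs_of_nonneg hX0.le, abs_of_nonneg hlog0]
    calc s/r * (X:ℝ) * Real.log (1 + c/(X:ℝ)) ≤ s/r * (X:ℝ) * (c/(X:ℝ)) := by
          apply mul_le_mul_of_nonneg_left hlog1 (by positivity)
      _ = s * b / (r + s) := by
          rw [hc]
          field_simp

lemma shift_eq {r s b : ℝ} (hr : 0 < r) (hs : 0 < s) (hb : 0 < b) (μ : ℝ) (X : ℕ) :
    pois (r*μ) X * ((s*μ) * B0 r s b X) = E2 r s b (X+1) * pois (r*μ) (X+1) := by
  have ha := al_pos hr hb X
  have ham := al_mul (r := r) (b := b) X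
  set α : ℝ := al r b X
  have hX1 : (0:ℝ) < (X:ℝ) + 1 := by positivity
  have hB : B0 r s b X = - Real.log (1 + (r / (r + s)) * b / ((X:ℝ)+1)) := by
    have hαval : α = r * b / ((X:ℝ)+1) := rfl
    have h2 : (1:ℝ) + r/(r+s)*b/((X:ℝ)+1) = (r+s+α)/(r+s) := by
      rw [hαval]
      field_simp
    have harg : ((1:ℝ) + r/(r+s)*b/((X:ℝ)+1))⁻¹ = (r+s)/(r+s+α) := by
      rw [h2, inv_div]
    unfold B0
    rw [← harg, Real.log_inv]
  have hps : pois (r*μ) (X+1) * (((X:ℕ):ℝ)+1) = (r*μ) * pois (r*μ) X := pois_succ _ _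
  have hE : E2 r s b (X+1) = -(s / r) * (((X:ℕ):ℝ)+1)
      * Real.log (1 + (r / (r + s)) * b / ((X:ℝ)+1)) := by
    unfold E2
    push_cast
    ring_nf
  rw [hE, hB]
  have expand : -(s / r) * (((X:ℕ):ℝ)+1) * Real.log (1 + (r / (r + s)) * b / ((X:ℝ)+1))
        * pois (r*μ) (X+1)
      = -(s / r) * Real.log (1 + (r / (r + s)) * b / ((X:ℝ)+1))
        * (pois (r*μ) (X+1) * (((X:ℕ):ℝ)+1)) := by ring
  rw [expand, hps]
  field_simp

end Stmt5

/-- The K–L risk difference depends on `lam` only through `μ = ∑ i, lam i`.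
The term `(s/r) * X * log (1 + (r/(r+s)) * b / X)` vanishes for `X = 0`
(in Lean, `b / 0 = 0` and the factor `X = 0` makes the term `0` anyway). -/
theorem stmt_5 (d : ℕ) (hd : 1 ≤ d) (r s b : ℝ) (hr : 0 < r) (hs : 0 < s) (hb : 0 < b)
    (lam : Fin d → ℝ) (hlam : ∀ i, 0 < lam i) (μ : ℝ) (hμ : μ = ∑ i, lam i) :
    klRisk d r s lam (fun x y => pJ d r s x y)
        - klRisk d r s lam (fun x y => pHat d r s b x y)
      = ∑' X : ℕ,
          (-((X : ℝ) + (d : ℝ) / 2) * Real.log (1 - (s / (r + s)) * b / ((X : ℝ) + 1 + b))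
            - (s / r) * (X : ℝ) * Real.log (1 + (r / (r + s)) * b / (X : ℝ)))
          * (Real.exp (-(r * μ)) * (r * μ) ^ X / (Nat.factorial X : ℝ)) := by
  subst hμ
  set μ : ℝ := ∑ i, lam i with hμdef
  obtain ⟨C, hC0, hC⟩ := Stmt5.abs_log_ratio_le d hr hs hb lam hlam
  have hrl : ∀ i, 0 ≤ r * lam i := fun i => (mul_pos hr (hlam i)).le
  have hμ0 : 0 ≤ μ := Finset.sum_nonneg fun i _ => (hlam i).le
  have hrμ : 0 ≤ r * μ := mul_nonneg hr.le hμ0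
  have hsμ : 0 ≤ s * μ := mul_nonneg hs.le hμ0
  -- inner summability
  have hSJ : ∀ x : Fin d → ℕ, Summable (fun y : Fin d → ℕ =>
      poissonPMF d s lam y * Real.log (poissonPMF d s lam y / pJ d r s x y)) := by
    intro x
    apply Stmt5.summable_pmf_dom d s lam hs hlam
      (C := C * (((∑ i, x i : ℕ):ℝ)+1)^2) (by positivity)
    intro y
    calc |Real.log (poissonPMF d s lam y / pJ d r s x y)|
        ≤ C * ((((∑ i, x i : ℕ):ℝ)+1)^2 * (((∑ i, y i : ℕ):ℝ)+1)^2) := (hC x y).1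
      _ = (C * (((∑ i, x i : ℕ):ℝ)+1)^2) * (((∑ i, y i : ℕ):ℝ)+1)^2 := by ring
  have hSH : ∀ x : Fin d → ℕ, Summable (fun y : Fin d → ℕ =>
      poissonPMF d s lam y * Real.log (poissonPMF d s lam y / pHat d r s b x y)) := by
    intro x
    apply Stmt5.summable_pmf_dom d s lam hs hlam
      (C := C * (((∑ i, x i : ℕ):ℝ)+1)^2) (by positivity)
    intro y
    calc |Real.log (poissonPMF d s lam y / pHat d r s b x y)|
        ≤ C * ((((∑ i, x i : ℕ):ℝ)+1)^2 * (((∑ i, y i : ℕ):ℝ)+1)^2) := (hC x y).2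
      _ = (C * (((∑ i, x i : ℕ):ℝ)+1)^2) * (((∑ i, y i : ℕ):ℝ)+1)^2 := by ring
  -- inner difference
  have hInner : ∀ x : Fin d → ℕ,
      (∑' y, poissonPMF d s lam y * Real.log (poissonPMF d s lam y / pJ d r s x y))
        - (∑' y, poissonPMF d s lam y * Real.log (poissonPMF d s lam y / pHat d r s b x y))
      = Stmt5.A0 d r s b (∑ i, x i) + (s*μ) * Stmt5.B0 r s b (∑ i, x i) := by
    intro x
    rw [← Summable.tsum_sub (hSJ x) (hSH x)]
    have hpt : ∀ y : Fin d → ℕ,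
        poissonPMF d s lam y * Real.log (poissonPMF d s lam y / pJ d r s x y)
          - poissonPMF d s lam y * Real.log (poissonPMF d s lam y / pHat d r s b x y)
        = Stmt5.A0 d r s b (∑ i, x i) * poissonPMF d s lam y
          + Stmt5.B0 r s b (∑ i, x i) * (poissonPMF d s lam y * ((∑ i, y i : ℕ):ℝ)) := by
      intro y
      rw [← mul_sub, Stmt5.log_ratio_sub d hr hs hb lam hlam x y]
      ring
    rw [tsum_congr hpt,
      Summable.tsum_add ((Stmt5.summable_pmf d s lam hs hlam).mul_left _)
        ((Stmt5.summable_pmf_moment d s lam hs hlam).mul_left _),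
      tsum_mul_left, tsum_mul_left, Stmt5.pmf_mass d s lam hs hlam,
      Stmt5.pmf_moment d s lam hs hlam]
    ring
  -- outer bound
  set K2 : ℝ := ∑' y : Fin d → ℕ, poissonPMF d s lam y * (((∑ i, y i : ℕ):ℝ)+1)^2 with hK2def
  have hK2s : Summable (fun y : Fin d → ℕ =>
      poissonPMF d s lam y * (((∑ i, y i : ℕ):ℝ)+1)^2) := Stmt5.summable_pmf_sq d s lam hs hlam
  have hK2n : 0 ≤ K2 := tsum_nonneg fun y =>
    mul_nonneg (Stmt5.poissonPMF_pos d s lam hs hlam y).le (sq_nonneg _)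
  have houter : ∀ (q : (Fin d → ℕ) → (Fin d → ℕ) → ℝ)
      (hq : ∀ x y, |Real.log (poissonPMF d s lam y / q x y)|
        ≤ C * ((((∑ i, x i : ℕ):ℝ)+1)^2 * (((∑ i, y i : ℕ):ℝ)+1)^2))
      (hq2 : ∀ x, Summable (fun y : Fin d → ℕ =>
        poissonPMF d s lam y * Real.log (poissonPMF d s lam y / q x y))) (x : Fin d → ℕ),
      |∑' y, poissonPMF d s lam y * Real.log (poissonPMF d s lam y / q x y)|
        ≤ (C * K2) * (((∑ i, x i : ℕ):ℝ)+1)^2 := by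
    intro q hq hq2 x
    have hdom : ∀ y : Fin d → ℕ,
        |poissonPMF d s lam y * Real.log (poissonPMF d s lam y / q x y)|
        ≤ (C * (((∑ i, x i : ℕ):ℝ)+1)^2)
            * (poissonPMF d s lam y * (((∑ i, y i : ℕ):ℝ)+1)^2) := by
      intro y
      have hp : 0 ≤ poissonPMF d s lam y := (Stmt5.poissonPMF_pos d s lam hs hlam y).le
      rw [abs_mul, abs_of_nonneg hp]
      calc poissonPMF d s lam y * |Real.log (poissonPMF d s lam y / q x y)|
          ≤ poissonPMF d s lam y
            * (C * ((((∑ i, x i : ℕ):ℝ)+1)^2 * (((∑ i, y i : ℕ):ℝ)+1)^2)) :=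
            mul_le_mul_of_nonneg_left (hq x y) hp
        _ = (C * (((∑ i, x i : ℕ):ℝ)+1)^2)
            * (poissonPMF d s lam y * (((∑ i, y i : ℕ):ℝ)+1)^2) := by ring
    have hg : Summable (fun y : Fin d → ℕ => (C * (((∑ i, x i : ℕ):ℝ)+1)^2)
        * (poissonPMF d s lam y * (((∑ i, y i : ℕ):ℝ)+1)^2)) := hK2s.mul_left _
    have habs : Summable (fun y : Fin d → ℕ =>
        |poissonPMF d s lam y * Real.log (poissonPMF d s lam y / q x y)|) :=
      Summable.of_nonneg_of_le (fun _ => abs_nonneg _) hdom hg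
    have h1 : |∑' y, poissonPMF d s lam y * Real.log (poissonPMF d s lam y / q x y)|
        ≤ ∑' y, |poissonPMF d s lam y * Real.log (poissonPMF d s lam y / q x y)| := by
      have := norm_tsum_le_tsum_norm (f := fun y : Fin d → ℕ =>
        poissonPMF d s lam y * Real.log (poissonPMF d s lam y / q x y))
        (by simp only [Real.norm_eq_abs]; exact habs)
      simp only [Real.norm_eq_abs] at this
      exact this
    refine h1.trans ?_
    calc ∑' y, |poissonPMF d s lam y * Real.log (poissonPMF d s lam y / q x y)|
        ≤ ∑' y : Fin d → ℕ, (C * (((∑ i, x i : ℕ):ℝ)+1)^2)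
            * (poissonPMF d s lam y * (((∑ i, y i : ℕ):ℝ)+1)^2) :=
          Summable.tsum_le_tsum hdom habs hg
      _ = (C * (((∑ i, x i : ℕ):ℝ)+1)^2) * K2 := by rw [tsum_mul_left]
      _ = (C * K2) * (((∑ i, x i : ℕ):ℝ)+1)^2 := by ring
  have hOutJ : Summable (fun x : Fin d → ℕ => poissonPMF d r lam x *
      (∑' y, poissonPMF d s lam y * Real.log (poissonPMF d s lam y / pJ d r s x y))) := by
    apply Stmt5.summable_pmf_dom d r lam hr hlam (C := C * K2) (by positivity)
    exact houter (fun x y => pJ d r s x y) (fun x y => (hC x y).1) hSJ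
  have hOutH : Summable (fun x : Fin d → ℕ => poissonPMF d r lam x *
      (∑' y, poissonPMF d s lam y * Real.log (poissonPMF d s lam y / pHat d r s b x y))) := by
    apply Stmt5.summable_pmf_dom d r lam hr hlam (C := C * K2) (by positivity)
    exact houter (fun x y => pHat d r s b x y) (fun x y => (hC x y).2) hSH
  -- the combined inner function of X
  have habsf : ∀ X : ℕ, |Stmt5.A0 d r s b X + (s*μ) * Stmt5.B0 r s b X|
      ≤ ((d:ℝ) * (s * b / (r + s)) + (s*μ) * (r * b / (r+s))) * (((X:ℝ))+1)^2 := by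
    intro X
    have h1 := Stmt5.abs_A0_le d hd hr hs hb X
    have h2 := Stmt5.abs_B0_le hr hs hb X
    have h3 : |Stmt5.A0 d r s b X + (s*μ) * Stmt5.B0 r s b X|
        ≤ (d:ℝ) * (s * b / (r + s)) + (s*μ) * (r * b / (r+s)) := by
      calc |Stmt5.A0 d r s b X + (s*μ) * Stmt5.B0 r s b X|
          ≤ |Stmt5.A0 d r s b X| + (s*μ) * |Stmt5.B0 r s b X| := by
            refine (abs_add_le _ _).trans ?_
            rw [abs_mul, abs_of_nonneg hsμ]
        _ ≤ (d:ℝ) * (s * b / (r + s)) + (s*μ) * (r * b / (r+s)) := by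
            have := mul_le_mul_of_nonneg_left h2 hsμ
            linarith
    refine h3.trans ?_
    have h4 : (1:ℝ) ≤ (((X:ℝ))+1)^2 := by nlinarith [Nat.cast_nonneg (α := ℝ) X]
    have h5 : 0 ≤ (d:ℝ) * (s * b / (r + s)) + (s*μ) * (r * b / (r+s)) := by positivity
    nlinarith
  have hfsum : Summable (fun X : ℕ => Stmt5.pois (r*μ) X
      * |Stmt5.A0 d r s b X + (s*μ) * Stmt5.B0 r s b X|) :=
    Stmt5.summable_pois_abs_dom (r*μ) hrμ habsf
  -- main computation
  have step1 : klRisk d r s lam (fun x y => pJ d r s x y)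
        - klRisk d r s lam (fun x y => pHat d r s b x y)
      = ∑' X : ℕ, Stmt5.pois (r*μ) X * (Stmt5.A0 d r s b X + (s*μ) * Stmt5.B0 r s b X) := by
    show (∑' x : Fin d → ℕ, poissonPMF d r lam x *
        (∑' y, poissonPMF d s lam y * Real.log (poissonPMF d s lam y / pJ d r s x y)))
      - (∑' x : Fin d → ℕ, poissonPMF d r lam x *
        (∑' y, poissonPMF d s lam y * Real.log (poissonPMF d s lam y / pHat d r s b x y))) = _
    rw [← Summable.tsum_sub hOutJ hOutH]
    have hcongr : ∀ x : Fin d → ℕ,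
        poissonPMF d r lam x *
          (∑' y, poissonPMF d s lam y * Real.log (poissonPMF d s lam y / pJ d r s x y))
        - poissonPMF d r lam x *
          (∑' y, poissonPMF d s lam y * Real.log (poissonPMF d s lam y / pHat d r s b x y))
        = poissonPMF d r lam x * ((fun X : ℕ => Stmt5.A0 d r s b X + (s*μ) * Stmt5.B0 r s b X)
            (∑ i, x i)) := by
      intro x
      rw [← mul_sub, hInner x]
    rw [tsum_congr hcongr]
    exact Stmt5.key_tsum d r lam hrl _ hfsum
  rw [step1]
  -- split and shift
  have hsumA : Summable (fun X : ℕ => Stmt5.pois (r*μ) X * Stmt5.A0 d r s b X) := by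
    apply Stmt5.summable_pois_dom (r*μ) hrμ (C := (d:ℝ) * (s * b / (r + s)))
    intro X
    have h4 : (1:ℝ) ≤ (((X:ℝ))+1)^2 := by nlinarith [Nat.cast_nonneg (α := ℝ) X]
    have := Stmt5.abs_A0_le d hd hr hs hb X
    nlinarith [abs_nonneg (Stmt5.A0 d r s b X)]
  have hsumB : Summable (fun X : ℕ => Stmt5.pois (r*μ) X * ((s*μ) * Stmt5.B0 r s b X)) := by
    apply Stmt5.summable_pois_dom (r*μ) hrμ (C := (s*μ) * (r * b / (r+s)))
    intro X
    have h4 : (1:ℝ) ≤ (((X:ℝ))+1)^2 := by nlinarith [Nat.cast_nonneg (α := ℝ) X]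
    have h2 := Stmt5.abs_B0_le hr hs hb X
    rw [abs_mul, abs_of_nonneg hsμ]
    have := mul_le_mul_of_nonneg_left h2 hsμ
    nlinarith [abs_nonneg (Stmt5.B0 r s b X), mul_nonneg hsμ (abs_nonneg (Stmt5.B0 r s b X))]
  have hsumE2 : Summable (fun X : ℕ => Stmt5.E2 r s b X * Stmt5.pois (r*μ) X) := by
    have h := Stmt5.summable_pois_dom (r*μ) hrμ (C := s * b / (r+s))
      (f := Stmt5.E2 r s b) (by
        intro X
        have h4 : (1:ℝ) ≤ (((X:ℝ))+1)^2 := by nlinarith [Nat.cast_nonneg (α := ℝ) X]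
        have h2 := Stmt5.abs_E2_le hr hs hb X
        nlinarith [abs_nonneg (Stmt5.E2 r s b X)])
    exact h.congr (fun X => mul_comm _ _)
  have hshift : ∑' X : ℕ, Stmt5.pois (r*μ) X * ((s*μ) * Stmt5.B0 r s b X)
      = ∑' X : ℕ, Stmt5.E2 r s b X * Stmt5.pois (r*μ) X := by
    have h1 : ∀ X : ℕ, Stmt5.pois (r*μ) X * ((s*μ) * Stmt5.B0 r s b X)
        = (fun Y : ℕ => Stmt5.E2 r s b Y * Stmt5.pois (r*μ) Y) (X+1) :=
      fun X => Stmt5.shift_eq hr hs hb μ X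
    rw [tsum_congr h1]
    have h2 := Summable.tsum_eq_zero_add hsumE2
    rw [Stmt5.E2_zero, zero_mul, zero_add] at h2
    exact h2.symm
  calc ∑' X : ℕ, Stmt5.pois (r*μ) X * (Stmt5.A0 d r s b X + (s*μ) * Stmt5.B0 r s b X)
      = ∑' X : ℕ, (Stmt5.pois (r*μ) X * Stmt5.A0 d r s b X
          + Stmt5.pois (r*μ) X * ((s*μ) * Stmt5.B0 r s b X)) := by
        apply tsum_congr; intro X; ring
    _ = (∑' X : ℕ, Stmt5.pois (r*μ) X * Stmt5.A0 d r s b X)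
          + ∑' X : ℕ, Stmt5.pois (r*μ) X * ((s*μ) * Stmt5.B0 r s b X) := Summable.tsum_add hsumA hsumB
    _ = (∑' X : ℕ, Stmt5.pois (r*μ) X * Stmt5.A0 d r s b X)
          + ∑' X : ℕ, Stmt5.E2 r s b X * Stmt5.pois (r*μ) X := by rw [hshift]
    _ = ∑' X : ℕ, (Stmt5.pois (r*μ) X * Stmt5.A0 d r s b X
          + Stmt5.E2 r s b X * Stmt5.pois (r*μ) X) := (Summable.tsum_add hsumA hsumE2).symm
    _ = ∑' X : ℕ,
          (-((X : ℝ) + (d : ℝ) / 2) * Real.log (1 - (s / (r + s)) * b / ((X : ℝ) + 1 + b))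
            - (s / r) * (X : ℝ) * Real.log (1 + (r / (r + s)) * b / (X : ℝ)))
          * (Real.exp (-(r * μ)) * (r * μ) ^ X / (Nat.factorial X : ℝ)) := by
        apply tsum_congr
        intro X
        rw [Stmt5.A0_eq_E1 d hr hs hb X]
        show Stmt5.pois (r*μ) X * _ + Stmt5.E2 r s b X * Stmt5.pois (r*μ) X
          = _ * Stmt5.pois (r*μ) X
        unfold Stmt5.E2
        ring
end

section
/- Fix d ≥ 1 and positive reals r, s. For every λ ∈ (0,∞)^d, the Kullback–Leibler risk of the Jeffreys predictive distribution admits the integral representation R(λ, p_J) = ∫_r^{r+s} Σ_{i=1}^d ( 1/(2t) − f(tλ_i)/t ) dt, where f(μ) = μ · Σ_{x=0}^∞ log((x+1/2)/μ) e^{-μ}μ^x/x! for μ > 0. -/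
/-- `f(μ) = μ · E[log((x + 1/2)/μ)]` for `x ~ Poisson(μ)`. -/
noncomputable def f (μ : ℝ) : ℝ :=
  μ * ∑' x : ℕ, Real.log (((x : ℝ) + 1 / 2) / μ) * Real.exp (-μ) * μ ^ x / (Nat.factorial x : ℝ)

namespace Stmt6

set_option maxHeartbeats 1000000

noncomputable def q (c : ℝ) (a : ℕ) : ℝ := Real.exp (-c) * c ^ a / (Nat.factorial a : ℝ)

noncomputable def L (a : ℕ) : ℝ := ∑ k ∈ Finset.range a, Real.log ((k : ℝ) + 1/2)

lemma q_pos {c : ℝ} (hc : 0 < c) (a : ℕ) : 0 < q c a := by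
  unfold q; positivity

lemma q_nonneg {c : ℝ} (hc : 0 < c) (a : ℕ) : 0 ≤ q c a := (q_pos hc a).le

lemma fact_pos' (a : ℕ) : (0:ℝ) < (Nat.factorial a : ℝ) := by
  exact_mod_cast Nat.factorial_pos a

lemma hasSum_q {c : ℝ} : HasSum (q c) 1 := by
  have h1 : Summable (fun a : ℕ => c ^ a / (Nat.factorial a : ℝ)) :=
    Real.summable_pow_div_factorial c
  have h2 : (∑' a : ℕ, c ^ a / (Nat.factorial a : ℝ)) = Real.exp c := by
    rw [Real.exp_eq_exp_ℝ, NormedSpace.exp_eq_tsum_div]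
  have h := (h1.hasSum_iff.mpr h2).mul_left (Real.exp (-c))
  have : Real.exp (-c) * Real.exp c = 1 := by
    rw [← Real.exp_add]; simp
  rw [this] at h
  refine h.congr_fun fun a => ?_
  unfold q; ring

lemma hasSum_q_mul_id {c : ℝ} : HasSum (fun a => q c a * a) c := by
  rw [← hasSum_nat_add_iff' (f := fun a => q c a * a) 1]
  have h := (hasSum_q (c := c)).mul_left c
  have hc : c - ∑ i ∈ Finset.range 1, q c i * (i : ℝ) = c * 1 := by simp
  rw [hc]
  refine h.congr_fun fun a => ?_
  have hfac : ((Nat.factorial (a+1) : ℝ)) = ((a:ℝ)+1) * (Nat.factorial a : ℝ) := by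
    rw [Nat.factorial_succ]; push_cast; ring
  have h1 : ((a:ℝ) + 1) ≠ 0 := by positivity
  have h2 : (Nat.factorial a : ℝ) ≠ 0 := Nat.cast_ne_zero.mpr (Nat.factorial_ne_zero a)
  show q c (a+1) * ((a+1:ℕ):ℝ) = c * q c a
  push_cast
  unfold q
  rw [hfac]
  field_simp
  ring

lemma summable_q {c : ℝ} : Summable (q c) := hasSum_q.summable

lemma log_half_bound (k : ℕ) : |Real.log ((k:ℝ) + 1/2)| ≤ (k:ℝ) + 1 := by
  have hlog2 : Real.log 2 ≤ 1 := by
    have := Real.log_le_sub_one_of_pos (by norm_num : (0:ℝ) < 2)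
    linarith
  rcases k with _ | k
  · have : ((0:ℕ):ℝ) + 1/2 = (2:ℝ)⁻¹ := by norm_num
    rw [this, Real.log_inv, abs_neg, abs_of_nonneg (Real.log_nonneg one_le_two)]
    simpa using hlog2
  · have hx : (1:ℝ) ≤ ((k+1:ℕ):ℝ) + 1/2 := by push_cast; linarith [Nat.cast_nonneg (α := ℝ) k]
    rw [abs_of_nonneg (Real.log_nonneg hx)]
    have := Real.log_le_sub_one_of_pos (by linarith : (0:ℝ) < ((k+1:ℕ):ℝ) + 1/2)
    push_cast at this ⊢
    linarith

lemma L_abs_le (n : ℕ) : |L n| ≤ ((n:ℝ)+1)^2 := by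
  calc |L n| ≤ ∑ k ∈ Finset.range n, |Real.log ((k:ℝ) + 1/2)| :=
        Finset.abs_sum_le_sum_abs _ _
    _ ≤ ∑ k ∈ Finset.range n, ((n:ℝ)) := by
        refine Finset.sum_le_sum fun k hk => ?_
        have hk' : k + 1 ≤ n := Finset.mem_range.mp hk
        have : ((k:ℝ)) + 1 ≤ (n:ℝ) := by exact_mod_cast hk'
        exact (log_half_bound k).trans this
    _ ≤ ((n:ℝ)+1)^2 := by
        rw [Finset.sum_const, Finset.card_range, nsmul_eq_mul]
        have : (0:ℝ) ≤ n := Nat.cast_nonneg n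
        nlinarith

lemma sq_le_pow2 (a : ℕ) : ((a:ℝ)+1)^2 ≤ 9 * 2^a := by
  have aux : ∀ a : ℕ, ((a:ℝ)+1)^2 + 7 ≤ 9 * 2^a := by
    intro a
    induction a with
    | zero => norm_num
    | succ n ih =>
      have h2 : (9:ℝ) * 2^(n+1) = 2 * (9 * 2^n) := by ring
      rw [h2]
      push_cast
      push_cast at ih
      nlinarith [sq_nonneg ((n:ℝ))]
  linarith [aux a]

lemma summable_q_sq {c : ℝ} (hc : 0 < c) : Summable (fun a => q c a * ((a:ℝ)+1)^2) := by
  refine Summable.of_nonneg_of_le (fun a => mul_nonneg (q_nonneg hc a) (by positivity))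
    (fun a => ?_) (((Real.summable_pow_div_factorial (2*c)).mul_left (Real.exp (-c) * 9)))
  have h1 : q c a * ((a:ℝ)+1)^2 ≤ q c a * (9 * 2^a) := by
    have := sq_le_pow2 a
    have hq := q_nonneg hc a
    nlinarith
  refine h1.trans (le_of_eq ?_)
  unfold q
  rw [mul_pow]
  field_simp

lemma summable_q_mul_of_le {c : ℝ} (hc : 0 < c) {h : ℕ → ℝ} {C : ℝ}
    (hb : ∀ a, |h a| ≤ C * ((a:ℝ)+1)^2) : Summable (fun a => q c a * h a) := by
  rw [← summable_abs_iff]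
  refine Summable.of_nonneg_of_le (fun a => abs_nonneg _) (fun a => ?_)
    (((summable_q_sq hc).mul_left C))
  rw [abs_mul, abs_of_nonneg (q_nonneg hc a)]
  calc q c a * |h a| ≤ q c a * (C * ((a:ℝ)+1)^2) := by
        have := hb a; have hq := q_nonneg hc a; nlinarith
    _ = C * (q c a * ((a:ℝ)+1)^2) := by ring

/-! ### Product-space infrastructure -/

lemma hasSum_prod_mul {α β : Type*} {f : α → ℝ} {g : β → ℝ} {A B : ℝ} (hf : HasSum f A)
    (hg : HasSum g B) (hf' : Summable fun a => |f a|) (hg' : Summable fun b => |g b|) :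
    HasSum (fun x : α × β => f x.1 * g x.2) (A * B) := by
  have hs : Summable (fun x : α × β => f x.1 * g x.2) := by
    rw [← summable_abs_iff]
    exact (hf'.mul_of_nonneg hg' (fun _ => abs_nonneg _) fun _ => abs_nonneg _).congr
      fun x => (abs_mul _ _).symm
  refine hs.hasSum_iff.mpr ?_
  rw [hs.tsum_prod]
  calc ∑' a, ∑' b, f a * g b = ∑' a, f a * B := by
        refine tsum_congr fun a => ?_
        rw [tsum_mul_left, hg.tsum_eq]
    _ = A * B := by rw [tsum_mul_right, hf.tsum_eq]

lemma hasSum_prod_pi : ∀ {d : ℕ} (p : Fin d → ℕ → ℝ), (∀ i a, 0 ≤ p i a) →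
    (∀ i, HasSum (p i) 1) →
    HasSum (fun x : Fin d → ℕ => ∏ i, p i (x i)) 1 := by
  intro d
  induction d with
  | zero =>
    intro p _ _
    have h0 : HasSum (fun _ : Fin 0 → ℕ => (1:ℝ)) 1 :=
      hasSum_single (f := fun _ : Fin 0 → ℕ => (1:ℝ)) default
        (fun b hb => absurd (Subsingleton.elim b default) hb)
    exact h0.congr_fun fun x => by simp
  | succ n ih =>
    intro p hp hp1
    have habs : ∀ (pp : ℕ → ℝ), (∀ a, 0 ≤ pp a) → Summable pp →
        Summable (fun a => |pp a|) := fun pp h hs => hs.congr fun a => (abs_of_nonneg (h a)).symm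
    have hP : HasSum (fun z : Fin n → ℕ => ∏ i : Fin n, p i.succ (z i)) 1 :=
      ih (fun i => p i.succ) (fun i a => hp _ _) (fun i => hp1 _)
    have hPabs : Summable (fun z : Fin n → ℕ => |∏ i : Fin n, p i.succ (z i)|) :=
      hP.summable.congr fun z =>
        (abs_of_nonneg (Finset.prod_nonneg fun i _ => hp _ _)).symm
    have key : HasSum (fun az : ℕ × (Fin n → ℕ) =>
        p 0 az.1 * ∏ i : Fin n, p i.succ (az.2 i)) ((1:ℝ) * 1) :=
      hasSum_prod_mul (f := p 0) (g := fun z : Fin n → ℕ => ∏ i : Fin n, p i.succ (z i))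
        (hp1 0) hP (habs _ (hp 0) (hp1 0).summable) hPabs
    rw [one_mul] at key
    refine ((Fin.consEquiv (fun _ : Fin (n+1) => ℕ)).hasSum_iff).mp ?_
    refine key.congr_fun fun az => ?_
    simp only [Function.comp_apply]
    have hce : (Fin.consEquiv fun _ : Fin (n+1) => ℕ) az = Fin.cons az.1 az.2 := rfl
    rw [hce, Fin.prod_univ_succ]
    simp

lemma hasSum_main : ∀ {d : ℕ} (p : Fin d → ℕ → ℝ) (h : Fin d → ℕ → ℝ),
    (∀ i a, 0 ≤ p i a) → (∀ i, HasSum (p i) 1) →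
    (∀ i, Summable (fun a => p i a * |h i a|)) →
    HasSum (fun x : Fin d → ℕ => (∏ i, p i (x i)) * (∑ i, h i (x i)))
      (∑ i, ∑' a, p i a * h i a) := by
  intro d
  induction d with
  | zero =>
    intro p h _ _ _
    have h0 : HasSum (fun _ : Fin 0 → ℕ => (0:ℝ)) 0 := hasSum_zero
    simpa using h0.congr_fun fun x => by simp
  | succ n ih =>
    intro p h hp hp1 hh
    have hPnn : ∀ z : Fin n → ℕ, 0 ≤ ∏ i : Fin n, p i.succ (z i) :=
      fun z => Finset.prod_nonneg fun i _ => hp _ _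
    have hPsum : HasSum (fun z : Fin n → ℕ => ∏ i : Fin n, p i.succ (z i)) 1 :=
      hasSum_prod_pi _ (fun i a => hp _ _) (fun i => hp1 _)
    have hQ : HasSum (fun z : Fin n → ℕ =>
        (∏ i : Fin n, p i.succ (z i)) * ∑ i : Fin n, h i.succ (z i))
        (∑ i : Fin n, ∑' a, p i.succ a * h i.succ a) :=
      ih (fun i => p i.succ) (fun i => h i.succ) (fun i a => hp _ _) (fun i => hp1 _)
        (fun i => hh _)
    have hQabs : HasSum (fun z : Fin n → ℕ =>
        (∏ i : Fin n, p i.succ (z i)) * ∑ i : Fin n, |h i.succ (z i)|)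
        (∑ i : Fin n, ∑' a, p i.succ a * |h i.succ a|) :=
      ih (fun i => p i.succ) (fun i a => |h i.succ a|) (fun i a => hp _ _) (fun i => hp1 _)
        (fun i => (hh i.succ).congr fun a => by rw [abs_abs])
    have hQabsS : Summable (fun z : Fin n → ℕ =>
        |(∏ i : Fin n, p i.succ (z i)) * ∑ i : Fin n, h i.succ (z i)|) := by
      refine Summable.of_nonneg_of_le (fun z => abs_nonneg _) (fun z => ?_) hQabs.summable
      rw [abs_mul, abs_of_nonneg (hPnn z)]
      exact mul_le_mul_of_nonneg_left (Finset.abs_sum_le_sum_abs _ _) (hPnn z)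
    have hf1abs : Summable (fun a => |p 0 a * h 0 a|) :=
      (hh 0).congr fun a => by rw [abs_mul, abs_of_nonneg (hp 0 a)]
    have hf1 : HasSum (fun a => p 0 a * h 0 a) (∑' a, p 0 a * h 0 a) :=
      (summable_abs_iff.mp hf1abs).hasSum
    have hPabs : Summable (fun z : Fin n → ℕ => |∏ i : Fin n, p i.succ (z i)|) :=
      hPsum.summable.congr fun z => (abs_of_nonneg (hPnn z)).symm
    have hp0abs : Summable (fun a => |p 0 a|) :=
      (hp1 0).summable.congr fun a => (abs_of_nonneg (hp 0 a)).symm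
    have t1 : HasSum (fun az : ℕ × (Fin n → ℕ) =>
        (p 0 az.1 * h 0 az.1) * ∏ i : Fin n, p i.succ (az.2 i))
        ((∑' a, p 0 a * h 0 a) * 1) :=
      hasSum_prod_mul (f := fun a => p 0 a * h 0 a)
        (g := fun z : Fin n → ℕ => ∏ i : Fin n, p i.succ (z i)) hf1 hPsum hf1abs hPabs
    have t2 : HasSum (fun az : ℕ × (Fin n → ℕ) =>
        p 0 az.1 * ((∏ i : Fin n, p i.succ (az.2 i)) * ∑ i : Fin n, h i.succ (az.2 i)))
        ((1:ℝ) * (∑ i : Fin n, ∑' a, p i.succ a * h i.succ a)) :=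
      hasSum_prod_mul (f := p 0)
        (g := fun z : Fin n → ℕ => (∏ i : Fin n, p i.succ (z i)) * ∑ i : Fin n, h i.succ (z i))
        (hp1 0) hQ hp0abs hQabsS
    have tt := t1.add t2
    have hval : (∑' a, p 0 a * h 0 a) * 1
        + (1:ℝ) * (∑ i : Fin n, ∑' a, p i.succ a * h i.succ a)
        = ∑ i : Fin (n+1), ∑' a, p i a * h i a := by
      rw [Fin.sum_univ_succ]; ring
    rw [hval] at tt
    refine ((Fin.consEquiv (fun _ : Fin (n+1) => ℕ)).hasSum_iff).mp ?_
    refine tt.congr_fun fun az => ?_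
    simp only [Function.comp_apply]
    have hce : (Fin.consEquiv fun _ : Fin (n+1) => ℕ) az = Fin.cons az.1 az.2 := rfl
    rw [hce, Fin.prod_univ_succ, Fin.sum_univ_succ]
    simp only [Fin.cons_zero, Fin.cons_succ]
    ring

/-! ### Power series differentiation -/

lemma summable_co {co : ℕ → ℝ} (hco : ∀ a, |co a| ≤ ((a:ℝ)+1)^2) (x : ℝ) :
    Summable (fun a => co a * x^a / (Nat.factorial a : ℝ)) := by
  rw [← summable_abs_iff]
  refine Summable.of_nonneg_of_le (fun a => abs_nonneg _) (fun a => ?_)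
    ((Real.summable_pow_div_factorial (2*|x|)).mul_left 9)
  rw [abs_div, abs_mul, abs_pow, Nat.abs_cast]
  have hrhs : 9 * ((2*|x|)^a / (Nat.factorial a : ℝ))
      = (9 * 2^a) * |x|^a / (Nat.factorial a : ℝ) := by
    rw [mul_pow]; ring
  rw [hrhs]
  have h1 : |co a| ≤ 9 * 2^a := (hco a).trans (sq_le_pow2 a)
  have := fact_pos' a
  gcongr

/-- Term-by-term differentiation of entire-type series with coefficient bound. -/
lemma hasDerivAt_ps {co : ℕ → ℝ} (hco : ∀ a, |co a| ≤ ((a:ℝ)+1)^2) (c : ℝ) :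
    HasDerivAt (fun x : ℝ => ∑' a, co a * x^a / (Nat.factorial a : ℝ))
      (∑' a, co (a+1) * c^a / (Nat.factorial a : ℝ)) c := by
  set R : ℝ := |c| + 1 with hR
  have hR0 : 0 < R := by positivity
  set u : ℕ → ℝ := fun a => ((a:ℝ)+1)^2 * ((a:ℝ) * R^(a-1)) / (Nat.factorial a : ℝ) with hu
  have hus : Summable u := by
    rw [← summable_nat_add_iff 1]
    refine Summable.of_nonneg_of_le (fun a => ?_) (fun a => ?_)
      ((Real.summable_pow_div_factorial (2*R)).mul_left 18)
    · have := fact_pos' (a+1); positivity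
    · have heq : u (a+1) = ((a:ℝ)+2)^2 * R^a / (Nat.factorial a : ℝ) := by
        have hfac : ((Nat.factorial (a+1) : ℝ)) = ((a:ℝ)+1) * (Nat.factorial a : ℝ) := by
          rw [Nat.factorial_succ]; push_cast; ring
        have h1 : ((a:ℝ)+1) ≠ 0 := by positivity
        simp only [hu]
        rw [hfac]
        push_cast
        field_simp
        ring
      rw [heq]
      have h18 : ((a:ℝ)+2)^2 ≤ 18 * 2^a := by
        have := sq_le_pow2 (a+1)
        push_cast at this
        have h2 : (9:ℝ) * 2^(a+1) = 18 * 2^a := by ring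
        linarith [this, h2.ge]
      have hrhs : 18 * ((2*R)^a / (Nat.factorial a : ℝ))
          = (18 * 2^a) * R^a / (Nat.factorial a : ℝ) := by rw [mul_pow]; ring
      rw [hrhs]
      have := fact_pos' a
      gcongr
  have hmem : c ∈ Metric.ball (0:ℝ) R := by
    simp only [Metric.mem_ball, Real.dist_eq, sub_zero]
    linarith [abs_nonneg c]
  have hbound : ∀ (a : ℕ) (x : ℝ), |x| ≤ R →
      |co a * ((a:ℝ) * x^(a-1)) / (Nat.factorial a : ℝ)| ≤ u a := by
    intro a x hxa
    rw [abs_div, abs_mul, abs_mul, Nat.abs_cast, abs_pow, Nat.abs_cast]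
    have hb1 : |x|^(a-1) ≤ R^(a-1) := pow_le_pow_left₀ (abs_nonneg x) hxa _
    have := fact_pos' a
    have hca := hco a
    simp only [hu]
    gcongr
  have hder := hasDerivAt_tsum_of_isPreconnected hus Metric.isOpen_ball
    (convex_ball (0:ℝ) R).isPreconnected
    (g := fun a x => co a * x^a / (Nat.factorial a : ℝ))
    (g' := fun a x => co a * ((a:ℝ) * x^(a-1)) / (Nat.factorial a : ℝ))
    (fun a x _ => (((hasDerivAt_pow a x).const_mul (co a)).div_const _))
    (fun a x hx => ?_) hmem (summable_co hco c) hmem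
  · -- convert derivative value
    have hsum' : Summable (fun a => co a * ((a:ℝ) * c^(a-1)) / (Nat.factorial a : ℝ)) := by
      rw [← summable_abs_iff]
      exact Summable.of_nonneg_of_le (fun a => abs_nonneg _)
        (fun a => hbound a c (by rw [hR]; linarith)) hus
    have : (∑' a, co a * ((a:ℝ) * c^(a-1)) / (Nat.factorial a : ℝ))
        = ∑' a, co (a+1) * c^a / (Nat.factorial a : ℝ) := by
      rw [hsum'.tsum_eq_zero_add]
      simp only [Nat.cast_zero, zero_mul, mul_zero, zero_div, zero_add, Nat.cast_ofNat]
      refine tsum_congr fun a => ?_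
      have hfac : ((Nat.factorial (a+1) : ℝ)) = ((a:ℝ)+1) * (Nat.factorial a : ℝ) := by
        rw [Nat.factorial_succ]; push_cast; ring
      have h1 : ((a:ℝ)+1) ≠ 0 := by positivity
      have : (a + 1 - 1 : ℕ) = a := by omega
      rw [hfac, this]
      push_cast
      field_simp
    rwa [this] at hder
  · simp only [Metric.mem_ball, Real.dist_eq, sub_zero] at hx
    rw [Real.norm_eq_abs]
    exact hbound a x hx.le

noncomputable def gg (c : ℝ) : ℝ := ∑' a, q c a * L a
noncomputable def phi (c : ℝ) : ℝ := ∑' a : ℕ, q c a * Real.log ((a:ℝ)+1/2)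

lemma log_half_abs_le_sq (a : ℕ) : |Real.log ((a:ℝ)+1/2)| ≤ ((a:ℝ)+1)^2 :=
  (log_half_bound a).trans (by nlinarith [Nat.cast_nonneg (α := ℝ) a])

lemma gg_eq (c : ℝ) : gg c
    = Real.exp (-c) * ∑' a, L a * c^a / (Nat.factorial a : ℝ) := by
  rw [← tsum_mul_left]
  exact tsum_congr fun a => by unfold q; ring

lemma phi_eq (c : ℝ) : phi c
    = Real.exp (-c) * ∑' a : ℕ, Real.log ((a:ℝ)+1/2) * c^a / (Nat.factorial a : ℝ) := by
  rw [← tsum_mul_left]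
  exact tsum_congr fun a => by unfold q; ring

lemma hasDerivAt_gg (c : ℝ) : HasDerivAt gg (phi c) c := by
  have hG := hasDerivAt_ps (co := L) L_abs_le c
  have hE : HasDerivAt (fun x : ℝ => Real.exp (-x)) (Real.exp (-c) * (-1)) c :=
    (hasDerivAt_neg c).exp
  have h := hE.mul hG
  have hfun : gg = fun x => Real.exp (-x) * ∑' a, L a * x^a / (Nat.factorial a : ℝ) :=
    funext gg_eq
  rw [hfun]
  refine h.congr_deriv ?_
  have hshift : (∑' a, L (a+1) * c^a / (Nat.factorial a : ℝ))
      = (∑' a, L a * c^a / (Nat.factorial a : ℝ))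
        + ∑' a : ℕ, Real.log ((a:ℝ)+1/2) * c^a / (Nat.factorial a : ℝ) := by
    rw [← Summable.tsum_add (summable_co L_abs_le c) (summable_co log_half_abs_le_sq c)]
    refine tsum_congr fun a => ?_
    have : L (a+1) = L a + Real.log ((a:ℝ)+1/2) := by
      unfold L; rw [Finset.sum_range_succ]
    rw [this]; ring
  rw [phi_eq, hshift]
  ring

lemma continuous_phi : Continuous phi := by
  have hd : Differentiable ℝ
      (fun x : ℝ => ∑' a : ℕ, Real.log ((a:ℝ)+1/2) * x^a / (Nat.factorial a : ℝ)) :=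
    fun x => (hasDerivAt_ps log_half_abs_le_sq x).differentiableAt
  have : phi = fun c => Real.exp (-c)
      * ∑' a : ℕ, Real.log ((a:ℝ)+1/2) * c^a / (Nat.factorial a : ℝ) := funext phi_eq
  rw [this]
  exact (Real.continuous_exp.comp continuous_neg).mul hd.continuous

/-! ### Gamma function facts and log of the likelihood ratio -/

lemma gamma_prod (a : ℕ) : Real.Gamma ((a:ℝ) + 1/2)
    = (∏ k ∈ Finset.range a, ((k:ℝ) + 1/2)) * Real.Gamma (1/2) := by
  induction a with
  | zero => simp
  | succ n ih =>
    have h : ((n+1:ℕ):ℝ) + 1/2 = ((n:ℝ) + 1/2) + 1 := by push_cast; ring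
    have hne : ((n:ℝ) + 1/2) ≠ 0 := by positivity
    rw [h, Real.Gamma_add_one hne, ih, Finset.prod_range_succ]
    ring

lemma log_gamma (a : ℕ) : Real.log (Real.Gamma ((a:ℝ) + 1/2))
    = L a + Real.log (Real.Gamma (1/2)) := by
  have hg : (0:ℝ) < Real.Gamma (1/2) := Real.Gamma_pos_of_pos (by norm_num)
  have hprod : (0:ℝ) < ∏ k ∈ Finset.range a, ((k:ℝ) + 1/2) :=
    Finset.prod_pos fun k _ => by positivity
  rw [gamma_prod, Real.log_mul hprod.ne' hg.ne',
    Real.log_prod (fun k _ => by positivity)]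
  rfl

lemma gamma_pos_shift (a : ℕ) : (0:ℝ) < Real.Gamma ((a:ℝ) + 1/2) :=
  Real.Gamma_pos_of_pos (by positivity)

lemma log_ratio (d : ℕ) (r s : ℝ) (hr : 0 < r) (hs : 0 < s) (lam : Fin d → ℝ)
    (hlam : ∀ i, 0 < lam i) (x y : Fin d → ℕ) :
    Real.log (poissonPMF d s lam y / pJ d r s x y)
      = ∑ i, (-(s * lam i) + (y i : ℝ) * Real.log ((r+s) * lam i) + L (x i) - L (x i + y i)
          + ((x i : ℝ) + 1/2) * Real.log ((r+s)/r)) := by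
  have hrs : (0:ℝ) < r + s := by linarith
  have hA : (0:ℝ) < r / (r+s) := by positivity
  have hB : (0:ℝ) < s / (r+s) := by positivity
  have hPpos : ∀ i : Fin d, (0:ℝ)
      < Real.exp (-(s * lam i)) * (s * lam i) ^ (y i) / (Nat.factorial (y i) : ℝ) := by
    intro i; have := hlam i; positivity
  have hP : 0 < poissonPMF d s lam y := Finset.prod_pos fun i _ => hPpos i
  have hCpos : ∀ i : Fin d, (0:ℝ) < Real.Gamma ((x i : ℝ) + (y i : ℝ) + 1 / 2)
      / (Real.Gamma ((x i : ℝ) + 1 / 2) * (Nat.factorial (y i) : ℝ)) := by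
    intro i
    have h1 : (0:ℝ) < Real.Gamma ((x i : ℝ) + (y i : ℝ) + 1/2) := by
      have : ((x i : ℝ) + (y i : ℝ) + 1/2) = (((x i + y i : ℕ)):ℝ) + 1/2 := by push_cast; ring
      rw [this]; exact gamma_pos_shift _
    have h2 := gamma_pos_shift (x i)
    have h3 : (0:ℝ) < (Nat.factorial (y i) : ℝ) := by exact_mod_cast Nat.factorial_pos _
    positivity
  have hApow : (0:ℝ) < (r / (r+s)) ^ ((∑ i, (x i : ℝ)) + (d : ℝ) / 2) :=
    Real.rpow_pos_of_pos hA _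
  have hBpow : (0:ℝ) < (s / (r+s)) ^ (∑ i, y i) := pow_pos hB _
  have hCprod : (0:ℝ) < ∏ i, Real.Gamma ((x i : ℝ) + (y i : ℝ) + 1 / 2)
      / (Real.Gamma ((x i : ℝ) + 1 / 2) * (Nat.factorial (y i) : ℝ)) :=
    Finset.prod_pos fun i _ => hCpos i
  have hQ : 0 < pJ d r s x y := by
    unfold pJ; exact mul_pos (mul_pos hApow hBpow) hCprod
  rw [Real.log_div hP.ne' hQ.ne']
  have hlogP : Real.log (poissonPMF d s lam y)
      = ∑ i, (-(s * lam i) + (y i : ℝ) * Real.log (s * lam i)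
          - Real.log (Nat.factorial (y i) : ℝ)) := by
    unfold poissonPMF
    rw [Real.log_prod (fun i _ => (hPpos i).ne')]
    refine Finset.sum_congr rfl fun i _ => ?_
    have h1 := hlam i
    have h3 : (0:ℝ) < (Nat.factorial (y i) : ℝ) := by exact_mod_cast Nat.factorial_pos _
    rw [Real.log_div (by positivity) h3.ne', Real.log_mul (Real.exp_ne_zero _)
      (by positivity), Real.log_exp, Real.log_pow]
  have hlogQ : Real.log (pJ d r s x y)
      = ((∑ i, (x i : ℝ)) + (d : ℝ) / 2) * Real.log (r/(r+s))
        + (∑ i, (y i : ℝ)) * Real.log (s/(r+s))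
        + ∑ i, (L (x i + y i) - L (x i) - Real.log (Nat.factorial (y i) : ℝ)) := by
    unfold pJ
    rw [Real.log_mul (mul_pos hApow hBpow).ne' hCprod.ne',
      Real.log_mul hApow.ne' hBpow.ne', Real.log_rpow hA, Real.log_pow,
      Real.log_prod (fun i _ => (hCpos i).ne')]
    congr 1
    · congr 1
      rw [Nat.cast_sum]
    · refine Finset.sum_congr rfl fun i _ => ?_
      have h1 : ((x i : ℝ) + (y i : ℝ) + 1/2) = (((x i + y i : ℕ)):ℝ) + 1/2 := by
        push_cast; ring
      have h2 := gamma_pos_shift (x i)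
      have h3 : (0:ℝ) < (Nat.factorial (y i) : ℝ) := by exact_mod_cast Nat.factorial_pos _
      have h4 : (0:ℝ) < Real.Gamma ((x i : ℝ) + (y i : ℝ) + 1/2) := by
        rw [h1]; exact gamma_pos_shift _
      rw [Real.log_div h4.ne' (by positivity), Real.log_mul h2.ne' h3.ne', h1, log_gamma,
        log_gamma]
      ring
  rw [hlogP, hlogQ]
  have hsum : ((∑ i, (x i : ℝ)) + (d : ℝ) / 2) = ∑ i, ((x i : ℝ) + 1/2) := by
    rw [Finset.sum_add_distrib, Finset.sum_const, Finset.card_univ, Fintype.card_fin,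
      nsmul_eq_mul]
    ring
  rw [hsum, Finset.sum_mul, Finset.sum_mul, ← Finset.sum_add_distrib, ← Finset.sum_add_distrib,
    ← Finset.sum_sub_distrib]
  refine Finset.sum_congr rfl fun i _ => ?_
  have h1 := hlam i
  have hlog1 : Real.log (s * lam i) = Real.log s + Real.log (lam i) :=
    Real.log_mul hs.ne' h1.ne'
  have hlog2 : Real.log ((r+s) * lam i) = Real.log (r+s) + Real.log (lam i) :=
    Real.log_mul hrs.ne' h1.ne'
  have hlog3 : Real.log (r/(r+s)) = Real.log r - Real.log (r+s) :=
    Real.log_div hr.ne' hrs.ne'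
  have hlog4 : Real.log (s/(r+s)) = Real.log s - Real.log (r+s) :=
    Real.log_div hs.ne' hrs.ne'
  have hlog5 : Real.log ((r+s)/r) = Real.log (r+s) - Real.log r :=
    Real.log_div hrs.ne' hr.ne'
  rw [hlog1, hlog2, hlog3, hlog4, hlog5]
  ring

/-! ### Convolution identity -/

lemma cross_sq (a b : ℕ) : (((a+b:ℕ):ℝ)+1)^2 ≤ ((a:ℝ)+1)^2 * ((b:ℝ)+1)^2 := by
  push_cast
  have ha : (0:ℝ) ≤ a := Nat.cast_nonneg a
  have hb : (0:ℝ) ≤ b := Nat.cast_nonneg b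
  nlinarith [mul_nonneg ha hb, sq_nonneg ((a:ℝ)*(b:ℝ)), mul_nonneg (mul_nonneg ha hb) ha,
    mul_nonneg (mul_nonneg ha hb) hb, mul_nonneg (mul_nonneg (mul_nonneg ha hb) ha) hb]

lemma L_add_abs_le (a b : ℕ) : |L (a+b)| ≤ ((a:ℝ)+1)^2 * ((b:ℝ)+1)^2 :=
  (L_abs_le (a+b)).trans (cross_sq a b)

lemma summable_q_L_add {c : ℝ} (hc : 0 < c) (a : ℕ) :
    Summable (fun b => q c b * L (a+b)) :=
  summable_q_mul_of_le hc (C := ((a:ℝ)+1)^2) (fun b => by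
    have := L_add_abs_le a b; linarith)

lemma summable_q_L {c : ℝ} (hc : 0 < c) : Summable (fun a => q c a * L a) :=
  summable_q_mul_of_le hc (C := 1) (fun a => by have := L_abs_le a; linarith)

lemma W_abs_le {c : ℝ} (hc : 0 < c) (a : ℕ) :
    |∑' b, q c b * L (a+b)| ≤ (∑' b, q c b * ((b:ℝ)+1)^2) * ((a:ℝ)+1)^2 := by
  have habs : Summable (fun b => |q c b * L (a+b)|) := by
    rw [summable_abs_iff]; exact summable_q_L_add hc a
  have habs' : Summable (fun b => ‖q c b * L (a+b)‖) := by
    simpa only [Real.norm_eq_abs] using habs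
  rw [← Real.norm_eq_abs]
  refine (norm_tsum_le_tsum_norm habs').trans ?_
  have h1 : ∀ b : ℕ, |q c b * L (a+b)| ≤ ((a:ℝ)+1)^2 * (q c b * ((b:ℝ)+1)^2) := by
    intro b
    rw [abs_mul, abs_of_nonneg (q_nonneg hc b)]
    have h2 := L_add_abs_le a b
    have h3 := q_nonneg hc b
    nlinarith
  calc (∑' b, ‖q c b * L (a+b)‖) ≤ ∑' b, ((a:ℝ)+1)^2 * (q c b * ((b:ℝ)+1)^2) := by
        refine Summable.tsum_le_tsum (fun b => by simpa only [Real.norm_eq_abs] using h1 b) habs'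
          (((summable_q_sq hc)).mul_left _)
    _ = (∑' b, q c b * ((b:ℝ)+1)^2) * ((a:ℝ)+1)^2 := by rw [tsum_mul_left]; ring

lemma conv {c c' : ℝ} (hc : 0 < c) (hc' : 0 < c') :
    ∑' a, q c a * (∑' b, q c' b * L (a+b)) = ∑' n, q (c+c') n * L n := by
  set u : ℕ × ℕ → ℝ := fun p => q c p.1 * (q c' p.2 * L (p.1+p.2)) with hu
  have husum : Summable u := by
    rw [← summable_abs_iff]
    refine Summable.of_nonneg_of_le (fun p => abs_nonneg _) (fun p => ?_)
      ((summable_q_sq hc).mul_of_nonneg (summable_q_sq hc')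
        (fun a => mul_nonneg (q_nonneg hc a) (by positivity))
        (fun b => mul_nonneg (q_nonneg hc' b) (by positivity)))
    simp only [hu, abs_mul, abs_of_nonneg (q_nonneg hc _), abs_of_nonneg (q_nonneg hc' _)]
    have h2 := L_add_abs_le p.1 p.2
    have h3 := q_nonneg hc p.1
    have h4 := q_nonneg hc' p.2
    have h5 : (0:ℝ) ≤ ((p.1:ℝ)+1)^2 := by positivity
    have h6 : (0:ℝ) ≤ ((p.2:ℝ)+1)^2 := by positivity
    calc q c p.1 * (q c' p.2 * |L (p.1+p.2)|)
        ≤ q c p.1 * (q c' p.2 * (((p.1:ℝ)+1)^2 * ((p.2:ℝ)+1)^2)) := by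
          refine mul_le_mul_of_nonneg_left (mul_le_mul_of_nonneg_left h2 h4) h3
      _ = q c p.1 * ((p.1:ℝ)+1)^2 * (q c' p.2 * ((p.2:ℝ)+1)^2) := by ring
  have hLHS : ∑' a, q c a * (∑' b, q c' b * L (a+b)) = ∑' p : ℕ × ℕ, u p := by
    rw [husum.tsum_prod]
    exact tsum_congr fun a => (tsum_mul_left).symm
  rw [hLHS]
  have husig : Summable (fun x : (n : ℕ) × {p // p ∈ Finset.HasAntidiagonal.antidiagonal n} =>
      u (Finset.HasAntidiagonal.sigmaAntidiagonalEquivProd x)) :=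
    (Equiv.summable_iff (Finset.HasAntidiagonal.sigmaAntidiagonalEquivProd (A := ℕ))).mpr husum
  have hstep : ∑' p : ℕ × ℕ, u p
      = ∑' n : ℕ, ∑ p ∈ Finset.HasAntidiagonal.antidiagonal n, u p := by
    calc ∑' p : ℕ × ℕ, u p
        = ∑' (x : (n : ℕ) × {p // p ∈ Finset.HasAntidiagonal.antidiagonal n}),
            u (Finset.HasAntidiagonal.sigmaAntidiagonalEquivProd x) :=
          (Equiv.tsum_eq (Finset.HasAntidiagonal.sigmaAntidiagonalEquivProd (A := ℕ)) u).symm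
      _ = ∑' n : ℕ, ∑' (p : {p // p ∈ Finset.HasAntidiagonal.antidiagonal n}),
            u (Finset.HasAntidiagonal.sigmaAntidiagonalEquivProd ⟨n, p⟩) := husig.tsum_sigma
      _ = ∑' n : ℕ, ∑ p ∈ Finset.HasAntidiagonal.antidiagonal n, u p := by
          refine tsum_congr fun n => ?_
          exact Finset.tsum_subtype _ u
  rw [hstep]
  refine tsum_congr fun n => ?_
  have hrw : ∀ p ∈ Finset.HasAntidiagonal.antidiagonal n, u p = q c p.1 * (q c' p.2 * L n) := by
    intro p hp
    rw [hu]
    have := Finset.HasAntidiagonal.mem_antidiagonal.mp hp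
    simp only [this]
  rw [Finset.sum_congr rfl hrw, Finset.Nat.sum_antidiagonal_eq_sum_range_succ_mk]
  show _ = q (c+c') n * L n
  unfold q
  rw [add_pow]
  have hrhs : Real.exp (-(c+c')) * (∑ k ∈ Finset.range (n+1),
        c ^ k * c' ^ (n-k) * (n.choose k : ℝ)) / (Nat.factorial n : ℝ) * L n
      = ∑ k ∈ Finset.range (n+1), Real.exp (-(c+c'))
          * (c ^ k * c' ^ (n-k) * (n.choose k : ℝ)) / (Nat.factorial n : ℝ) * L n := by
    rw [Finset.mul_sum, Finset.sum_div, Finset.sum_mul]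
  rw [hrhs]
  refine Finset.sum_congr rfl fun k hk => ?_
  have hkn : k ≤ n := Nat.lt_succ_iff.mp (Finset.mem_range.mp hk)
  rw [Nat.cast_choose ℝ hkn]
  have hf1 : (Nat.factorial k : ℝ) ≠ 0 := (fact_pos' k).ne'
  have hf2 : (Nat.factorial (n-k) : ℝ) ≠ 0 := (fact_pos' (n-k)).ne'
  have hf3 : (Nat.factorial n : ℝ) ≠ 0 := (fact_pos' n).ne'
  have hexp : Real.exp (-(c+c')) = Real.exp (-c) * Real.exp (-c') := by
    rw [← Real.exp_add]; ring_nf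
  rw [hexp]
  field_simp

/-! ### Per-coordinate sums -/

noncomputable def Wf (c : ℝ) (a : ℕ) : ℝ := ∑' b, q c b * L (a + b)

lemma inner_hasSum {r s li : ℝ} (hr : 0 < r) (hs : 0 < s) (hl : 0 < li) (a : ℕ) :
    HasSum (fun b => q (s*li) b * (-(s * li) + (b:ℝ) * Real.log ((r+s) * li)
        + L a - L (a + b) + ((a:ℝ) + 1/2) * Real.log ((r+s)/r)))
      (-(s * li) + (s*li) * Real.log ((r+s) * li)
        + L a - Wf (s*li) a + ((a:ℝ) + 1/2) * Real.log ((r+s)/r)) := by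
  have hc : 0 < s * li := mul_pos hs hl
  have h1 : HasSum (fun b => q (s*li) b
        * (-(s * li) + L a + ((a:ℝ)+1/2) * Real.log ((r+s)/r)))
      (1 * (-(s * li) + L a + ((a:ℝ)+1/2) * Real.log ((r+s)/r))) :=
    hasSum_q.mul_right _
  have h2 : HasSum (fun b => (q (s*li) b * (b:ℝ)) * Real.log ((r+s)*li))
      ((s*li) * Real.log ((r+s)*li)) := hasSum_q_mul_id.mul_right _
  have h3 : HasSum (fun b => q (s*li) b * L (a + b)) (Wf (s*li) a) :=
    (summable_q_L_add hc a).hasSum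
  have h := (h1.add h2).sub h3
  have hval : (-(s * li) + (s*li) * Real.log ((r+s) * li)
        + L a - Wf (s*li) a + ((a:ℝ) + 1/2) * Real.log ((r+s)/r))
      = 1 * (-(s * li) + L a + ((a:ℝ)+1/2) * Real.log ((r+s)/r))
        + (s*li) * Real.log ((r+s)*li) - Wf (s*li) a := by ring
  rw [hval]
  exact h.congr_fun fun b => by ring

lemma hterm_abs_le {sl l3 l4 : ℝ} (hsl : 0 < sl) (a b : ℕ) :
    |(-(sl) + (b:ℝ) * l3 + L a - L (a + b) + ((a:ℝ) + 1/2) * l4)|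
      ≤ (sl + |l3| + 2*((a:ℝ)+1)^2 + ((a:ℝ)+1)*|l4|) * ((b:ℝ)+1)^2 := by
  have e0 : |(-(sl) + (b:ℝ) * l3 + L a - L (a + b) + ((a:ℝ) + 1/2) * l4)|
      ≤ sl + (b:ℝ)*|l3| + |L a| + |L (a+b)| + ((a:ℝ)+1/2)*|l4| := by
    have t1 : |(-(sl) + (b:ℝ) * l3 + L a - L (a + b)) + ((a:ℝ) + 1/2) * l4|
        ≤ |(-(sl) + (b:ℝ) * l3 + L a - L (a + b))| + |((a:ℝ) + 1/2) * l4| := abs_add_le _ _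
    have t2 : |(-(sl) + (b:ℝ) * l3 + L a) - L (a + b)|
        ≤ |(-(sl) + (b:ℝ) * l3 + L a)| + |L (a+b)| := abs_sub _ _
    have t3 : |(-(sl) + (b:ℝ) * l3) + L a| ≤ |(-(sl) + (b:ℝ) * l3)| + |L a| := abs_add_le _ _
    have t4 : |(-(sl)) + (b:ℝ) * l3| ≤ |(-sl)| + |(b:ℝ) * l3| := abs_add_le _ _
    have t5 : |(-sl)| = sl := by rw [abs_neg, abs_of_pos hsl]
    have t6 : |(b:ℝ) * l3| = (b:ℝ) * |l3| := by
      rw [abs_mul, Nat.abs_cast]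
    have t7 : |((a:ℝ) + 1/2) * l4| = ((a:ℝ)+1/2) * |l4| := by
      rw [abs_mul, abs_of_pos (by positivity : (0:ℝ) < (a:ℝ)+1/2)]
    linarith
  refine e0.trans ?_
  have ha : (0:ℝ) ≤ a := Nat.cast_nonneg a
  have hb : (0:ℝ) ≤ b := Nat.cast_nonneg b
  have hb2 : (1:ℝ) ≤ ((b:ℝ)+1)^2 := by nlinarith
  have hbb : (b:ℝ) ≤ ((b:ℝ)+1)^2 := by nlinarith
  have e1 : sl ≤ sl * ((b:ℝ)+1)^2 := by nlinarith
  have e2 : (b:ℝ)*|l3| ≤ |l3| * ((b:ℝ)+1)^2 := by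
    have := abs_nonneg l3; nlinarith
  have e3 : |L a| ≤ ((a:ℝ)+1)^2 * ((b:ℝ)+1)^2 := by
    have := L_abs_le a
    have h5 : (0:ℝ) ≤ ((a:ℝ)+1)^2 := by positivity
    nlinarith
  have e4 : |L (a+b)| ≤ ((a:ℝ)+1)^2 * ((b:ℝ)+1)^2 := L_add_abs_le a b
  have h6 := abs_nonneg l4
  have e5a : ((a:ℝ)+1/2)*|l4| ≤ ((a:ℝ)+1)*|l4| :=
    mul_le_mul_of_nonneg_right (by linarith) h6
  have e5b : ((a:ℝ)+1)*|l4| ≤ (((a:ℝ)+1)*|l4|)*((b:ℝ)+1)^2 :=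
    le_mul_of_one_le_right (by positivity) hb2
  have e5 : ((a:ℝ)+1/2)*|l4| ≤ (((a:ℝ)+1)*|l4|) * ((b:ℝ)+1)^2 := e5a.trans e5b
  nlinarith [e1, e2, e3, e4, e5]

lemma Hval_abs_le {r s li : ℝ} (hr : 0 < r) (hs : 0 < s) (hl : 0 < li) (a : ℕ) :
    |(-(s * li) + (s*li) * Real.log ((r+s) * li)
        + L a - Wf (s*li) a + ((a:ℝ) + 1/2) * Real.log ((r+s)/r))|
      ≤ (|(-(s * li) + (s*li) * Real.log ((r+s) * li))| + 1
          + (∑' b, q (s*li) b * ((b:ℝ)+1)^2) + |Real.log ((r+s)/r)|) * ((a:ℝ)+1)^2 := by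
  have hc : 0 < s * li := mul_pos hs hl
  set K1 := -(s * li) + (s*li) * Real.log ((r+s) * li) with hK1
  set M := ∑' b, q (s*li) b * ((b:ℝ)+1)^2 with hM
  have hMnn : 0 ≤ M := tsum_nonneg fun b => mul_nonneg (q_nonneg hc b) (by positivity)
  have hW : |Wf (s*li) a| ≤ M * ((a:ℝ)+1)^2 := W_abs_le hc a
  have hLa := L_abs_le a
  have ha : (0:ℝ) ≤ a := Nat.cast_nonneg a
  have ha2 : (1:ℝ) ≤ ((a:ℝ)+1)^2 := by nlinarith
  have e0 : |K1 + L a - Wf (s*li) a + ((a:ℝ) + 1/2) * Real.log ((r+s)/r)|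
      ≤ |K1| + |L a| + |Wf (s*li) a| + ((a:ℝ)+1/2) * |Real.log ((r+s)/r)| := by
    have t1 : |(K1 + L a - Wf (s*li) a) + ((a:ℝ) + 1/2) * Real.log ((r+s)/r)|
        ≤ |K1 + L a - Wf (s*li) a| + |((a:ℝ) + 1/2) * Real.log ((r+s)/r)| := abs_add_le _ _
    have t2 : |(K1 + L a) - Wf (s*li) a| ≤ |K1 + L a| + |Wf (s*li) a| := abs_sub _ _
    have t3 : |K1 + L a| ≤ |K1| + |L a| := abs_add_le _ _
    have t7 : |((a:ℝ) + 1/2) * Real.log ((r+s)/r)| = ((a:ℝ)+1/2) * |Real.log ((r+s)/r)| := by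
      rw [abs_mul, abs_of_pos (by positivity : (0:ℝ) < (a:ℝ)+1/2)]
    linarith
  refine e0.trans ?_
  have h6 := abs_nonneg (Real.log ((r+s)/r))
  have h7 := abs_nonneg K1
  have f1 : |K1| ≤ |K1| * ((a:ℝ)+1)^2 := le_mul_of_one_le_right h7 ha2
  have f2 : |Wf (s*li) a| ≤ M * ((a:ℝ)+1)^2 := hW
  have f3 : ((a:ℝ)+1/2) * |Real.log ((r+s)/r)| ≤ ((a:ℝ)+1)^2 * |Real.log ((r+s)/r)| :=
    mul_le_mul_of_nonneg_right (by nlinarith) h6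
  nlinarith [f1, f2, f3, hLa]

lemma outer_hasSum {r s li : ℝ} (hr : 0 < r) (hs : 0 < s) (hl : 0 < li) :
    HasSum (fun a => q (r*li) a * (-(s * li) + (s*li) * Real.log ((r+s) * li)
        + L a - Wf (s*li) a + ((a:ℝ) + 1/2) * Real.log ((r+s)/r)))
      (-(s * li) + (s*li) * Real.log ((r+s) * li) + gg (r*li) - gg ((r+s)*li)
        + (r*li + 1/2) * Real.log ((r+s)/r)) := by
  have hc1 : 0 < r * li := mul_pos hr hl
  have hc2 : 0 < s * li := mul_pos hs hl
  have h1 : HasSum (fun a => q (r*li) a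
        * (-(s * li) + (s*li) * Real.log ((r+s) * li) + (1/2) * Real.log ((r+s)/r)))
      (1 * (-(s * li) + (s*li) * Real.log ((r+s) * li) + (1/2) * Real.log ((r+s)/r))) :=
    hasSum_q.mul_right _
  have h2 : HasSum (fun a => q (r*li) a * L a) (gg (r*li)) := (summable_q_L hc1).hasSum
  have h3 : HasSum (fun a => (q (r*li) a * (a:ℝ)) * Real.log ((r+s)/r))
      ((r*li) * Real.log ((r+s)/r)) := hasSum_q_mul_id.mul_right _
  have hW : HasSum (fun a => q (r*li) a * Wf (s*li) a) (gg ((r+s)*li)) := by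
    have hsummable : Summable (fun a => q (r*li) a * Wf (s*li) a) :=
      summable_q_mul_of_le hc1 (C := ∑' b, q (s*li) b * ((b:ℝ)+1)^2)
        (fun a => W_abs_le hc2 a)
    refine hsummable.hasSum_iff.mpr ?_
    have hcv := conv hc1 hc2
    rw [show r*li + s*li = (r+s)*li by ring] at hcv
    exact hcv
  have h := ((h1.add h2).add h3).sub hW
  have hval : (-(s * li) + (s*li) * Real.log ((r+s) * li) + gg (r*li) - gg ((r+s)*li)
        + (r*li + 1/2) * Real.log ((r+s)/r))
      = 1 * (-(s * li) + (s*li) * Real.log ((r+s) * li) + (1/2) * Real.log ((r+s)/r))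
        + gg (r*li) + (r*li) * Real.log ((r+s)/r) - gg ((r+s)*li) := by ring
  rw [hval]
  exact h.congr_fun fun a => by ring

/-! ### Identification of `f` and calculus facts -/

lemma f_eq {μ : ℝ} (hμ : 0 < μ) : f μ = μ * (phi μ - Real.log μ) := by
  have hs1 : Summable (fun x : ℕ => q μ x * Real.log ((x:ℝ)+1/2)) :=
    summable_q_mul_of_le hμ (C := 1) (fun a => by have := log_half_abs_le_sq a; linarith)
  have hs2 : Summable (fun x : ℕ => q μ x * Real.log μ) := summable_q.mul_right _
  have hterm : ∀ x : ℕ,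
      Real.log (((x:ℝ)+1/2)/μ) * Real.exp (-μ) * μ^x / (Nat.factorial x : ℝ)
        = q μ x * Real.log ((x:ℝ)+1/2) - q μ x * Real.log μ := by
    intro x
    rw [Real.log_div (by positivity) hμ.ne']
    unfold q; ring
  unfold f
  congr 1
  rw [tsum_congr hterm, hs1.tsum_sub hs2, tsum_mul_right, hasSum_q.tsum_eq]
  show phi μ - 1 * Real.log μ = phi μ - Real.log μ
  ring

lemma percoord_deriv {li t : ℝ} (hl : 0 < li) (ht : 0 < t) :
    HasDerivAt (fun u : ℝ => (1/2)*Real.log u - gg (u*li) + (u*li)*Real.log (u*li) - u*li)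
      (1/(2*t) - f (t*li)/t) t := by
  have htl : 0 < t * li := mul_pos ht hl
  have hlin : HasDerivAt (fun u : ℝ => u * li) li t := by
    simpa using (hasDerivAt_id t).mul_const li
  have h1 : HasDerivAt (fun u : ℝ => (1/2)*Real.log u) ((1/2) * t⁻¹) t :=
    (Real.hasDerivAt_log ht.ne').const_mul _
  have h2 : HasDerivAt (fun u : ℝ => gg (u*li)) (phi (t*li) * li) t :=
    (hasDerivAt_gg (t*li)).comp (h₂ := gg) t hlin
  have hlog : HasDerivAt (fun u : ℝ => Real.log (u*li)) ((t*li)⁻¹ * li) t :=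
    (Real.hasDerivAt_log htl.ne').comp (h₂ := Real.log) t hlin
  have h3 : HasDerivAt (fun u : ℝ => (u*li)*Real.log (u*li))
      (li * Real.log (t*li) + (t*li) * ((t*li)⁻¹ * li)) t := hlin.mul hlog
  have h := ((h1.sub h2).add h3).sub hlin
  refine h.congr_deriv ?_
  rw [f_eq htl]
  field_simp
  ring

lemma percoord_contOn {li : ℝ} (hl : 0 < li) {a b : ℝ} (ha : 0 < a) (hab : a ≤ b) :
    ContinuousOn (fun t => 1/(2*t) - f (t*li)/t) (Set.uIcc a b) := by
  rw [Set.uIcc_of_le hab]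
  have hpos : ∀ t ∈ Set.Icc a b, (0:ℝ) < t := fun t ht => lt_of_lt_of_le ha ht.1
  have hc1 : ContinuousOn (fun t : ℝ => 1/(2*t)) (Set.Icc a b) := by
    refine ContinuousOn.div continuousOn_const (by fun_prop) ?_
    intro t ht; have := hpos t ht; positivity
  have hc2 : ContinuousOn (fun t => f (t*li)/t) (Set.Icc a b) := by
    have hg : ContinuousOn (fun t => li * phi (t*li) - li * Real.log (t*li))
        (Set.Icc a b) := by
      refine ContinuousOn.sub ?_ ?_
      · exact (continuous_const.mul
          (continuous_phi.comp (continuous_id.mul continuous_const))).continuousOn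
      · refine ContinuousOn.mul continuousOn_const (ContinuousOn.log ?_ ?_)
        · exact (continuous_id.mul continuous_const).continuousOn
        · intro t ht
          exact (mul_pos (hpos t ht) hl).ne'
    refine hg.congr fun t ht => ?_
    have ht0 := hpos t ht
    rw [f_eq (mul_pos ht0 hl)]
    field_simp
  exact hc1.sub hc2

end Stmt6

open Stmt6

theorem stmt_6 (d : ℕ) (hd : 1 ≤ d) (r s : ℝ) (hr : 0 < r) (hs : 0 < s)
    (lam : Fin d → ℝ) (hlam : ∀ i, 0 < lam i) :
    klRisk d r s lam (fun x y => pJ d r s x y)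
      = ∫ t in r..(r + s), ∑ i, (1 / (2 * t) - f (t * lam i) / t) := by
  have hrs : (0:ℝ) < r + s := by linarith
  -- inner sum computation
  have hinner : ∀ x : Fin d → ℕ,
      (∑' y : Fin d → ℕ, poissonPMF d s lam y
          * Real.log (poissonPMF d s lam y / pJ d r s x y))
        = ∑ i, (-(s * lam i) + (s*lam i) * Real.log ((r+s) * lam i)
            + L (x i) - Wf (s*lam i) (x i) + ((x i : ℝ) + 1/2) * Real.log ((r+s)/r)) := by
    intro x
    have hps : ∀ i : Fin d, 0 < s * lam i := fun i => mul_pos hs (hlam i)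
    have hmain := hasSum_main (p := fun i => q (s * lam i))
      (h := fun i b => (-(s * lam i) + (b:ℝ) * Real.log ((r+s) * lam i)
          + L (x i) - L (x i + b) + ((x i : ℝ) + 1/2) * Real.log ((r+s)/r)))
      (fun i a => q_nonneg (hps i) a) (fun i => hasSum_q)
      (fun i => summable_q_mul_of_le (hps i)
        (C := (s * lam i + |Real.log ((r+s) * lam i)| + 2*((x i : ℝ)+1)^2
          + ((x i : ℝ)+1)*|Real.log ((r+s)/r)|))
        (fun b => by
          rw [abs_abs]
          exact hterm_abs_le (hps i) (x i) b))
    have heq1 : (∑' y : Fin d → ℕ, poissonPMF d s lam y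
          * Real.log (poissonPMF d s lam y / pJ d r s x y))
        = ∑' y : Fin d → ℕ, (∏ i, q (s * lam i) (y i)) *
            (∑ i, (-(s * lam i) + (y i:ℝ) * Real.log ((r+s) * lam i)
              + L (x i) - L (x i + y i) + ((x i : ℝ) + 1/2) * Real.log ((r+s)/r))) := by
      refine tsum_congr fun y => ?_
      rw [log_ratio d r s hr hs lam hlam x y]
      rfl
    rw [heq1, hmain.tsum_eq]
    exact Finset.sum_congr rfl fun i _ => (inner_hasSum hr hs (hlam i) (x i)).tsum_eq
  -- full left-hand side
  have hLHS : klRisk d r s lam (fun x y => pJ d r s x y)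
      = ∑ i, (-(s * lam i) + (s*lam i) * Real.log ((r+s) * lam i) + gg (r*lam i)
          - gg ((r+s)*lam i) + (r*lam i + 1/2) * Real.log ((r+s)/r)) := by
    have hpr : ∀ i : Fin d, 0 < r * lam i := fun i => mul_pos hr (hlam i)
    have hmain := hasSum_main (p := fun i => q (r * lam i))
      (h := fun i a => (-(s * lam i) + (s*lam i) * Real.log ((r+s) * lam i)
          + L a - Wf (s*lam i) a + ((a : ℝ) + 1/2) * Real.log ((r+s)/r)))
      (fun i a => q_nonneg (hpr i) a) (fun i => hasSum_q)
      (fun i => summable_q_mul_of_le (hpr i)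
        (C := (|(-(s * lam i) + (s*lam i) * Real.log ((r+s) * lam i))| + 1
          + (∑' b, q (s*lam i) b * ((b:ℝ)+1)^2) + |Real.log ((r+s)/r)|))
        (fun a => by rw [abs_abs]; exact Hval_abs_le hr hs (hlam i) a))
    have hstep1 : klRisk d r s lam (fun x y => pJ d r s x y)
        = ∑' x : Fin d → ℕ, (∏ i, q (r * lam i) (x i)) *
            (∑ i, (-(s * lam i) + (s*lam i) * Real.log ((r+s) * lam i)
              + L (x i) - Wf (s*lam i) (x i) + ((x i : ℝ) + 1/2) * Real.log ((r+s)/r))) := by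
      unfold klRisk
      refine tsum_congr fun x => ?_
      rw [hinner x]
      rfl
    rw [hstep1, hmain.tsum_eq]
    exact Finset.sum_congr rfl fun i _ => (outer_hasSum hr hs (hlam i)).tsum_eq
  -- right-hand side via FTC
  have hderiv : ∀ t ∈ Set.uIcc r (r+s),
      HasDerivAt (fun u => ∑ i, ((1/2)*Real.log u - gg (u*lam i)
          + (u*lam i)*Real.log (u*lam i) - u*lam i))
        (∑ i, (1 / (2 * t) - f (t * lam i) / t)) t := by
    intro t ht
    rw [Set.uIcc_of_le (by linarith : r ≤ r + s)] at ht
    have ht0 : 0 < t := lt_of_lt_of_le hr ht.1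
    exact HasDerivAt.fun_sum fun i _ => percoord_deriv (hlam i) ht0
  have hintg : IntervalIntegrable (fun t => ∑ i, (1 / (2 * t) - f (t * lam i) / t))
      MeasureTheory.volume r (r+s) := by
    refine ContinuousOn.intervalIntegrable ?_
    exact continuousOn_finset_sum _ fun i _ =>
      percoord_contOn (hlam i) hr (by linarith : r ≤ r + s)
  have hint := intervalIntegral.integral_eq_sub_of_hasDerivAt hderiv hintg
  rw [hLHS, hint, ← Finset.sum_sub_distrib]
  refine Finset.sum_congr rfl fun i _ => ?_
  have hli := hlam i
  have l1 : Real.log ((r+s) * lam i) = Real.log (r+s) + Real.log (lam i) :=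
    Real.log_mul hrs.ne' hli.ne'
  have l2 : Real.log (r * lam i) = Real.log r + Real.log (lam i) :=
    Real.log_mul hr.ne' hli.ne'
  have l3 : Real.log ((r+s)/r) = Real.log (r+s) - Real.log r :=
    Real.log_div hrs.ne' hr.ne'
  rw [l1, l2, l3]
  ring
end

section
/- For all real numbers x > 0, t > 0, and s > 0, −(x+t+1)·log(1 + (s/(1+s))·(−2t)/(x+2t+1)) − s·x·log(1 + (1/(1+s))·(2t)/x) > 0. -/
lemma pade_lower (w : ℝ) (hw : 0 ≤ w) : 2 * w / (2 + w) ≤ Real.log (1 + w) := by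
  have hd : ∀ y : ℝ, 0 ≤ y → HasDerivAt (fun z => Real.log (1 + z) - 2 * z / (2 + z))
      (1 / (1 + y) - (2 * (2 + y) - 2 * y * 1) / (2 + y) ^ 2) y := by
    intro y hy
    have h1 : HasDerivAt (fun z : ℝ => 1 + z) 1 y := (hasDerivAt_id y).const_add 1
    have hne : (1 : ℝ) + y ≠ 0 := by linarith
    have hl : HasDerivAt (fun z : ℝ => Real.log (1 + z)) (1 / (1 + y)) y := by
      simpa [one_div] using h1.log hne
    have hn : HasDerivAt (fun z : ℝ => 2 * z) 2 y := by
      simpa using (hasDerivAt_id y).const_mul 2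
    have hm : HasDerivAt (fun z : ℝ => 2 + z) 1 y := (hasDerivAt_id y).const_add 2
    have hne2 : (2 : ℝ) + y ≠ 0 := by linarith
    exact hl.sub (hn.div hm hne2)
  have mono : MonotoneOn (fun z => Real.log (1 + z) - 2 * z / (2 + z)) (Set.Ici (0:ℝ)) := by
    apply monotoneOn_of_deriv_nonneg (convex_Ici 0)
    · intro y hy
      exact ((hd y hy).continuousAt.continuousWithinAt)
    · intro y hy
      rw [interior_Ici] at hy
      exact (hd y (le_of_lt (Set.mem_Ioi.mp hy))).differentiableAt.differentiableWithinAt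
    · intro y hy
      rw [interior_Ici] at hy
      have hy' : 0 < y := hy
      rw [(hd y (le_of_lt hy')).deriv]
      have h1 : (0:ℝ) < 1 + y := by linarith
      have h2 : (0:ℝ) < 2 + y := by linarith
      rw [sub_nonneg, div_le_div_iff₀ (by positivity) h1]
      nlinarith [sq_nonneg y]
  have h := mono (Set.self_mem_Ici) (Set.mem_Ici.mpr hw) hw
  simp only [mul_zero, zero_div, add_zero, sub_zero, Real.log_one] at h
  norm_num at h
  linarith

lemma pade_upper (w : ℝ) (hw : 0 ≤ w) : Real.log (1 + w) ≤ w * (2 + w) / (2 * (1 + w)) := by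
  have hd : ∀ y : ℝ, 0 ≤ y → HasDerivAt (fun z => z * (2 + z) / (2 * (1 + z)) - Real.log (1 + z))
      (((1 * (2 + y) + y * 1) * (2 * (1 + y)) - y * (2 + y) * 2) / (2 * (1 + y)) ^ 2
        - 1 / (1 + y)) y := by
    intro y hy
    have h1 : HasDerivAt (fun z : ℝ => 1 + z) 1 y := (hasDerivAt_id y).const_add 1
    have hne : (1 : ℝ) + y ≠ 0 := by linarith
    have hl : HasDerivAt (fun z : ℝ => Real.log (1 + z)) (1 / (1 + y)) y := by
      simpa [one_div] using h1.log hne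
    have hn : HasDerivAt (fun z : ℝ => z * (2 + z)) (1 * (2 + y) + y * 1) y :=
      (hasDerivAt_id y).mul ((hasDerivAt_id y).const_add 2)
    have hm : HasDerivAt (fun z : ℝ => 2 * (1 + z)) 2 y := by
      simpa using ((hasDerivAt_id y).const_add 1).const_mul 2
    have hne2 : 2 * ((1:ℝ) + y) ≠ 0 := by positivity
    exact (hn.div hm hne2).sub hl
  have mono : MonotoneOn (fun z => z * (2 + z) / (2 * (1 + z)) - Real.log (1 + z))
      (Set.Ici (0:ℝ)) := by
    apply monotoneOn_of_deriv_nonneg (convex_Ici 0)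
    · intro y hy
      exact ((hd y hy).continuousAt.continuousWithinAt)
    · intro y hy
      rw [interior_Ici] at hy
      exact (hd y (le_of_lt (Set.mem_Ioi.mp hy))).differentiableAt.differentiableWithinAt
    · intro y hy
      rw [interior_Ici] at hy
      have hy' : 0 < y := hy
      rw [(hd y (le_of_lt hy')).deriv]
      have h1 : (0:ℝ) < 1 + y := by linarith
      rw [sub_nonneg, div_le_div_iff₀ h1 (by positivity)]
      nlinarith [sq_nonneg y]
  have h := mono (Set.self_mem_Ici) (Set.mem_Ici.mpr hw) hw
  simp only [mul_zero, zero_div, zero_mul, add_zero, sub_zero, Real.log_one] at h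
  norm_num at h
  linarith

theorem stmt_9 (x t s : ℝ) (hx : 0 < x) (ht : 0 < t) (hs : 0 < s) :
    -(x + t + 1) * Real.log (1 + (s / (1 + s)) * (-2 * t) / (x + 2 * t + 1))
      - s * x * Real.log (1 + (1 / (1 + s)) * (2 * t) / x) > 0 := by
  have hs1 : (0:ℝ) < 1 + s := by linarith
  set u : ℝ := 2 * t / (1 + s) with hu_def
  have hu : (1 + s) * u = 2 * t := by
    rw [hu_def]; field_simp
  have hupos : 0 < u := by rw [hu_def]; positivity
  have hult : u < 2 * t := by nlinarith
  have hsu : s * u = 2 * t - u := by nlinarith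
  set w₁ : ℝ := s * u / (x + u + 1) with hw1_def
  set w₂ : ℝ := u / x with hw2_def
  have hxu1 : (0:ℝ) < x + u + 1 := by linarith
  have hw1pos : 0 < w₁ := by rw [hw1_def]; positivity
  have hw2pos : 0 < w₂ := by rw [hw2_def]; positivity
  have h2t : (0:ℝ) < x + 2 * t + 1 := by linarith
  -- rewrite the two log arguments
  have e1 : Real.log (1 + s / (1 + s) * (-2 * t) / (x + 2 * t + 1)) = -Real.log (1 + w₁) := by
    rw [← Real.log_inv]
    congr 1
    rw [hw1_def, hu_def]
    have hY : x + 2 * t / (1 + s) + 1 ≠ 0 := by positivity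
    have hZ : (1:ℝ) + s * (2 * t / (1 + s)) / (x + 2 * t / (1 + s) + 1) ≠ 0 := by positivity
    field_simp
    ring
  have e2 : Real.log (1 + 1 / (1 + s) * (2 * t) / x) = Real.log (1 + w₂) := by
    congr 1
    rw [hw2_def, hu_def]
    field_simp
  have l1 : 2 * w₁ / (2 + w₁) ≤ Real.log (1 + w₁) := pade_lower _ hw1pos.le
  have l2 : Real.log (1 + w₂) ≤ w₂ * (2 + w₂) / (2 * (1 + w₂)) := pade_upper _ hw2pos.le
  have hcore : (2 * x + u) * (2 * x + u + 2 * t + 2) < 4 * (x + t + 1) * (x + u) := by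
    nlinarith [mul_pos hupos (show (0:ℝ) < 2 * t + 2 - u by linarith)]
  have eL : s * x * (w₂ * (2 + w₂) / (2 * (1 + w₂))) = s * u * (2 * x + u) / (2 * (x + u)) := by
    rw [hw2_def]
    field_simp
  have hden : (0:ℝ) < 2 * (x + u + 1) + s * u := by positivity
  have eR : (x + t + 1) * (2 * w₁ / (2 + w₁)) =
      2 * (x + t + 1) * (s * u) / (2 * (x + u + 1) + s * u) := by
    rw [hw1_def]
    have h2w : (2:ℝ) + s * u / (x + u + 1) ≠ 0 := by positivity
    field_simp
  rw [e1, e2]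
  have m1 : (x + t + 1) * (2 * w₁ / (2 + w₁)) ≤ (x + t + 1) * Real.log (1 + w₁) :=
    mul_le_mul_of_nonneg_left l1 (by linarith)
  have m2 : s * x * Real.log (1 + w₂) ≤ s * x * (w₂ * (2 + w₂) / (2 * (1 + w₂))) :=
    mul_le_mul_of_nonneg_left l2 (by positivity)
  have key : s * u * (2 * x + u) / (2 * (x + u)) <
      2 * (x + t + 1) * (s * u) / (2 * (x + u + 1) + s * u) := by
    rw [div_lt_div_iff₀ (by positivity) hden]
    have h5 : s * u * ((2 * x + u) * (2 * (x + u + 1) + s * u)) <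
        s * u * (4 * (x + t + 1) * (x + u)) := by
      have hrw : (2 * x + u) * (2 * (x + u + 1) + s * u)
          = (2 * x + u) * (2 * x + u + 2 * t + 2) := by rw [hsu]; ring
      rw [hrw]
      exact mul_lt_mul_of_pos_left hcore (mul_pos hs hupos)
    nlinarith [h5]
  rw [eL] at m2
  rw [eR] at m1
  nlinarith [key, m1, m2]
end

section
/- For every real α > 0, the function y ↦ y·log(1 + α/y) + α²/(2(y+α)) is strictly increasing on (0,∞). -/
open Real Set

lemma aux_gderiv (s : ℝ) (hs : 0 < s) :
    HasDerivAt (fun u : ℝ => Real.log (1 + u) - u / (1 + u) - u ^ 2 / (2 * (1 + u) ^ 2))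
      (s ^ 2 / (1 + s) ^ 3) s := by
  have h1 : (0:ℝ) < 1 + s := by linarith
  have hd1 : HasDerivAt (fun u : ℝ => 1 + u) 1 s := (hasDerivAt_id s).const_add 1
  have hlog : HasDerivAt (fun u : ℝ => Real.log (1 + u)) (1 / (1 + s)) s :=
    hd1.log h1.ne'
  have hq1 : HasDerivAt (fun u : ℝ => u / (1 + u))
      ((1 * (1 + s) - s * 1) / (1 + s) ^ 2) s :=
    (hasDerivAt_id s).div hd1 h1.ne'
  have hden : HasDerivAt (fun u : ℝ => 2 * (1 + u) ^ 2)
      (2 * ((2 : ℕ) * (1 + s) ^ 1 * 1)) s := (hd1.pow 2).const_mul 2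
  have hnum : HasDerivAt (fun u : ℝ => u ^ 2) ((2:ℕ) * s ^ 1) s := hasDerivAt_pow 2 s
  have hden_ne : 2 * (1 + s) ^ 2 ≠ 0 := by positivity
  have hq2 : HasDerivAt (fun u : ℝ => u ^ 2 / (2 * (1 + u) ^ 2))
      (((2:ℕ) * s ^ 1 * (2 * (1 + s) ^ 2) - s ^ 2 * (2 * ((2 : ℕ) * (1 + s) ^ 1 * 1))) /
        (2 * (1 + s) ^ 2) ^ 2) s := hnum.div hden hden_ne
  have h := (hlog.sub hq1).sub hq2
  refine h.congr_deriv ?_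
  have : (1 + s) ≠ 0 := h1.ne'
  field_simp
  ring

lemma aux_ineq (t : ℝ) (ht : 0 < t) :
    0 < Real.log (1 + t) - t / (1 + t) - t ^ 2 / (2 * (1 + t) ^ 2) := by
  set g : ℝ → ℝ := fun u => Real.log (1 + u) - u / (1 + u) - u ^ 2 / (2 * (1 + u) ^ 2) with hg
  have hmono : StrictMonoOn g (Ici (0:ℝ)) := by
    apply strictMonoOn_of_deriv_pos (convex_Ici 0)
    · apply ContinuousOn.sub
      apply ContinuousOn.sub
      · exact ((continuous_const.add continuous_id).continuousOn).log
          (fun u hu => by simp only [mem_Ici] at hu; simp only [Pi.add_apply, id]; positivity)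
      · exact continuous_id.continuousOn.div
          ((continuous_const.add continuous_id).continuousOn)
          (fun u hu => by simp only [mem_Ici] at hu; positivity)
      · exact (continuous_pow 2).continuousOn.div
          (continuous_const.mul ((continuous_const.add continuous_id).pow 2)).continuousOn
          (fun u hu => by simp only [mem_Ici] at hu; positivity)
    · intro x hx
      rw [interior_Ici] at hx
      rw [(aux_gderiv x hx).deriv]
      have h1x : (0:ℝ) < 1 + x := by linarith [mem_Ioi.mp hx]
      exact div_pos (pow_pos (mem_Ioi.mp hx) 2) (pow_pos h1x 3)
  have h0 : g 0 = 0 := by simp [hg]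
  have := hmono (self_mem_Ici) (mem_Ici.mpr ht.le) ht
  rw [h0] at this
  exact this

lemma main_deriv (α : ℝ) (hα : 0 < α) (x : ℝ) (hx : 0 < x) :
    HasDerivAt (fun y : ℝ => y * Real.log (1 + α / y) + α ^ 2 / (2 * (y + α)))
      (Real.log (1 + α / x) - α / (x + α) - α ^ 2 / (2 * (x + α) ^ 2)) x := by
  have hxa : (0:ℝ) < x + α := by linarith
  have h1pos : (0:ℝ) < 1 + α / x := by positivity
  have hdivx : HasDerivAt (fun y : ℝ => α / y) ((0 * x - α * 1) / x ^ 2) x :=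
    (hasDerivAt_const x α).div (hasDerivAt_id x) hx.ne'
  have h1 : HasDerivAt (fun y : ℝ => 1 + α / y) ((0 * x - α * 1) / x ^ 2) x :=
    hdivx.const_add 1
  have hlog : HasDerivAt (fun y : ℝ => Real.log (1 + α / y))
      (((0 * x - α * 1) / x ^ 2) / (1 + α / x)) x := h1.log h1pos.ne'
  have hterm1 : HasDerivAt (fun y : ℝ => y * Real.log (1 + α / y))
      (1 * Real.log (1 + α / x) + x * (((0 * x - α * 1) / x ^ 2) / (1 + α / x))) x :=
    (hasDerivAt_id x).mul hlog
  have hden : HasDerivAt (fun y : ℝ => 2 * (y + α)) (2 * 1) x :=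
    ((hasDerivAt_id x).add_const α).const_mul 2
  have hden_ne : 2 * (x + α) ≠ 0 := by positivity
  have hterm2 : HasDerivAt (fun y : ℝ => α ^ 2 / (2 * (y + α)))
      ((0 * (2 * (x + α)) - α ^ 2 * (2 * 1)) / (2 * (x + α)) ^ 2) x :=
    (hasDerivAt_const x (α ^ 2)).div hden hden_ne
  have h := hterm1.add hterm2
  refine h.congr_deriv ?_
  have h1ne : (1 + α / x) ≠ 0 := h1pos.ne'
  field_simp
  ring

theorem stmt_10 (α : ℝ) (hα : 0 < α) :
    StrictMonoOn (fun y : ℝ => y * Real.log (1 + α / y) + α ^ 2 / (2 * (y + α)))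
      (Set.Ioi 0) := by
  apply strictMonoOn_of_deriv_pos (convex_Ioi 0)
  · intro x hx
    exact (main_deriv α hα x (mem_Ioi.mp hx)).continuousAt.continuousWithinAt
  · intro x hx
    rw [interior_Ioi] at hx
    have hx' : (0:ℝ) < x := mem_Ioi.mp hx
    rw [(main_deriv α hα x hx').deriv]
    have ht : 0 < α / x := by positivity
    have key := aux_ineq (α / x) ht
    have hxa : (0:ℝ) < x + α := by linarith
    have e1 : (α / x) / (1 + α / x) = α / (x + α) := by
      field_simp
    have e2 : (α / x) ^ 2 / (2 * (1 + α / x) ^ 2) = α ^ 2 / (2 * (x + α) ^ 2) := by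
      field_simp
    rw [e1, e2] at key
    exact key
end

section
/- For all real numbers x > 0, t > 0, and s with 0 < s ≤ 1, −s(1−s)/(x+2t+1) + ((1−s)x + t + 1) / ( (x + 2t/(1+s)) · ((x+t+1)/s + 2t/(1+s)) ) > 0. -/
theorem stmt_11 (x t s : ℝ) (hx : 0 < x) (ht : 0 < t) (hs0 : 0 < s) (hs1 : s ≤ 1) :
    -(s * (1 - s)) / (x + 2 * t + 1)
      + ((1 - s) * x + t + 1) /
        ((x + 2 * t / (1 + s)) * ((x + t + 1) / s + 2 * t / (1 + s))) > 0 := by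
  have h1s : (0:ℝ) < 1 + s := by linarith
  have hD1 : (0:ℝ) < x + 2 * t + 1 := by linarith
  have hA : (0:ℝ) < x + 2 * t / (1 + s) := by positivity
  have hB : (0:ℝ) < (x + t + 1) / s + 2 * t / (1 + s) := by positivity
  rw [gt_iff_lt, neg_div, neg_add_eq_sub, sub_pos, div_lt_div_iff₀ hD1 (by positivity)]
  have key : s * (1 - s) * ((x + 2 * t / (1 + s)) * ((x + t + 1) / s + 2 * t / (1 + s)))
      = (1 - s) * ((x * (1 + s) + 2 * t) * ((x + t + 1) * (1 + s) + 2 * t * s)) / (1 + s) ^ 2 := by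
    field_simp
  rw [key, div_lt_iff₀ (by positivity)]
  nlinarith [sq_nonneg (1 - s), sq_nonneg s, mul_pos hx ht, mul_pos hx hx, mul_pos ht ht,
    mul_nonneg (mul_nonneg (sub_nonneg.2 hs1) hs0.le) hx.le,
    mul_nonneg (sub_nonneg.2 hs1) hx.le, mul_nonneg (sub_nonneg.2 hs1) ht.le,
    mul_pos (mul_pos hx ht) hs0, mul_pos hs0 ht, mul_pos hs0 hx]
end

section
/- For all real numbers x > 0, t > 0, and s ≥ 1, (2/(1+s)²)·t/(x+2t+1 − (2s/(1+s))t) + (2s/(1+s)²)·t/(x+t+1 + 2t/(1+s)) − log(1 + 2t/((1+s)(x+t+1))) > 0. -/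
lemma trapezoid_log (u : ℝ) (hu : 0 < u) :
    Real.log (1 + u) < u * (2 + u) / (2 * (1 + u)) := by
  set g : ℝ → ℝ := fun w => w / 2 - 1 / (2 * (1 + w)) - Real.log (1 + w) with hg
  have hmono : StrictMonoOn g (Set.Ici 0) := by
    apply strictMonoOn_of_deriv_pos (convex_Ici 0)
    · apply ContinuousOn.sub
      apply ContinuousOn.sub
      · exact (continuousOn_id.div_const 2)
      · apply ContinuousOn.div continuousOn_const
        · fun_prop
        · intro w hw
          simp only [Set.mem_Ici] at hw
          positivity
      · apply ContinuousOn.log (by fun_prop)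
        intro w hw
        simp only [Set.mem_Ici] at hw
        positivity
    · intro w hw
      rw [interior_Ici, Set.mem_Ioi] at hw
      have h1w : (0:ℝ) < 1 + w := by linarith
      have h1 : HasDerivAt (fun w : ℝ => 1 + w) 1 w := by
        simpa using (hasDerivAt_id w).const_add 1
      have hlog : HasDerivAt (fun w : ℝ => Real.log (1 + w)) (1 / (1 + w)) w := by
        simpa using h1.log h1w.ne'
      have h2 : HasDerivAt (fun w : ℝ => 2 * (1 + w)) 2 w := by
        simpa using h1.const_mul 2
      have hinv : HasDerivAt (fun w : ℝ => 1 / (2 * (1 + w))) (-2 / (2 * (1 + w)) ^ 2) w := by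
        simpa only [one_div] using h2.fun_inv (by positivity : (0:ℝ) < 2 * (1 + w)).ne'
      have hid : HasDerivAt (fun w : ℝ => w / 2) (1 / 2) w := by
        simpa using (hasDerivAt_id w).div_const 2
      have hG : HasDerivAt g (1 / 2 - -2 / (2 * (1 + w)) ^ 2 - 1 / (1 + w)) w :=
        (hid.sub hinv).sub hlog
      rw [hG.deriv]
      have : 1 / 2 - -2 / (2 * (1 + w)) ^ 2 - 1 / (1 + w)
          = w ^ 2 / (2 * (1 + w) ^ 2) := by
        field_simp
        ring
      rw [this]
      positivity
  have h0 : g 0 < g u := hmono (by simp) (le_of_lt hu) hu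
  have hg0 : g 0 = -(1 / 2) := by simp [hg]
  have h1u : (0:ℝ) < 1 + u := by linarith
  rw [hg0, hg] at h0
  simp only at h0
  have hmul := mul_lt_mul_of_pos_right h0 (show (0:ℝ) < 2 * (1 + u) by positivity)
  have hinv1 : 1 / (2 * (1 + u)) * (2 * (1 + u)) = 1 := by field_simp
  rw [lt_div_iff₀ (by positivity : (0:ℝ) < 2 * (1 + u))]
  nlinarith [hmul, hinv1]

set_option maxHeartbeats 1000000 in
theorem stmt_12 (x t s : ℝ) (hx : 0 < x) (ht : 0 < t) (hs : 1 ≤ s) :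
    (2 / (1 + s) ^ 2) * t / (x + 2 * t + 1 - (2 * s / (1 + s)) * t)
      + (2 * s / (1 + s) ^ 2) * t / (x + t + 1 + 2 * t / (1 + s))
      - Real.log (1 + 2 * t / ((1 + s) * (x + t + 1))) > 0 := by
  have hs1 : (0:ℝ) < 1 + s := by linarith
  have hA : (0:ℝ) < x + t + 1 := by linarith
  have hu : (0:ℝ) < 2 * t / ((1 + s) * (x + t + 1)) := by positivity
  have hlog := trapezoid_log (2 * t / ((1 + s) * (x + t + 1))) hu
  have hQ1 : (0:ℝ) < (1 + s) * (x + 2 * t + 1) - 2 * s * t := by nlinarith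
  have hQ2 : (0:ℝ) < (1 + s) * (x + t + 1) + 2 * t := by nlinarith
  have key : (2 / (1 + s) ^ 2) * t / (x + 2 * t + 1 - (2 * s / (1 + s)) * t)
      + (2 * s / (1 + s) ^ 2) * t / (x + t + 1 + 2 * t / (1 + s))
      - (2 * t / ((1 + s) * (x + t + 1))) * (2 + 2 * t / ((1 + s) * (x + t + 1)))
          / (2 * (1 + 2 * t / ((1 + s) * (x + t + 1))))
      = 2 * t ^ 3 * (s - 1) / ((1 + s) * (x + t + 1)
        * ((1 + s) * (x + 2 * t + 1) - 2 * s * t) * ((1 + s) * (x + t + 1) + 2 * t)) := by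
    have e1 : x + 2 * t + 1 - (2 * s / (1 + s)) * t
        = ((1 + s) * (x + 2 * t + 1) - 2 * s * t) / (1 + s) := by field_simp
    have e2 : x + t + 1 + 2 * t / (1 + s) = ((1 + s) * (x + t + 1) + 2 * t) / (1 + s) := by
      field_simp
    have e3 : 1 + 2 * t / ((1 + s) * (x + t + 1))
        = ((1 + s) * (x + t + 1) + 2 * t) / ((1 + s) * (x + t + 1)) := by field_simp
    rw [e1, e2, e3]
    field_simp
    ring
  have hrem : 0 ≤ 2 * t ^ 3 * (s - 1) / ((1 + s) * (x + t + 1)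
      * ((1 + s) * (x + 2 * t + 1) - 2 * s * t) * ((1 + s) * (x + t + 1) + 2 * t)) := by
    apply div_nonneg
    · have : 0 ≤ s - 1 := by linarith
      positivity
    · positivity
  linarith
end

section
/- For every real λ > 0, the function h(λ) = Σ_{x=0}^∞ log(x+1/2)·e^{-λ}λ^x/x! − log λ is differentiable at λ, with derivative h'(λ) = Σ_{x=0}^∞ log((x+3/2)/(x+1/2))·e^{-λ}λ^x/x! − 1/λ. -/
open Real

private lemma sum_fac (r : ℝ) (C : ℝ) (f : ℕ → ℝ)
    (h : ∀ n, ‖f n‖ ≤ C * (r ^ n / (Nat.factorial n : ℝ))) : Summable f :=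
  Summable.of_norm (Summable.of_nonneg_of_le (fun n => norm_nonneg _) h
    ((Real.summable_pow_div_factorial r).mul_left C))

private lemma log_half_le (n : ℕ) : |Real.log ((n : ℝ) + 1 / 2)| ≤ 2 ^ n := by
  rcases n with _ | m
  · simp only [Nat.cast_zero, zero_add, pow_zero]
    rw [show (1:ℝ)/2 = 2⁻¹ by norm_num, Real.log_inv, abs_neg,
      abs_of_nonneg (Real.log_nonneg (by norm_num))]
    linarith [Real.log_two_lt_d9]
  · have hm : (0:ℝ) ≤ (m:ℝ) := Nat.cast_nonneg m
    have h1 : (1:ℝ) ≤ (m : ℝ) + 1 + 1/2 := by linarith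
    rw [Nat.cast_succ, abs_of_nonneg (Real.log_nonneg h1)]
    have := Real.log_le_sub_one_of_pos (x := (m : ℝ) + 1 + 1/2) (by linarith)
    have h2 : ((m:ℕ):ℝ) + 1 ≤ 2 ^ (m+1) := by
      have hlt : (m : ℝ) < 2 ^ m := by exact_mod_cast Nat.lt_two_pow_self (n := m)
      have h3 : (1:ℝ) ≤ 2 ^ m := one_le_pow₀ (by norm_num)
      rw [pow_succ]
      nlinarith
    linarith

private lemma log_3half_le (n : ℕ) : |Real.log ((n : ℝ) + 3 / 2)| ≤ 2 ^ n * 2 := by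
  have hm : (0:ℝ) ≤ (n:ℝ) := Nat.cast_nonneg n
  have h1 : (1:ℝ) ≤ (n : ℝ) + 3/2 := by linarith
  rw [abs_of_nonneg (Real.log_nonneg h1)]
  have := Real.log_le_sub_one_of_pos (x := (n : ℝ) + 3/2) (by linarith)
  have hlt : (n : ℝ) < 2 ^ n := by exact_mod_cast Nat.lt_two_pow_self (n := n)
  have h3 : (1:ℝ) ≤ 2 ^ n := one_le_pow₀ (by norm_num)
  nlinarith

theorem stmt_13 (lam : ℝ) (hlam : 0 < lam) :
    HasDerivAt
      (fun μ : ℝ => (∑' x : ℕ, Real.log ((x : ℝ) + 1 / 2) * Real.exp (-μ) * μ ^ x / (Nat.factorial x : ℝ)) - Real.log μ)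
      ((∑' x : ℕ, Real.log (((x : ℝ) + 3 / 2) / ((x : ℝ) + 1 / 2)) * Real.exp (-lam) * lam ^ x / (Nat.factorial x : ℝ))
        - 1 / lam)
      lam := by
  set R : ℝ := lam + 1 with hR
  have hR1 : (1:ℝ) ≤ R := by linarith
  have hR0 : (0:ℝ) < R := by linarith
  set g : ℕ → ℝ → ℝ := fun n μ => Real.log ((n : ℝ) + 1 / 2) * Real.exp (-μ) * μ ^ n / (Nat.factorial n : ℝ) with hg_def
  set g' : ℕ → ℝ → ℝ := fun n μ => Real.log ((n : ℝ) + 1 / 2) *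
      (Real.exp (-μ) * ((n : ℝ) * μ ^ (n - 1)) - Real.exp (-μ) * μ ^ n) / (Nat.factorial n : ℝ) with hg'_def
  set u : ℕ → ℝ := fun n => 2 * ((4 * R) ^ n / (Nat.factorial n : ℝ)) with hu_def
  have hu : Summable u := (Real.summable_pow_div_factorial (4 * R)).mul_left 2
  have hderiv : ∀ n (y : ℝ), HasDerivAt (g n) (g' n y) y := by
    intro n y
    have h1 : HasDerivAt (fun μ : ℝ => Real.exp (-μ)) (-Real.exp (-y)) y := by
      have := (Real.hasDerivAt_exp (-y)).comp y (hasDerivAt_neg y)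
      simpa [Function.comp_def] using this
    have h2 := (h1.mul (hasDerivAt_pow n y)).const_mul (Real.log ((n : ℝ) + 1 / 2))
    have h3 := h2.div_const (Nat.factorial n : ℝ)
    convert h3 using 1
    · rfl
    · rfl
    · funext x
      simp only [hg_def, Pi.mul_apply]
      ring
    · simp only [hg'_def]
      ring
  have hbound : ∀ n (y : ℝ), y ∈ Set.Ioo (0:ℝ) R → ‖g' n y‖ ≤ u n := by
    intro n y hy
    obtain ⟨hy0, hyR⟩ := hy
    have hy0' : (0:ℝ) ≤ y := le_of_lt hy0
    have hyR' : y ≤ R := le_of_lt hyR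
    have he : Real.exp (-y) ≤ 1 := Real.exp_le_one_iff.mpr (by linarith)
    have he0 : (0:ℝ) ≤ Real.exp (-y) := (Real.exp_pos _).le
    have hfac : (0:ℝ) < (Nat.factorial n : ℝ) := by positivity
    rw [hg'_def]
    simp only [norm_div, norm_mul, Real.norm_eq_abs]
    rw [abs_of_pos hfac, div_le_iff₀ hfac]
    have habs : |Real.exp (-y) * ((n : ℝ) * y ^ (n - 1)) - Real.exp (-y) * y ^ n| ≤
        (n : ℝ) * y ^ (n - 1) + y ^ n := by
      have h1 : (0:ℝ) ≤ y ^ (n-1) := by positivity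
      have h2 : (0:ℝ) ≤ y ^ n := by positivity
      refine (abs_sub _ _).trans ?_
      rw [abs_of_nonneg (by positivity), abs_of_nonneg (by positivity)]
      have := mul_le_of_le_one_left (mul_nonneg (Nat.cast_nonneg n : (0:ℝ) ≤ n) h1) he
      nlinarith [mul_le_of_le_one_left h2 he]
    have hterm : (n : ℝ) * y ^ (n - 1) + y ^ n ≤ 2 ^ n * R ^ n * 2 := by
      have hyn : y ^ n ≤ R ^ n := pow_le_pow_left₀ hy0' hyR' n
      have hyn1 : y ^ (n-1) ≤ R ^ (n-1) := pow_le_pow_left₀ hy0' hyR' (n-1)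
      have hRn1 : R ^ (n-1) ≤ R ^ n := pow_le_pow_right₀ hR1 (Nat.sub_le n 1)
      have hn2 : (n : ℝ) ≤ 2 ^ n := le_of_lt (by exact_mod_cast Nat.lt_two_pow_self (n := n))
      have hRp : (0:ℝ) ≤ R ^ n := by positivity
      have h1 : (1:ℝ) ≤ 2 ^ n := one_le_pow₀ (by norm_num)
      nlinarith [pow_nonneg hy0' (n-1), pow_nonneg hy0' n, Nat.cast_nonneg (α := ℝ) n]
    calc |Real.log ((n:ℝ) + 1/2)| * |Real.exp (-y) * ((n : ℝ) * y ^ (n - 1)) - Real.exp (-y) * y ^ n|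
        ≤ 2 ^ n * (2 ^ n * R ^ n * 2) := by
          apply mul_le_mul (log_half_le n) (habs.trans hterm) (abs_nonneg _) (by positivity)
      _ = u n * (Nat.factorial n : ℝ) := by
          have h4 : ((4:ℝ)*R)^n = 2^n*(2^n*R^n) := by
            rw [mul_pow, show (4:ℝ)=2*2 by norm_num, mul_pow, mul_assoc]
          simp only [hu_def]
          rw [h4]
          field_simp
  have hsum0 : Summable fun n => g n lam := by
    apply sum_fac (2 * lam) 1
    intro n
    have hfac : (0:ℝ) < (Nat.factorial n : ℝ) := by positivity
    rw [hg_def]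
    simp only [norm_div, norm_mul, Real.norm_eq_abs, one_mul]
    rw [abs_of_pos hfac]
    gcongr ?_ / _
    calc |Real.log ((n:ℝ) + 1/2)| * |Real.exp (-lam)| * |lam ^ n|
        ≤ 2 ^ n * 1 * lam ^ n := by
          rw [abs_of_pos (Real.exp_pos _), abs_of_pos (pow_pos hlam n)]
          apply mul_le_mul_of_nonneg_right _ (pow_pos hlam n).le
          exact mul_le_mul (log_half_le n) (Real.exp_le_one_iff.mpr (by linarith)) (Real.exp_pos _).le (by positivity)
      _ = (2 * lam) ^ n := by rw [mul_pow]; ring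
  have hmem : lam ∈ Set.Ioo (0:ℝ) R := ⟨hlam, by linarith⟩
  have hmain : HasDerivAt (fun z => ∑' n, g n z) (∑' n, g' n lam) lam :=
    hasDerivAt_tsum_of_isPreconnected hu isOpen_Ioo (convex_Ioo _ _).isPreconnected
      (fun n y _ => hderiv n y) hbound hmem hsum0 hmem
  have hlog : HasDerivAt Real.log (1 / lam) lam := by
    simpa [one_div] using Real.hasDerivAt_log (ne_of_gt hlam)
  have hfinal := hmain.sub hlog
  convert hfinal using 2
  · rfl
  · rfl
  · rfl
  set C : ℕ → ℝ := fun n => Real.log ((n:ℝ) + 3/2) * Real.exp (-lam) * lam ^ n / (Nat.factorial n : ℝ) with hC_def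
  set B : ℕ → ℝ := fun n => Real.log ((n:ℝ) + 1/2) * (Real.exp (-lam) * ((n:ℝ) * lam ^ (n-1))) / (Nat.factorial n : ℝ) with hB_def
  have hsumC : Summable C := by
    apply sum_fac (2 * lam) 2
    intro n
    have hfac : (0:ℝ) < (Nat.factorial n : ℝ) := by positivity
    simp only [hC_def, norm_div, norm_mul, Real.norm_eq_abs]
    rw [abs_of_pos hfac, ← mul_div_assoc]
    gcongr ?_ / _
    calc |Real.log ((n:ℝ) + 3/2)| * |Real.exp (-lam)| * |lam ^ n|
        ≤ (2 ^ n * 2) * 1 * lam ^ n := by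
          rw [abs_of_pos (Real.exp_pos _), abs_of_pos (pow_pos hlam n)]
          apply mul_le_mul_of_nonneg_right _ (pow_pos hlam n).le
          exact mul_le_mul (log_3half_le n) (Real.exp_le_one_iff.mpr (by linarith)) (Real.exp_pos _).le (by positivity)
      _ = 2 * (2 * lam) ^ n := by rw [mul_pow]; ring
  have hBshift : ∀ n, B (n + 1) = C n := by
    intro n
    have hne : ((n:ℝ) + 1) ≠ 0 := by positivity
    have hfne : ((Nat.factorial n : ℝ)) ≠ 0 := by positivity
    simp only [hB_def, hC_def, Nat.factorial_succ, Nat.add_sub_cancel]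
    push_cast
    rw [show ((n:ℝ) + 1 + 1/2) = (n:ℝ) + 3/2 by ring]
    field_simp
  have hsumB : Summable B := by
    have hfe : (fun n => B (n + 1)) = C := funext hBshift
    exact (summable_nat_add_iff 1).mp (hfe ▸ hsumC)
  have hB0 : B 0 = 0 := by simp [hB_def]
  have hg'eq : ∀ n, g' n lam = B n - g n lam := by
    intro n
    simp only [hg'_def, hg_def, hB_def]
    ring
  have e1 : ∑' n, g' n lam = (∑' n, B n) - (∑' n, g n lam) := by
    rw [← Summable.tsum_sub hsumB hsum0]
    exact tsum_congr hg'eq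
  have e2 : ∑' n, B n = ∑' n, C n := by
    rw [Summable.tsum_eq_zero_add hsumB, hB0, zero_add]
    exact tsum_congr hBshift
  have e3 : (∑' x : ℕ, Real.log (((x : ℝ) + 3 / 2) / ((x : ℝ) + 1 / 2)) * Real.exp (-lam) * lam ^ x / (Nat.factorial x : ℝ))
      = (∑' n, C n) - (∑' n, g n lam) := by
    rw [← Summable.tsum_sub hsumC hsum0]
    apply tsum_congr
    intro x
    have h1 : ((x:ℝ) + 3/2) ≠ 0 := by positivity
    have h2 : ((x:ℝ) + 1/2) ≠ 0 := by positivity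
    simp only [hC_def, hg_def]
    rw [Real.log_div h1 h2]
    ring
  rw [e3, e1, e2]
end

section
/- For every real λ > 0, Σ_{x=0}^∞ log((x+3/2)/(x+1/2))·e^{-λ}λ^x/x! − 1/λ > 0.09·e^{-λ} − e^{-λ}/λ. -/
open Real Finset

lemma key_lb {t : ℝ} (h0 : 0 ≤ t) (h1 : t < 1) :
    2*t + 2/3*t^3 + 2/5*t^5 ≤ Real.log (1+t) - Real.log (1-t) := by
  have habs : |t| < 1 := by rwa [abs_of_nonneg h0]
  have hs := Real.hasSum_log_sub_log_of_abs_lt_one habs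
  have := sum_le_hasSum (Finset.range 3)
    (fun k _ => by positivity) hs
  calc 2*t + 2/3*t^3 + 2/5*t^5
      = ∑ k ∈ Finset.range 3, (2:ℝ) * (1 / (2*(k:ℝ) + 1)) * t ^ (2*k+1) := by
        simp [Finset.sum_range_succ]; ring
    _ ≤ _ := this

lemma log3_gt : (1.09 : ℝ) < Real.log 3 := by
  have h := key_lb (t := 1/2) (by norm_num) (by norm_num)
  have h32 : Real.log (1 + 1/2) - Real.log (1 - 1/2) = Real.log 3 := by
    rw [← Real.log_div (by norm_num) (by norm_num)]
    norm_num
  rw [h32] at h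
  nlinarith

lemma log_term_ge (x : ℕ) :
    1 / ((x:ℝ) + 1) ≤ Real.log (((x:ℝ) + 3/2) / ((x:ℝ) + 1/2)) := by
  set t : ℝ := 1 / (2*(x:ℝ) + 2) with ht
  have hx0 : (0:ℝ) ≤ (x:ℝ) := x.cast_nonneg
  have ht0 : 0 < t := by positivity
  have ht1 : t < 1 := by
    rw [ht, div_lt_one (by positivity)]; linarith
  have h1 : (1 : ℝ) + t = ((x:ℝ) + 3/2) / ((x:ℝ) + 1) := by
    rw [ht]; field_simp; ring
  have h2 : (1 : ℝ) - t = ((x:ℝ) + 1/2) / ((x:ℝ) + 1) := by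
    rw [ht]; field_simp; ring
  have hlog : Real.log (1+t) - Real.log (1-t)
      = Real.log (((x:ℝ) + 3/2) / ((x:ℝ) + 1/2)) := by
    rw [h1, h2, Real.log_div (by positivity) (by positivity),
      Real.log_div (by positivity) (by positivity),
      Real.log_div (by positivity) (by positivity)]
    ring
  have hk := key_lb ht0.le ht1
  have h2t : 2 * t = 1 / ((x:ℝ) + 1) := by
    rw [ht]; field_simp
  nlinarith [pow_pos ht0 3, pow_pos ht0 5]

theorem stmt_14 (lam : ℝ) (hlam : 0 < lam) :
    (∑' x : ℕ, Real.log (((x : ℝ) + 3 / 2) / ((x : ℝ) + 1 / 2)) * Real.exp (-lam) * lam ^ x / (Nat.factorial x : ℝ))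
        - 1 / lam
      > 0.09 * Real.exp (-lam) - Real.exp (-lam) / lam := by
  set E := Real.exp (-lam) with hE
  have hE0 : 0 < E := Real.exp_pos _
  set f : ℕ → ℝ := fun x => Real.log (((x : ℝ) + 3/2) / ((x : ℝ) + 1/2)) * E * lam ^ x / (Nat.factorial x : ℝ) with hf
  set g : ℕ → ℝ := fun x => (1 / ((x:ℝ) + 1)) * E * lam ^ x / (Nat.factorial x : ℝ) with hg
  -- exp series
  have hser : Summable (fun n : ℕ => lam ^ n / (n.factorial : ℝ)) := Real.summable_pow_div_factorial lam
  have hexp : HasSum (fun n : ℕ => lam ^ n / (n.factorial : ℝ)) (Real.exp lam) := by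
    have : ∑' n : ℕ, lam ^ n / (n.factorial : ℝ) = Real.exp lam := by
      rw [Real.exp_eq_exp_ℝ, NormedSpace.exp_eq_tsum_div]
    exact this ▸ hser.hasSum
  -- sum of g
  have hshift : HasSum (fun n : ℕ => lam ^ (n+1) / ((n+1).factorial : ℝ)) (Real.exp lam - 1) :=
    (hasSum_nat_add_iff (f := fun n : ℕ => lam ^ n / (n.factorial : ℝ)) 1).mpr (by simpa using hexp)
  have hgsum : HasSum g ((1 - E) / lam) := by
    have h1 : HasSum (fun n : ℕ => (E/lam) * (lam ^ (n+1) / ((n+1).factorial : ℝ)))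
        ((E/lam) * (Real.exp lam - 1)) := hshift.mul_left _
    have heq : (fun n : ℕ => (E/lam) * (lam ^ (n+1) / ((n+1).factorial : ℝ))) = g := by
      funext n
      have hn1 : ((n+1).factorial : ℝ) = ((n:ℝ)+1) * (n.factorial : ℝ) := by
        rw [Nat.factorial_succ]; push_cast; ring
      rw [hg]
      rw [hn1]; field_simp
      ring
    have hval : (E/lam) * (Real.exp lam - 1) = (1 - E) / lam := by
      have : E * Real.exp lam = 1 := by
        rw [hE, ← Real.exp_add]; simp
      field_simp
      nlinarith
    rwa [heq, hval] at h1
  -- nonnegativity and bounds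
  have hlog_le : ∀ x : ℕ, Real.log (((x : ℝ) + 3/2) / ((x : ℝ) + 1/2)) ≤ Real.log 3 := by
    intro x
    have hx0 : (0:ℝ) ≤ (x:ℝ) := x.cast_nonneg
    apply Real.log_le_log (by positivity)
    rw [div_le_iff₀ (by positivity)]
    linarith
  have hlog_nonneg : ∀ x : ℕ, 0 ≤ Real.log (((x : ℝ) + 3/2) / ((x : ℝ) + 1/2)) := by
    intro x
    have := log_term_ge x
    have hx0 : (0:ℝ) ≤ (x:ℝ) := x.cast_nonneg
    have : (0:ℝ) < 1 / ((x:ℝ)+1) := by positivity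
    linarith [log_term_ge x]
  have hfsum : Summable f := by
    apply Summable.of_nonneg_of_le (fun x => by
      have := hlog_nonneg x
      have hx : (0:ℝ) < (x.factorial : ℝ) := by positivity
      positivity)
      (fun x => ?_) ((hser.mul_left (Real.log 3 * E)))
    have hx : (0:ℝ) < (x.factorial : ℝ) := by positivity
    have hc : (0:ℝ) ≤ E * lam ^ x / (x.factorial : ℝ) := by positivity
    calc f x = Real.log (((x : ℝ) + 3/2) / ((x : ℝ) + 1/2)) * (E * lam ^ x / (x.factorial : ℝ)) := by
          rw [hf]; ring
      _ ≤ Real.log 3 * (E * lam ^ x / (x.factorial : ℝ)) :=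
          mul_le_mul_of_nonneg_right (hlog_le x) hc
      _ = Real.log 3 * E * (lam ^ x / (x.factorial : ℝ)) := by ring
  -- termwise g ≤ f
  have hgle : ∀ x : ℕ, g x ≤ f x := by
    intro x
    have hx : (0:ℝ) < (x.factorial : ℝ) := by positivity
    have hc : (0:ℝ) ≤ E * lam ^ x / (x.factorial : ℝ) := by positivity
    calc g x = (1 / ((x:ℝ) + 1)) * (E * lam ^ x / (x.factorial : ℝ)) := by rw [hg]; ring
      _ ≤ Real.log (((x : ℝ) + 3/2) / ((x : ℝ) + 1/2)) * (E * lam ^ x / (x.factorial : ℝ)) :=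
          mul_le_mul_of_nonneg_right (log_term_ge x) hc
      _ = f x := by rw [hf]; ring
  -- tsum f - tsum g ≥ (f - g) 0
  have hsub : Summable (fun x => f x - g x) := hfsum.sub hgsum.summable
  have hge0 : f 0 - g 0 ≤ ∑' x, (f x - g x) :=
    Summable.le_tsum hsub 0 (fun i _ => sub_nonneg.mpr (hgle i))
  have htsub : ∑' x, (f x - g x) = (∑' x, f x) - ∑' x, g x :=
    Summable.tsum_sub hfsum hgsum.summable
  have hf0 : f 0 = Real.log 3 * E := by
    rw [hf]; norm_num
  have hg0 : g 0 = E := by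
    rw [hg]; norm_num
  have hgval : ∑' x, g x = (1 - E) / lam := hgsum.tsum_eq
  have hmain : (Real.log 3 - 1) * E + (1 - E)/lam ≤ ∑' x, f x := by
    rw [htsub, hf0, hg0, hgval] at hge0
    linarith [hge0]
  have hlog3 := log3_gt
  have key : 0.09 * E < (Real.log 3 - 1) * E := by nlinarith
  have h1lam : (1 - E)/lam - 1/lam = - (E / lam) := by
    field_simp
    ring
  have : ∑' x, f x ≥ (Real.log 3 - 1) * E + (1 - E)/lam := hmain
  calc (∑' x, f x) - 1/lam ≥ (Real.log 3 - 1) * E + ((1 - E)/lam - 1/lam) := by linarith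
    _ = (Real.log 3 - 1) * E - E/lam := by rw [h1lam]; ring
    _ > 0.09 * E - E/lam := by linarith
end

section
/- For every real λ > 0, Σ_{x=0}^∞ log((x+3/2)/(x+1/2))·e^{-λ}λ^x/x! − 1/λ < 0.06·e^{-λ} − e^{-λ}/λ + 0.26·λ^{-3}. -/
open Real Finset

set_option maxHeartbeats 1000000

open Real Finset
set_option maxHeartbeats 1000000

lemma ratio_log_bound (m : ℝ) (hm : 2 ≤ m) :
    Real.log ((m + 1/2)/(m - 1/2)) ≤ 1/m + 0.26/(m*(m+1)*(m+2)) := by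
  have hm0 : (0:ℝ) < m := by linarith
  set u : ℝ := 1/(2*m) with hu_def
  have hu0 : 0 < u := by positivity
  have hu4 : u ≤ 1/4 := by
    rw [hu_def]
    rw [div_le_div_iff₀ (by linarith) (by norm_num)]
    linarith
  have habs : |u| < 1 := by rw [abs_of_pos hu0]; linarith
  have habs' : |(-u)| < 1 := by rw [abs_neg]; exact habs
  have h1 := abs_log_sub_add_sum_range_le habs 10
  have h2 := abs_log_sub_add_sum_range_le habs' 10
  rw [abs_of_pos hu0] at h1
  rw [abs_neg, abs_of_pos hu0] at h2
  have hne : (1:ℝ) - u > 0 := by linarith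
  have hratio : (m + 1/2)/(m - 1/2) = (1+u)/(1-u) := by
    rw [hu_def]; field_simp
  rw [hratio, Real.log_div (by positivity) (by positivity)]
  -- from h1 : |S1 + log (1-u)| ≤ u^11/(1-u)
  -- from h2 : |S2 + log (1+u)| ≤ u^11/(1-u)   (since 1 - (-u) = 1 + u)
  have h2' : |(∑ i ∈ range 10, (-u) ^ (i + 1) / (i + 1)) + Real.log (1 + u)| ≤ u ^ 11 / (1 - u) := by
    have : (1:ℝ) - (-u) = 1 + u := by ring
    rwa [this] at h2
  have e1 : -Real.log (1-u) ≤ (∑ i ∈ range 10, u ^ (i + 1) / (i + 1)) + u ^ 11 / (1 - u) := by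
    have := abs_le.1 h1
    linarith [this.1, this.2]
  have e2 : Real.log (1+u) ≤ -(∑ i ∈ range 10, (-u) ^ (i + 1) / (i + 1)) + u ^ 11 / (1 - u) := by
    have := abs_le.1 h2'
    linarith [this.1, this.2]
  have hsum : (∑ i ∈ range 10, u ^ (i + 1) / (i + 1))
      - (∑ i ∈ range 10, (-u) ^ (i + 1) / (i + 1))
      = 2*(u + u^3/3 + u^5/5 + u^7/7 + u^9/9) := by
    simp [Finset.sum_range_succ]
    ring
  have hrem : u ^ 11 / (1 - u) ≤ (8/3) * u^11 := by
    rw [div_le_iff₀ hne]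
    nlinarith [pow_pos hu0 11]
  have key : 2*(u + u^3/3 + u^5/5 + u^7/7 + u^9/9) + 2*((8/3)*u^11)
      ≤ 1/m + 0.26/(m*(m+1)*(m+2)) := by
    rw [hu_def]
    rw [div_le_div_iff₀] at hu4
    · have h2m : 2*m ≥ 4 := by linarith
      field_simp
      ring_nf
      have hp : ∀ k : ℕ, 2 * m ^ k ≤ m ^ (k+1) := fun k => by
        rw [pow_succ, mul_comm (m^k) m]
        exact mul_le_mul_of_nonneg_right hm (pow_nonneg hm0.le k)
      have h27 : 2 * m ^ 27 ≤ m ^ 28 := hp 27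
      have h28 : 2 * m ^ 28 ≤ m ^ 29 := hp 28
      have h29 : 2 * m ^ 29 ≤ m ^ 30 := hp 29
      have h30 : 2 * m ^ 30 ≤ m ^ 31 := hp 30
      have h31 : 2 * m ^ 31 ≤ m ^ 32 := hp 31
      have h32 : 2 * m ^ 32 ≤ m ^ 33 := hp 32
      have h33 : 2 * m ^ 33 ≤ m ^ 34 := hp 33
      have h34 : 2 * m ^ 34 ≤ m ^ 35 := hp 34
      have h35 : 2 * m ^ 35 ≤ m ^ 36 := hp 35
      have h36 : 2 * m ^ 36 ≤ m ^ 37 := hp 36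
      linarith [h27, h28, h29, h30, h31, h32, h33, h34, h35, h36, pow_pos hm0 27, @id (2 * m ^ 0 ≤ m ^ 1) (hp 0), @id (2 * m ^ 1 ≤ m ^ 2) (hp 1), @id (2 * m ^ 2 ≤ m ^ 3) (hp 2), @id (2 * m ^ 3 ≤ m ^ 4) (hp 3), @id (2 * m ^ 4 ≤ m ^ 5) (hp 4), @id (2 * m ^ 5 ≤ m ^ 6) (hp 5), @id (2 * m ^ 6 ≤ m ^ 7) (hp 6), @id (2 * m ^ 7 ≤ m ^ 8) (hp 7), @id (2 * m ^ 8 ≤ m ^ 9) (hp 8), @id (2 * m ^ 9 ≤ m ^ 10) (hp 9), pow_pos hm0 9, hm0]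
    · positivity
    · norm_num
  calc Real.log (1+u) - Real.log (1-u)
      ≤ 2*(u + u^3/3 + u^5/5 + u^7/7 + u^9/9) + 2*(u ^ 11 / (1-u)) := by linarith
    _ ≤ 2*(u + u^3/3 + u^5/5 + u^7/7 + u^9/9) + 2*((8/3)*u^11) := by linarith
    _ ≤ 1/m + 0.26/(m*(m+1)*(m+2)) := key



lemma log_three_le : Real.log 3 ≤ 331/300 := by
  have h2 : Real.log 2 < 0.6931471808 := Real.log_two_lt_d9
  have habs2 : |(-1/2 : ℝ)| = 1/2 := by rw [abs_div]; norm_num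
  have habs : |(-1/2 : ℝ)| < 1 := by rw [habs2]; norm_num
  have h := (abs_le.1 (Real.abs_log_sub_add_sum_range_le habs 10)).2
  rw [habs2] at h
  have h15 : (1:ℝ) - (-1/2) = 3/2 := by norm_num
  rw [h15] at h
  have hs : Real.log (3/2) ≤ 0.407 := by
    norm_num [Finset.sum_range_succ] at h
    linarith
  have h3 : Real.log 3 = Real.log 2 + Real.log (3/2) := by
    rw [← Real.log_mul (by norm_num) (by norm_num)]; norm_num
  linarith

lemma exp_tsum (lam : ℝ) : ∑' n : ℕ, lam ^ n / (Nat.factorial n : ℝ) = Real.exp lam := by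
  rw [Real.exp_eq_exp_ℝ, NormedSpace.exp_eq_tsum_div]

lemma tail1 (lam : ℝ) : ∑' n : ℕ, lam ^ (n+1) / (Nat.factorial (n+1) : ℝ) = Real.exp lam - 1 := by
  have h := Summable.sum_add_tsum_nat_add (f := fun n : ℕ => lam ^ n / (Nat.factorial n : ℝ)) 1
    (Real.summable_pow_div_factorial lam)
  rw [exp_tsum] at h
  have hr : (∑ i ∈ Finset.range 1, lam^i/(Nat.factorial i : ℝ)) = 1 := by
    norm_num [Finset.sum_range_succ]
  rw [hr] at h
  linarith

lemma tail3 (lam : ℝ) : ∑' n : ℕ, lam ^ (n+3) / (Nat.factorial (n+3) : ℝ)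
    = Real.exp lam - (1 + lam + lam^2/2) := by
  have h := Summable.sum_add_tsum_nat_add (f := fun n : ℕ => lam ^ n / (Nat.factorial n : ℝ)) 3
    (Real.summable_pow_div_factorial lam)
  rw [exp_tsum] at h
  have hr : (∑ i ∈ Finset.range 3, lam^i/(Nat.factorial i : ℝ)) = 1 + lam + lam^2/2 := by
    norm_num [Finset.sum_range_succ, Nat.factorial]
  rw [hr] at h
  linarith

theorem stmt_15 (lam : ℝ) (hlam : 0 < lam) :
    (∑' x : ℕ, Real.log (((x : ℝ) + 3 / 2) / ((x : ℝ) + 1 / 2)) * Real.exp (-lam) * lam ^ x / (Nat.factorial x : ℝ))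
        - 1 / lam
      < 0.06 * Real.exp (-lam) - Real.exp (-lam) / lam + 0.26 * lam⁻¹ ^ 3 := by
  set E := Real.exp (-lam) with hE_def
  have hE : 0 < E := Real.exp_pos _
  set δ : ℝ := Real.log 3 - 1 - 13/300 with hδ_def
  set f : ℕ → ℝ := fun x => Real.log (((x : ℝ) + 3 / 2) / ((x : ℝ) + 1 / 2)) * E * lam ^ x / (Nat.factorial x : ℝ) with hf_def
  set g1 : ℕ → ℝ := fun x => E * lam ^ x / (Nat.factorial (x+1) : ℝ) with hg1_def
  set g2 : ℕ → ℝ := fun x => E * lam ^ x / (Nat.factorial (x+3) : ℝ) with hg2_def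
  set hh : ℕ → ℝ := fun x => if x = 0 then δ * E else 0 with hh_def
  have hfac_pos : ∀ x : ℕ, (0:ℝ) < (Nat.factorial x : ℝ) :=
    fun x => Nat.cast_pos.mpr (Nat.factorial_pos x)
  have hx12 : ∀ x : ℕ, (0:ℝ) < (x:ℝ) + 1/2 := fun x => by positivity
  have hx32 : ∀ x : ℕ, (0:ℝ) < (x:ℝ) + 3/2 := fun x => by positivity
  have hlog_nonneg : ∀ x : ℕ, 0 ≤ Real.log (((x : ℝ) + 3 / 2) / ((x : ℝ) + 1 / 2)) := by
    intro x
    apply Real.log_nonneg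
    rw [le_div_iff₀ (hx12 x)]
    linarith
  have hlog_le : ∀ x : ℕ, Real.log (((x : ℝ) + 3 / 2) / ((x : ℝ) + 1 / 2)) ≤ 2 := by
    intro x
    have h1 := Real.log_le_sub_one_of_pos (div_pos (hx32 x) (hx12 x))
    have h2 : ((x : ℝ) + 3 / 2) / ((x : ℝ) + 1 / 2) ≤ 3 := by
      rw [div_le_iff₀ (hx12 x)]
      have : (0:ℝ) ≤ (x:ℝ) := Nat.cast_nonneg x
      linarith
    linarith
  -- summability
  have hsum_base : Summable (fun n : ℕ => lam ^ n / (Nat.factorial n : ℝ)) :=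
    Real.summable_pow_div_factorial lam
  have hsum_p : Summable (fun n : ℕ => E * (lam ^ n / (Nat.factorial n : ℝ))) :=
    hsum_base.mul_left E
  have hp_nonneg : ∀ n : ℕ, (0:ℝ) ≤ E * (lam ^ n / (Nat.factorial n : ℝ)) := by
    intro n
    have : (0:ℝ) ≤ lam ^ n := le_of_lt (pow_pos hlam n)
    positivity
  have hsum_f : Summable f := by
    apply Summable.of_nonneg_of_le (fun n => ?_) (fun n => ?_) (hsum_p.mul_left 2)
    · have := hlog_nonneg n
      have := hp_nonneg n
      have h : f n = Real.log (((n : ℝ) + 3 / 2) / ((n : ℝ) + 1 / 2)) * (E * (lam ^ n / (Nat.factorial n : ℝ))) := by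
        rw [hf_def]; ring
      rw [h]
      positivity
    · have h : f n = Real.log (((n : ℝ) + 3 / 2) / ((n : ℝ) + 1 / 2)) * (E * (lam ^ n / (Nat.factorial n : ℝ))) := by
        rw [hf_def]; ring
      rw [h]
      exact mul_le_mul_of_nonneg_right (hlog_le n) (hp_nonneg n)
  have hg1_le : ∀ n : ℕ, g1 n ≤ E * (lam ^ n / (Nat.factorial n : ℝ)) := by
    intro n
    show E * lam ^ n / (Nat.factorial (n+1) : ℝ) ≤ _
    rw [mul_div_assoc]
    apply mul_le_mul_of_nonneg_left _ hE.le
    apply div_le_div_of_nonneg_left (le_of_lt (pow_pos hlam n)) (hfac_pos n)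
    exact_mod_cast Nat.factorial_le (Nat.le_succ n)
  have hg2_le : ∀ n : ℕ, g2 n ≤ E * (lam ^ n / (Nat.factorial n : ℝ)) := by
    intro n
    show E * lam ^ n / (Nat.factorial (n+3) : ℝ) ≤ _
    rw [mul_div_assoc]
    apply mul_le_mul_of_nonneg_left _ hE.le
    apply div_le_div_of_nonneg_left (le_of_lt (pow_pos hlam n)) (hfac_pos n)
    exact_mod_cast Nat.factorial_le (by omega : n ≤ n + 3)
  have hg1_nonneg : ∀ n : ℕ, 0 ≤ g1 n := by
    intro n; rw [hg1_def]
    have := pow_pos hlam n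
    positivity
  have hg2_nonneg : ∀ n : ℕ, 0 ≤ g2 n := by
    intro n; rw [hg2_def]
    have := pow_pos hlam n
    positivity
  have hsum_g1 : Summable g1 := Summable.of_nonneg_of_le hg1_nonneg hg1_le hsum_p
  have hsum_g2 : Summable g2 := Summable.of_nonneg_of_le hg2_nonneg hg2_le hsum_p
  have hsum_hh : Summable hh := by
    rw [hh_def]
    exact (hasSum_ite_eq 0 (δ * E)).summable
  -- pointwise bound
  have hpt : ∀ x : ℕ, f x ≤ g1 x + 0.26 * g2 x + hh x := by
    intro x
    match x with
    | 0 =>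
      rw [hf_def, hg1_def, hg2_def, hh_def]
      simp only [Nat.cast_zero, pow_zero, Nat.factorial]
      norm_num
      have e : Real.log 3 * E = E + 13/50 * (E/6) + δ * E := by
        rw [hδ_def]; ring
      linarith [e.le]
    | (n+1) =>
      have hm : (2:ℝ) ≤ ((n+1 : ℕ) : ℝ) + 1 := by
        push_cast; linarith [Nat.cast_nonneg (α := ℝ) n]
      have hb := ratio_log_bound (((n+1 : ℕ) : ℝ) + 1) hm
      have e1 : ((n+1 : ℕ) : ℝ) + 1 + 1/2 = ((n+1 : ℕ) : ℝ) + 3/2 := by ring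
      have e2 : ((n+1 : ℕ) : ℝ) + 1 - 1/2 = ((n+1 : ℕ) : ℝ) + 1/2 := by ring
      rw [e1, e2] at hb
      set x : ℕ := n + 1 with hx_def
      have hxp : (0:ℝ) ≤ E * (lam ^ x / (Nat.factorial x : ℝ)) := hp_nonneg x
      have hmul := mul_le_mul_of_nonneg_right hb hxp
      have hlhs : Real.log (((x : ℝ) + 3 / 2) / ((x : ℝ) + 1 / 2)) * (E * (lam ^ x / (Nat.factorial x : ℝ))) = f x := by
        rw [hf_def]; ring
      have hf1 : (Nat.factorial (x+1) : ℝ) = ((x:ℝ)+1) * (Nat.factorial x : ℝ) := by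
        rw [Nat.factorial_succ]; push_cast; ring
      have hf3 : (Nat.factorial (x+3) : ℝ) = ((x:ℝ)+3) * (((x:ℝ)+2) * (((x:ℝ)+1) * (Nat.factorial x : ℝ))) := by
        show (Nat.factorial (x+2+1) : ℝ) = _
        rw [Nat.factorial_succ, Nat.factorial_succ, Nat.factorial_succ]
        push_cast; ring
      have hrhs : (1/((x:ℝ)+1) + 0.26/(((x:ℝ)+1)*(((x:ℝ)+1)+1)*(((x:ℝ)+1)+2))) * (E * (lam ^ x / (Nat.factorial x : ℝ)))
          = g1 x + 0.26 * g2 x := by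
        rw [hg1_def, hg2_def]
        simp only
        rw [hf1, hf3]
        have h1 : ((x:ℝ)+1) ≠ 0 := by positivity
        have h2 : ((x:ℝ)+2) ≠ 0 := by positivity
        have h3 : ((x:ℝ)+3) ≠ 0 := by positivity
        have h4 : (Nat.factorial x : ℝ) ≠ 0 := ne_of_gt (hfac_pos x)
        field_simp
        ring
      rw [hlhs, hrhs] at hmul
      have : hh x = 0 := by rw [hh_def]; simp [hx_def]
      rw [this, add_zero]
      exact hmul
  -- sum the bound
  have hsum_rhs : Summable (fun x => g1 x + 0.26 * g2 x + hh x) :=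
    ((hsum_g1.add (hsum_g2.mul_left 0.26)).add hsum_hh)
  have htsum_le : (∑' x, f x) ≤ ∑' x, (g1 x + 0.26 * g2 x + hh x) :=
    Summable.tsum_le_tsum hpt hsum_f hsum_rhs
  have htsum_split : (∑' x, (g1 x + 0.26 * g2 x + hh x))
      = (∑' x, g1 x) + 0.26 * (∑' x, g2 x) + δ * E := by
    rw [Summable.tsum_add (hsum_g1.add (hsum_g2.mul_left 0.26)) hsum_hh,
        Summable.tsum_add hsum_g1 (hsum_g2.mul_left 0.26), tsum_mul_left]
    congr 1
    rw [hh_def]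
    exact tsum_ite_eq 0 (fun _ => δ * E)
  -- compute the two sums
  have hlam_ne : lam ≠ 0 := ne_of_gt hlam
  have hEt : E * Real.exp lam = 1 := by
    rw [hE_def, ← Real.exp_add]; norm_num
  have hg1_eq : g1 = fun n : ℕ => (E/lam) * (lam ^ (n+1) / (Nat.factorial (n+1) : ℝ)) := by
    funext n
    rw [hg1_def]
    simp only
    rw [pow_succ]
    field_simp
  have htsum_g1 : (∑' x, g1 x) = (E/lam) * (Real.exp lam - 1) := by
    rw [hg1_eq, tsum_mul_left, tail1]
  have hg2_eq : g2 = fun n : ℕ => (E/lam^3) * (lam ^ (n+3) / (Nat.factorial (n+3) : ℝ)) := by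
    funext n
    rw [hg2_def]
    simp only
    have : lam ^ (n+3) = lam ^ n * lam ^ 3 := by ring
    rw [this]
    field_simp
  have htsum_g2 : (∑' x, g2 x) = (E/lam^3) * (Real.exp lam - (1 + lam + lam^2/2)) := by
    rw [hg2_eq, tsum_mul_left, tail3]
  -- final arithmetic
  have hX1 : (E/lam) * (Real.exp lam - 1) = (1 - E)/lam := by
    rw [div_mul_eq_mul_div]
    congr 1
    linear_combination hEt
  have hX2 : (E/lam^3) * (Real.exp lam - (1 + lam + lam^2/2))
      = (1 - E * (1 + lam + lam^2/2))/lam^3 := by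
    rw [div_mul_eq_mul_div]
    congr 1
    linear_combination hEt
  have hδ06 : δ ≤ 0.06 := by
    rw [hδ_def]
    have := log_three_le
    norm_num
    linarith
  have hfin : (1 - E)/lam + 0.26 * ((1 - E * (1 + lam + lam^2/2))/lam^3) + δ * E - 1/lam
      < 0.06 * E - E/lam + 0.26 * lam⁻¹ ^ 3 := by
    have heq : 0.06 * E - E/lam + 0.26 * lam⁻¹ ^ 3
        - ((1 - E)/lam + 0.26 * ((1 - E * (1 + lam + lam^2/2))/lam^3) + δ * E - 1/lam)
        = (0.06 - δ) * E + 0.26 * E * (1 + lam + lam^2/2) / lam^3 := by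
      field_simp
      ring
    have hpos : 0 < 0.26 * E * (1 + lam + lam^2/2) / lam^3 := by positivity
    have hnn : 0 ≤ (0.06 - δ) * E := mul_nonneg (by linarith) hE.le
    linarith
  calc (∑' x, f x) - 1/lam
      ≤ (∑' x, g1 x) + 0.26 * (∑' x, g2 x) + δ * E - 1/lam := by linarith [htsum_le, htsum_split.le, htsum_split.ge]
    _ = (1 - E)/lam + 0.26 * ((1 - E * (1 + lam + lam^2/2))/lam^3) + δ * E - 1/lam := by
        rw [htsum_g1, htsum_g2, hX1, hX2]
    _ < 0.06 * E - E/lam + 0.26 * lam⁻¹ ^ 3 := hfin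
end

section
/- For every real t ≥ 2, log((t+3/2)/(t+1/2)) < 1/(t+1) + 0.26/((t+1)(t+2)(t+3)). -/
/-!
Since `log x < y ↔ x < exp y`, it suffices to show that the ratio lies below the cubic Taylor
polynomial `1 + y + y²/2 + y³/6 ≤ exp y`. Writing `t = u + 2` and clearing denominators, the
difference becomes a polynomial in `u` whose coefficients are all positive.
-/

open Real Finset Nat

theorem Real.log_lt_of_lt_sum_pow_div_factorial {x y : ℝ} (hx : 0 < x) (hy : 0 ≤ y) (n : ℕ)
    (h : x < ∑ i ∈ range n, y ^ i / i !) : log x < y :=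
  (log_lt_iff_lt_exp hx).2 (h.trans_le (sum_le_exp_of_nonneg hy n))

theorem stmt_17 (t : ℝ) (ht : 2 ≤ t) :
    Real.log ((t + 3 / 2) / (t + 1 / 2))
      < 1 / (t + 1) + 0.26 / ((t + 1) * (t + 2) * (t + 3)) := by
  obtain ⟨u, hu, rfl⟩ : ∃ u, 0 ≤ u ∧ t = u + 2 := ⟨t - 2, by linarith, by ring⟩
  apply log_lt_of_lt_sum_pow_div_factorial (by positivity) (by positivity) 4
  simp only [sum_range_succ, sum_range_zero, factorial]
  rw [← sub_pos]
  field_simp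
  ring_nf
  positivity
end
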